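/- arXiv:1206.0319 — 11 statements merged into one kernel-verified Lean document; each statement's English description precedes it below -/
import Mathlib

section
/- (Putinar's Positivstellensatz.) Let h = (h_1,…,h_{m1}) and g = (g_1,…,g_{m2}) be real polynomials in x = (x_1,…,x_n), and let K = {x ∈ ℝⁿ : h_i(x) = 0 (i ≤ m1), g_j(x) ≥ 0 (j ≤ m2)}. Suppose ⟨h⟩ + Q(g) is archimedean. If p ∈ ℝ[x] satisfies p(x) > 0 for all x ∈ K, then p ∈ ⟨h⟩ + Q(g). -/
open MvPolynomial

noncomputable section

/-- A polynomial is a sum of squares (SOS). -/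
def IsSOS {n : ℕ} (p : MvPolynomial (Fin n) ℝ) : Prop :=
  ∃ (k : ℕ) (q : Fin k → MvPolynomial (Fin n) ℝ), p = ∑ i, q i ^ 2

/-- The quadratic module `Q(g)` generated by `g` (with `g₀ = 1`). -/
def QM {n m2 : ℕ} (g : Fin m2 → MvPolynomial (Fin n) ℝ) :
    Set (MvPolynomial (Fin n) ℝ) :=
  { p | ∃ (σ0 : MvPolynomial (Fin n) ℝ) (σ : Fin m2 → MvPolynomial (Fin n) ℝ),
      IsSOS σ0 ∧ (∀ j, IsSOS (σ j)) ∧ p = σ0 + ∑ j, σ j * g j }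

/-- The set `⟨h⟩ + Q(g)`. -/
def idealPlusQM {n m1 m2 : ℕ} (h : Fin m1 → MvPolynomial (Fin n) ℝ)
    (g : Fin m2 → MvPolynomial (Fin n) ℝ) : Set (MvPolynomial (Fin n) ℝ) :=
  { p | ∃ a ∈ Ideal.span (Set.range h), ∃ b ∈ QM g, p = a + b }

/-- `⟨h⟩ + Q(g)` is archimedean. -/
def ArchimedeanCond {n m1 m2 : ℕ} (h : Fin m1 → MvPolynomial (Fin n) ℝ)
    (g : Fin m2 → MvPolynomial (Fin n) ℝ) : Prop :=
  ∃ R : ℝ, 0 < R ∧ (C R - ∑ i : Fin n, X i ^ 2) ∈ idealPlusQM h g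

/-! Let `M = ⟨h⟩ + Q(g)`. The theorem is an instance of Jacobi's representation theorem for an
archimedean quadratic module `M` in a commutative `ℝ`-algebra `A`: if `φ r > 0` for every
`ℝ`-algebra map `φ : A → ℝ` that is nonnegative on `M`, then `r ∈ M`.

If no sum of squares `σ` has `σ r - 1 ∈ M`, then `M - ΣA² r` does not contain `-1`. A maximal
such quadratic module `Q` above it is archimedean and satisfies `Q ∪ -Q = A`, so every `f` has a
standard part: the unique real `c` with `c - ε ≤ f ≤ c + ε` modulo `Q` for all `ε > 0`. Taking
standard parts is an `ℝ`-algebra map, nonnegative on `M` and nonpositive at `r`.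

Otherwise `σ r - 1 ∈ M`. After rescaling, `θ ≤ s ≤ 1` for `s = σ / μ`, and the geometric sum
`G = ∑_{i < 2^k} (1 - s)^i` inverts `s` up to the error `(1 - s)^(2^k) ≤ (1 - θ)^(2^k)`. Expanding
`r = (s G)² r + (1 - (s G)²) r` puts `r + ε` in `M` for every `ε > 0`, and running this for
`r - 1 / (2μ)` in place of `r` gives `r ∈ M`.

For polynomials, an `ℝ`-algebra map `φ` is evaluation at `x = (φ X_i)_i`, and `x ∈ K` when `φ` is
nonnegative on `M`. -/

section QuadraticModule

variable {A : Type*} [CommRing A]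

structure IsQuadraticModule (M : Set A) : Prop where
  add_mem {a b : A} : a ∈ M → b ∈ M → a + b ∈ M
  sq_mul_mem (f : A) {a : A} : a ∈ M → f ^ 2 * a ∈ M
  one_mem : (1 : A) ∈ M

def adjoinSumSqMul (M : Set A) (f : A) : Set A :=
  {x | ∃ m ∈ M, ∃ σ, IsSumSq σ ∧ x = m + σ * f}

theorem subset_adjoinSumSqMul (M : Set A) (f : A) : M ⊆ adjoinSumSqMul M f :=
  fun m hm => ⟨m, hm, 0, .zero, by simp⟩

namespace IsQuadraticModule

variable {M : Set A}

theorem zero_mem (hM : IsQuadraticModule M) : (0 : A) ∈ M := by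
  simpa using hM.sq_mul_mem 0 hM.one_mem

theorem sq_mem (hM : IsQuadraticModule M) (f : A) : f ^ 2 ∈ M := by
  simpa using hM.sq_mul_mem f hM.one_mem

theorem isSumSq_mul_mem (hM : IsQuadraticModule M) {σ a : A} (hσ : IsSumSq σ) (ha : a ∈ M) :
    σ * a ∈ M := by
  induction hσ with
  | zero => simpa using hM.zero_mem
  | sq_add b _ ih => rw [add_mul, ← pow_two]; exact hM.add_mem (hM.sq_mul_mem b ha) ih

theorem isSumSq_mem (hM : IsQuadraticModule M) {σ : A} (hσ : IsSumSq σ) : σ ∈ M := by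
  simpa using hM.isSumSq_mul_mem hσ hM.one_mem

theorem pow_two_pow_mem (hM : IsQuadraticModule M) {u : A} (hu : u ∈ M) (k : ℕ) :
    u ^ 2 ^ k ∈ M := by
  cases k with
  | zero => simpa using hu
  | succ k => rw [pow_succ, pow_mul]; exact hM.sq_mem _

theorem mem_adjoinSumSqMul_self (hM : IsQuadraticModule M) (f : A) : f ∈ adjoinSumSqMul M f :=
  ⟨0, hM.zero_mem, 1, .one, by simp⟩

protected theorem adjoinSumSqMul (hM : IsQuadraticModule M) (f : A) :
    IsQuadraticModule (adjoinSumSqMul M f) where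
  add_mem := by
    rintro _ _ ⟨m₁, hm₁, σ₁, hσ₁, rfl⟩ ⟨m₂, hm₂, σ₂, hσ₂, rfl⟩
    exact ⟨m₁ + m₂, hM.add_mem hm₁ hm₂, σ₁ + σ₂, hσ₁.add hσ₂, by ring⟩
  sq_mul_mem := by
    rintro g _ ⟨m, hm, σ, hσ, rfl⟩
    exact ⟨g ^ 2 * m, hM.sq_mul_mem g hm, g ^ 2 * σ, (IsSquare.sq g).isSumSq.mul hσ, by ring⟩
  one_mem := subset_adjoinSumSqMul M f hM.one_mem

protected theorem ideal_add (hM : IsQuadraticModule M) (I : Ideal A) :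
    IsQuadraticModule {p | ∃ a ∈ I, ∃ b ∈ M, p = a + b} where
  add_mem := by
    rintro _ _ ⟨a₁, ha₁, b₁, hb₁, rfl⟩ ⟨a₂, ha₂, b₂, hb₂, rfl⟩
    exact ⟨a₁ + a₂, I.add_mem ha₁ ha₂, b₁ + b₂, hM.add_mem hb₁ hb₂, by ring⟩
  sq_mul_mem := by
    rintro f _ ⟨a, ha, b, hb, rfl⟩
    exact ⟨f ^ 2 * a, I.mul_mem_left _ ha, f ^ 2 * b, hM.sq_mul_mem f hb, by ring⟩
  one_mem := ⟨0, I.zero_mem, 1, hM.one_mem, by simp⟩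

theorem exists_maximal (hM : IsQuadraticModule M) (hM1 : (-1 : A) ∉ M) :
    ∃ Q, M ⊆ Q ∧ Maximal (fun Q : Set A => IsQuadraticModule Q ∧ (-1 : A) ∉ Q) Q := by
  refine zorn_subset_nonempty _ (fun c hc hchain ⟨Q₀, hQ₀⟩ => ?_) M ⟨hM, hM1⟩
  have directed := hchain.directedOn
  refine ⟨⋃₀ c, ⟨⟨?_, ?_, ?_⟩, ?_⟩, fun Q hQ => Set.subset_sUnion_of_mem hQ⟩
  · rintro a b ⟨Q₁, hQ₁, ha⟩ ⟨Q₂, hQ₂, hb⟩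
    obtain ⟨Q, hQ, h₁, h₂⟩ := directed Q₁ hQ₁ Q₂ hQ₂
    exact ⟨Q, hQ, (hc hQ).1.add_mem (h₁ ha) (h₂ hb)⟩
  · rintro f a ⟨Q, hQ, ha⟩
    exact ⟨Q, hQ, (hc hQ).1.sq_mul_mem f ha⟩
  · exact ⟨Q₀, hQ₀, (hc hQ₀).1.one_mem⟩
  · rintro ⟨Q, hQ, h⟩
    exact (hc hQ).2 h

end IsQuadraticModule

end QuadraticModule

section RealAlgebra

variable {A : Type*} [CommRing A] [Algebra ℝ A] {M : Set A}

namespace IsQuadraticModule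

theorem smul_mem (hM : IsQuadraticModule M) {c : ℝ} (hc : 0 ≤ c) {a : A} (ha : a ∈ M) :
    c • a ∈ M := by
  rw [← Real.sq_sqrt hc, Algebra.smul_def, map_pow]
  exact hM.sq_mul_mem _ ha

theorem mem_of_smul_mem (hM : IsQuadraticModule M) {c : ℝ} (hc : 0 < c) {a : A}
    (h : c • a ∈ M) : a ∈ M := by
  simpa [smul_smul, inv_mul_cancel₀ hc.ne'] using hM.smul_mem (inv_nonneg.2 hc.le) h

theorem algebraMap_mem (hM : IsQuadraticModule M) {c : ℝ} (hc : 0 ≤ c) :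
    algebraMap ℝ A c ∈ M := by
  simpa [Algebra.smul_def] using hM.smul_mem hc hM.one_mem

theorem add_algebraMap_mem (hM : IsQuadraticModule M) {a : A} (ha : a ∈ M) {c : ℝ}
    (hc : 0 ≤ c) : a + algebraMap ℝ A c ∈ M :=
  hM.add_mem ha (hM.algebraMap_mem hc)

theorem neg_one_mem_of_algebraMap_mem (hM : IsQuadraticModule M) {c : ℝ} (hc : c < 0)
    (h : algebraMap ℝ A c ∈ M) : (-1 : A) ∈ M := by
  have := hM.smul_mem (c := -c⁻¹) (by simpa using hc.le) h
  rwa [Algebra.smul_def, ← map_mul, neg_mul, inv_mul_cancel₀ hc.ne, map_neg, map_one] at this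

end IsQuadraticModule

def IsBoundedBy (M : Set A) (N : ℝ) (f : A) : Prop :=
  algebraMap ℝ A N - f ∈ M ∧ algebraMap ℝ A N + f ∈ M

namespace IsBoundedBy

variable {N L : ℝ} {f g : A}

theorem neg (hf : IsBoundedBy M N f) : IsBoundedBy M N (-f) := by
  rw [IsBoundedBy, sub_neg_eq_add, ← sub_eq_add_neg]
  exact hf.symm

theorem mono (hM : IsQuadraticModule M) (hf : IsBoundedBy M N f) (hNL : N ≤ L) :
    IsBoundedBy M L f := by
  have h (a : A) : algebraMap ℝ A N + a ∈ M → algebraMap ℝ A L + a ∈ M := fun ha => by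
    convert hM.add_algebraMap_mem ha (sub_nonneg.2 hNL) using 1
    rw [map_sub]; ring
  exact ⟨by simpa only [← sub_eq_add_neg] using h _ hf.neg.2, h _ hf.2⟩

theorem add (hM : IsQuadraticModule M) (hf : IsBoundedBy M N f) (hg : IsBoundedBy M L g) :
    IsBoundedBy M (N + L) (f + g) := by
  constructor
  · convert hM.add_mem hf.1 hg.1 using 1; rw [map_add]; ring
  · convert hM.add_mem hf.2 hg.2 using 1; rw [map_add]; ring

theorem smul_of_nonneg (hM : IsQuadraticModule M) (hf : IsBoundedBy M N f) {c : ℝ}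
    (hc : 0 ≤ c) : IsBoundedBy M (c * N) (c • f) := by
  constructor
  · convert hM.smul_mem hc hf.1 using 1; simp only [Algebra.smul_def, map_mul]; ring
  · convert hM.smul_mem hc hf.2 using 1; simp only [Algebra.smul_def, map_mul]; ring

theorem smul (hM : IsQuadraticModule M) (hf : IsBoundedBy M N f) (c : ℝ) :
    IsBoundedBy M (|c| * N) (c • f) := by
  rcases le_or_gt 0 c with hc | hc
  · simpa [abs_of_nonneg hc] using hf.smul_of_nonneg hM hc
  · simpa [abs_of_neg hc] using hf.neg.smul_of_nonneg hM (neg_nonneg.2 hc.le)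

theorem sq_sub_sq_mem (hM : IsQuadraticModule M) (hf : IsBoundedBy M N f) (hN : 0 < N) :
    algebraMap ℝ A (N ^ 2) - f ^ 2 ∈ M := by
  -- `(N + f)² (N - f) + (N - f)² (N + f) = 2 N (N² - f²)`
  refine hM.mem_of_smul_mem (mul_pos two_pos hN) ?_
  convert hM.add_mem (hM.sq_mul_mem (algebraMap ℝ A N + f) hf.1)
    (hM.sq_mul_mem (algebraMap ℝ A N - f) hf.2) using 1
  simp only [Algebra.smul_def, map_mul, map_pow, map_ofNat]
  ring

theorem mul (hM : IsQuadraticModule M) (hf : IsBoundedBy M N f) (hg : IsBoundedBy M N g)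
    (hN : 0 < N) : IsBoundedBy M (N ^ 2) (f * g) := by
  -- polarization: `4 f g = (f + g)² - (f - g)²`
  have key {g : A} (hg : IsBoundedBy M N g) : algebraMap ℝ A (N ^ 2) - f * g ∈ M := by
    refine hM.mem_of_smul_mem four_pos ?_
    convert hM.add_mem ((hf.add hM hg).sq_sub_sq_mem hM (by positivity)) (hM.sq_mem (f - g))
      using 1
    simp only [Algebra.smul_def, map_add, map_pow, map_ofNat]
    ring
  exact ⟨key hg, by simpa using key hg.neg⟩

end IsBoundedBy

theorem isBoundedBy_algebraMap (hM : IsQuadraticModule M) {c N : ℝ} (h : |c| ≤ N) :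
    IsBoundedBy M N (algebraMap ℝ A c) := by
  constructor
  · rw [← map_sub]; exact hM.algebraMap_mem (by linarith [le_abs_self c])
  · rw [← map_add]; exact hM.algebraMap_mem (by linarith [neg_abs_le c])

theorem isBoundedBy_of_algebraMap_sub_sq_mem (hM : IsQuadraticModule M) {R : ℝ} {f : A}
    (h : algebraMap ℝ A R - f ^ 2 ∈ M) : IsBoundedBy M ((R + 1) / 2) f := by
  -- `(R + 1) / 2 ∓ f = ((R - f²) + (f ∓ 1)²) / 2`
  constructor <;> refine hM.mem_of_smul_mem two_pos ?_
  · convert hM.add_mem h (hM.sq_mem (f - 1)) using 1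
    rw [Algebra.smul_def, mul_sub, ← map_mul, mul_div_cancel₀ _ two_ne_zero, map_add, map_one,
      map_ofNat]
    ring
  · convert hM.add_mem h (hM.sq_mem (f + 1)) using 1
    rw [Algebra.smul_def, mul_add, ← map_mul, mul_div_cancel₀ _ two_ne_zero, map_add, map_one,
      map_ofNat]
    ring

def IsArchimedean (M : Set A) : Prop :=
  ∀ f : A, ∃ N : ℝ, IsBoundedBy M N f

namespace IsArchimedean

theorem mono {M' : Set A} (hM : IsArchimedean M) (hMM' : M ⊆ M') : IsArchimedean M' :=
  fun f => (hM f).imp fun _ hf => ⟨hMM' hf.1, hMM' hf.2⟩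

theorem exists_one_le (hM : IsQuadraticModule M) (harch : IsArchimedean M) (f : A) :
    ∃ N ≥ 1, IsBoundedBy M N f := by
  obtain ⟨N, hN⟩ := harch f
  exact ⟨max N 1, le_max_right N 1, hN.mono hM (le_max_left N 1)⟩

end IsArchimedean

theorem isArchimedean_of_adjoin_eq_top (hM : IsQuadraticModule M) {s : Set A}
    (hs : Algebra.adjoin ℝ s = ⊤) (hbdd : ∀ a ∈ s, ∃ N, IsBoundedBy M N a) :
    IsArchimedean M := by
  intro f
  have hf : f ∈ Algebra.adjoin ℝ s := hs ▸ Algebra.mem_top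
  induction hf using Algebra.adjoin_induction with
  | mem a ha => exact hbdd a ha
  | algebraMap c => exact ⟨|c|, isBoundedBy_algebraMap hM le_rfl⟩
  | add a b _ _ ha hb =>
    obtain ⟨N, hN⟩ := ha
    obtain ⟨L, hL⟩ := hb
    exact ⟨N + L, hN.add hM hL⟩
  | mul a b _ _ ha hb =>
    obtain ⟨N, hN⟩ := ha
    obtain ⟨L, hL⟩ := hb
    have hpos : 0 < |N| + |L| + 1 := by positivity
    exact ⟨_, (hN.mono hM (by linarith [le_abs_self N, abs_nonneg L])).mul hM
      (hL.mono hM (by linarith [le_abs_self L, abs_nonneg N])) hpos⟩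

end RealAlgebra

section Character

variable {A : Type*} [CommRing A] [Algebra ℝ A] {Q : Set A}

theorem IsQuadraticModule.mem_or_neg_mem_of_maximal
    (hQ : Maximal (fun Q : Set A => IsQuadraticModule Q ∧ (-1 : A) ∉ Q) Q)
    (harch : IsArchimedean Q) (f : A) : f ∈ Q ∨ -f ∈ Q := by
  obtain ⟨⟨hQ, hQ1⟩, hmax⟩ := hQ
  have neg_one_mem {a : A} (ha : a ∉ Q) : (-1 : A) ∈ adjoinSumSqMul Q a := by
    by_contra h
    exact ha (hmax ⟨hQ.adjoinSumSqMul a, h⟩ (subset_adjoinSumSqMul Q a)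
      (hQ.mem_adjoinSumSqMul_self a))
  by_contra! hf
  obtain ⟨m₁, hm₁, σ₁, hσ₁, h₁⟩ := neg_one_mem hf.1
  obtain ⟨m₂, hm₂, σ₂, hσ₂, h₂⟩ := neg_one_mem hf.2
  have hnegσ₂ : -σ₂ ∈ Q := by
    convert hQ.add_mem (hQ.add_mem (hQ.isSumSq_mul_mem hσ₂ hm₁) (hQ.isSumSq_mul_mem hσ₁ hm₂))
      (hQ.isSumSq_mem hσ₁) using 1
    linear_combination σ₂ * h₁ + σ₁ * h₂
  obtain ⟨N, hN, hNf⟩ := harch.exists_one_le hQ f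
  -- `-1 = (σ₂ f - 1) + σ₂ (N - f) + N (-σ₂)`
  apply hQ1
  convert hQ.add_mem (hQ.add_mem hm₂ (hQ.isSumSq_mul_mem hσ₂ hNf.1))
    (hQ.smul_mem (zero_le_one.trans hN) hnegσ₂) using 1
  rw [Algebra.smul_def]
  linear_combination h₂

theorem IsQuadraticModule.algebraMap_notMem (hQ : IsQuadraticModule Q) (hQ1 : (-1 : A) ∉ Q)
    {c : ℝ} (hc : c < 0) : algebraMap ℝ A c ∉ Q :=
  fun h => hQ1 (hQ.neg_one_mem_of_algebraMap_mem hc h)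

theorem abs_le_of_isBoundedBy_algebraMap (hQ : IsQuadraticModule Q) (hQ1 : (-1 : A) ∉ Q)
    {N c : ℝ} (h : IsBoundedBy Q N (algebraMap ℝ A c)) : |c| ≤ N := by
  obtain ⟨h₁, h₂⟩ := h
  rw [← map_sub] at h₁
  rw [← map_add] at h₂
  rw [abs_le]
  constructor <;> by_contra! hlt
  · exact hQ.algebraMap_notMem hQ1 (by linarith) h₂
  · exact hQ.algebraMap_notMem hQ1 (by linarith) h₁

def IsStandardPart (Q : Set A) (f : A) (c : ℝ) : Prop :=
  ∀ ε > 0, IsBoundedBy Q ε (f - algebraMap ℝ A c)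

theorem isStandardPart_algebraMap (hQ : IsQuadraticModule Q) (c : ℝ) :
    IsStandardPart Q (algebraMap ℝ A c) c := fun ε hε => by
  simpa using isBoundedBy_algebraMap hQ (c := 0) (abs_zero.trans_le hε.le)

namespace IsStandardPart

variable {f g : A} {a b : ℝ}

theorem unique (hQ : IsQuadraticModule Q) (hQ1 : (-1 : A) ∉ Q) (ha : IsStandardPart Q f a)
    (hb : IsStandardPart Q f b) : a = b := by
  refine eq_of_forall_dist_le fun ε hε => ?_
  have h := (hb (ε / 2) (half_pos hε)).add hQ (ha (ε / 2) (half_pos hε)).neg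
  rw [add_halves] at h
  refine abs_le_of_isBoundedBy_algebraMap hQ hQ1 ?_
  convert h using 2
  rw [map_sub]
  ring

theorem nonneg (hQ : IsQuadraticModule Q) (hQ1 : (-1 : A) ∉ Q) (hf : IsStandardPart Q f a)
    (hfQ : f ∈ Q) : 0 ≤ a := by
  refine le_of_forall_pos_le_add fun ε hε => ?_
  by_contra! hlt
  refine hQ.algebraMap_notMem hQ1 hlt ?_
  convert hQ.add_mem (hf ε hε).1 hfQ using 1
  rw [map_add]
  ring

theorem add (hQ : IsQuadraticModule Q) (hf : IsStandardPart Q f a)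
    (hg : IsStandardPart Q g b) : IsStandardPart Q (f + g) (a + b) := fun ε hε => by
  have := (hf (ε / 2) (half_pos hε)).add hQ (hg (ε / 2) (half_pos hε))
  rwa [add_halves, ← add_sub_add_comm, ← map_add] at this

theorem smul (hQ : IsQuadraticModule Q) (hf : IsStandardPart Q f a) (c : ℝ) :
    IsStandardPart Q (c • f) (c * a) := fun ε hε => by
  have hc : 0 < |c| + 1 := by positivity
  have := (hf (ε / (|c| + 1)) (by positivity)).smul hQ c
  rw [smul_sub, Algebra.smul_def c (algebraMap ℝ A a), ← map_mul] at this
  refine this.mono hQ ?_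
  rw [mul_div_assoc', div_le_iff₀ hc]
  nlinarith

theorem mul_of_zero (hQ : IsQuadraticModule Q) (hf : IsStandardPart Q f 0)
    (hg : IsStandardPart Q g 0) : IsStandardPart Q (f * g) 0 := fun ε hε => by
  have hδ : 0 < √ε := Real.sqrt_pos.2 hε
  have := ((hf √ε hδ).mul hQ (hg √ε hδ) hδ)
  simpa [Real.sq_sqrt hε.le] using this

end IsStandardPart

theorem exists_isStandardPart (hQ : IsQuadraticModule Q) (hQ1 : (-1 : A) ∉ Q)
    (hsemi : ∀ f : A, f ∈ Q ∨ -f ∈ Q) (harch : IsArchimedean Q) (f : A) :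
    ∃ c, IsStandardPart Q f c := by
  set S := {c : ℝ | algebraMap ℝ A c - f ∈ Q}
  obtain ⟨N, hN⟩ := harch f
  have hS : BddBelow S := ⟨-N, fun c hc => by
    by_contra! hlt
    refine hQ.algebraMap_notMem hQ1 (show c + N < 0 by linarith) ?_
    convert hQ.add_mem hc hN.2 using 1
    rw [map_add]
    ring⟩
  refine ⟨sInf S, fun ε hε => ⟨?_, ?_⟩⟩
  · obtain ⟨c, hc, hlt⟩ := exists_lt_of_csInf_lt ⟨N, hN.1⟩ (lt_add_of_pos_right (sInf S) hε)
    convert hQ.add_algebraMap_mem hc (sub_nonneg.2 hlt.le) using 1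
    rw [map_sub, map_add]
    ring
  · have hnS : sInf S - ε ∉ S := fun h => by linarith [csInf_le hS h]
    convert (hsemi _).resolve_left hnS using 1
    rw [map_sub]
    ring

theorem exists_algHom_nonneg (hQ : IsQuadraticModule Q) (hQ1 : (-1 : A) ∉ Q)
    (hsemi : ∀ f : A, f ∈ Q ∨ -f ∈ Q) (harch : IsArchimedean Q) :
    ∃ φ : A →ₐ[ℝ] ℝ, ∀ f ∈ Q, 0 ≤ φ f := by
  choose φ hφ using exists_isStandardPart hQ hQ1 hsemi harch
  have eq_of {f : A} {c : ℝ} (h : IsStandardPart Q f c) : φ f = c := (hφ f).unique hQ hQ1 h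
  let L : A →ₗ[ℝ] ℝ :=
    { toFun := φ
      map_add' := fun f g => eq_of ((hφ f).add hQ (hφ g))
      map_smul' := fun c f => eq_of ((hφ f).smul hQ c) }
  have L_algebraMap (c : ℝ) : L (algebraMap ℝ A c) = c := eq_of (isStandardPart_algebraMap hQ c)
  have sub_standardPart (f : A) : IsStandardPart Q (f - algebraMap ℝ A (φ f)) 0 := by
    simpa [← sub_eq_add_neg] using (hφ f).add hQ (isStandardPart_algebraMap hQ (-φ f))
  refine ⟨AlgHom.ofLinearMap L (by simpa using L_algebraMap 1) fun f g => ?_,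
    fun f hf => (hφ f).nonneg hQ hQ1 hf⟩
  have hprod : L ((f - algebraMap ℝ A (φ f)) * (g - algebraMap ℝ A (φ g))) = 0 :=
    eq_of ((sub_standardPart f).mul_of_zero hQ (sub_standardPart g))
  have hfg : f * g = (f - algebraMap ℝ A (φ f)) * (g - algebraMap ℝ A (φ g))
      + φ g • f + φ f • g - algebraMap ℝ A (φ f * φ g) := by
    simp only [Algebra.smul_def, map_mul]
    ring
  rw [hfg, map_sub, map_add, map_add, hprod, map_smul, map_smul, L_algebraMap, smul_eq_mul,
    smul_eq_mul]
  change 0 + φ g * φ f + φ f * φ g - φ f * φ g = φ f * φ g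
  ring

end Character

section Representation

variable {A : Type*} [CommRing A] [Algebra ℝ A] {M : Set A}

namespace IsQuadraticModule

theorem algebraMap_pow_two_pow_sub_mem (hM : IsQuadraticModule M) {u : A} {η : ℝ} (hη : 0 < η)
    (hu : u ∈ M) (hηu : algebraMap ℝ A η - u ∈ M) (k : ℕ) :
    algebraMap ℝ A (η ^ 2 ^ k) - u ^ 2 ^ k ∈ M := by
  induction k with
  | zero => simpa using hηu
  | succ k ih =>
    have hb : IsBoundedBy M (η ^ 2 ^ k) (u ^ 2 ^ k) :=
      ⟨ih, hM.add_mem (hM.algebraMap_mem (by positivity)) (hM.pow_two_pow_mem hu k)⟩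
    simpa only [pow_succ, pow_mul] using hb.sq_sub_sq_mem hM (by positivity)

theorem add_algebraMap_mem_of_mul_eq_one_sub_sq (hM : IsQuadraticModule M) {s r G w : A}
    {l δ : ℝ} (hs : IsSumSq s) (hsG : s * G = 1 - w ^ 2) (hsr : s * r ∈ M)
    (hr : IsBoundedBy M l r) (hl : 0 ≤ l) (hδ : 0 < δ) (hw : algebraMap ℝ A δ - w ^ 2 ∈ M) :
    r + algebraMap ℝ A (2 * l * δ + l * δ ^ 2) ∈ M := by
  have hw' : IsBoundedBy M δ (w ^ 2) :=
    ⟨hw, hM.add_mem (hM.algebraMap_mem hδ.le) (hM.sq_mem w)⟩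
  -- `r = (s G)² r + (2 w² - w⁴) r`, and the last term is at least `-(2 δ + δ²) l` modulo `M`
  convert hM.add_mem (hM.add_mem (hM.add_mem (hM.add_mem
    (hM.isSumSq_mul_mem ((IsSquare.sq G).isSumSq.mul hs) hsr)
    (hM.smul_mem zero_le_two (hM.sq_mul_mem w hr.2)))
    (hM.sq_mul_mem (w ^ 2) hr.1))
    (hM.smul_mem (by positivity : (0 : ℝ) ≤ 2 * l) hw))
    (hM.smul_mem hl (hw'.sq_sub_sq_mem hM hδ)) using 1
  simp only [Algebra.smul_def, map_add, map_mul, map_pow, map_ofNat]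
  linear_combination (-r * (s * G + 1 - w ^ 2)) * hsG

theorem add_algebraMap_mem_of_isSumSq_mul_mem (hM : IsQuadraticModule M)
    (harch : IsArchimedean M) {s r : A} (hs : IsSumSq s) {θ : ℝ} (hθ0 : 0 < θ) (hθ1 : θ < 1)
    (hsθ : s - algebraMap ℝ A θ ∈ M) (hs1 : 1 - s ∈ M) (hsr : s * r ∈ M) {ε : ℝ} (hε : 0 < ε) :
    r + algebraMap ℝ A ε ∈ M := by
  obtain ⟨l, hl, hr⟩ := harch.exists_one_le hM r
  have hl0 : 0 < l := zero_lt_one.trans_le hl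
  set η := 1 - θ
  have hη0 : 0 < η := sub_pos.2 hθ1
  have hη1 : η < 1 := sub_lt_self 1 hθ0
  have hηu : algebraMap ℝ A η - (1 - s) ∈ M := by
    convert hsθ using 1
    rw [map_sub, map_one]
    ring
  obtain ⟨k, hk⟩ := exists_pow_lt_of_lt_one (by positivity : 0 < ε / (3 * l)) hη1
  set δ := η ^ 2 ^ (k + 1)
  have hδ0 : 0 < δ := by positivity
  have hδ1 : δ ≤ 1 := pow_le_one₀ hη0.le hη1.le
  have hδk : δ ≤ η ^ k :=
    pow_le_pow_of_le_one hη0.le hη1.le (k.le_succ.trans Nat.lt_two_pow_self.le)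
  have hδε : 3 * l * δ ≤ ε := by
    rw [lt_div_iff₀ (by positivity)] at hk
    nlinarith
  have hsG : s * ∑ i ∈ Finset.range (2 ^ (k + 1)), (1 - s) ^ i = 1 - ((1 - s) ^ 2 ^ k) ^ 2 := by
    rw [← pow_mul, ← pow_succ, ← mul_neg_geom_sum, sub_sub_cancel]
  have hw : algebraMap ℝ A δ - ((1 - s) ^ 2 ^ k) ^ 2 ∈ M := by
    rw [← pow_mul, ← pow_succ]
    exact hM.algebraMap_pow_two_pow_sub_mem hη0 hs1 hηu (k + 1)
  have := hM.add_algebraMap_mem_of_mul_eq_one_sub_sq hs hsG hsr hr hl0.le hδ0 hw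
  convert hM.add_algebraMap_mem this (show 0 ≤ ε - (2 * l * δ + l * δ ^ 2) by nlinarith)
    using 1
  rw [map_sub]
  ring

theorem add_algebraMap_mem_of_isSumSq_mul_sub_one_mem (hM : IsQuadraticModule M)
    (harch : IsArchimedean M) {σ r : A} (hσ : IsSumSq σ) (h : σ * r - 1 ∈ M) {ε : ℝ}
    (hε : 0 < ε) : r + algebraMap ℝ A ε ∈ M := by
  obtain ⟨l, hl, hr⟩ := harch.exists_one_le hM r
  obtain ⟨μ, hμ, hσμ⟩ := harch.exists_one_le hM σ
  have hl0 : 0 < l := zero_lt_one.trans_le hl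
  have hμ0 : 0 < μ := zero_lt_one.trans_le hμ
  have hlσ : algebraMap ℝ A l * σ - 1 ∈ M := by
    convert hM.add_mem (hM.isSumSq_mul_mem hσ hr.1) h using 1
    ring
  -- rescale `σ` to `s = σ / μ`, so that `θ ≤ s ≤ 1` for `θ = 1 / (2 l μ)`
  set θ := (2 * l * μ)⁻¹
  have hθ : θ * (2 * l) = μ⁻¹ := by simp only [θ]; field_simp
  have hs : IsSumSq (algebraMap ℝ A μ⁻¹ * σ) := by
    rw [← Real.sq_sqrt (inv_nonneg.2 hμ0.le), map_pow]
    exact (IsSquare.sq _).isSumSq.mul hσ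
  refine hM.add_algebraMap_mem_of_isSumSq_mul_mem harch hs (θ := θ) (by positivity) ?_ ?_ ?_ ?_
    hε
  · rw [inv_lt_one₀ (by positivity)]
    nlinarith
  · convert hM.smul_mem (by positivity : 0 ≤ θ) (hM.add_mem hlσ (hM.isSumSq_mul_mem hσ
      (hM.algebraMap_mem hl0.le))) using 1
    rw [Algebra.smul_def, ← hθ, map_mul, map_mul, map_ofNat]
    ring
  · convert hM.smul_mem (inv_nonneg.2 hμ0.le) hσμ.1 using 1
    rw [Algebra.smul_def, mul_sub, ← map_mul, inv_mul_cancel₀ hμ0.ne', map_one]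
  · convert hM.smul_mem (inv_nonneg.2 hμ0.le) (hM.add_mem h hM.one_mem) using 1
    rw [Algebra.smul_def]
    ring

theorem mem_of_isSumSq_mul_sub_one_mem (hM : IsQuadraticModule M) (harch : IsArchimedean M)
    {σ r : A} (hσ : IsSumSq σ) (h : σ * r - 1 ∈ M) : r ∈ M := by
  obtain ⟨μ, hμ, hσμ⟩ := harch.exists_one_le hM σ
  have hμ0 : 0 < μ := zero_lt_one.trans_le hμ
  set c := (2 * μ)⁻¹
  have hc : (2 : A) * algebraMap ℝ A c * algebraMap ℝ A μ = 1 := by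
    rw [← map_ofNat (algebraMap ℝ A), ← map_mul, ← map_mul, ← map_one (algebraMap ℝ A)]
    simp only [c]
    field_simp
  -- `2 σ (r - c) - 1 = 2 (σ r - 1) + (μ - σ) / μ`
  have h' : (σ + σ) * (r - algebraMap ℝ A c) - 1 ∈ M := by
    convert hM.add_mem (hM.add_mem h h) (hM.smul_mem (by positivity : 0 ≤ 2 * c) hσμ.1) using 1
    rw [Algebra.smul_def, map_mul, map_ofNat]
    linear_combination -hc
  simpa using hM.add_algebraMap_mem_of_isSumSq_mul_sub_one_mem harch (hσ.add hσ) h'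
    (by positivity : 0 < c)

theorem exists_isSumSq_mul_sub_one_mem (hM : IsQuadraticModule M) (harch : IsArchimedean M)
    {r : A} (hr : ∀ φ : A →ₐ[ℝ] ℝ, (∀ f ∈ M, 0 ≤ φ f) → 0 < φ r) :
    ∃ σ, IsSumSq σ ∧ σ * r - 1 ∈ M := by
  by_contra! hne
  have h1 : (-1 : A) ∉ adjoinSumSqMul M (-r) := by
    rintro ⟨m, hm, σ, hσ, h⟩
    exact hne σ hσ (by convert hm using 1; linear_combination h)
  obtain ⟨Q, hMQ, hQ⟩ := (hM.adjoinSumSqMul (-r)).exists_maximal h1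
  have hQarch : IsArchimedean Q := harch.mono ((subset_adjoinSumSqMul M (-r)).trans hMQ)
  obtain ⟨φ, hφ⟩ := exists_algHom_nonneg hQ.prop.1 hQ.prop.2
    (mem_or_neg_mem_of_maximal hQ hQarch) hQarch
  have hpos := hr φ fun f hf => hφ f (hMQ (subset_adjoinSumSqMul M (-r) hf))
  have hneg := hφ (-r) (hMQ (hM.mem_adjoinSumSqMul_self (-r)))
  rw [map_neg] at hneg
  linarith

theorem mem_of_forall_algHom_pos (hM : IsQuadraticModule M) (harch : IsArchimedean M) {r : A}
    (hr : ∀ φ : A →ₐ[ℝ] ℝ, (∀ f ∈ M, 0 ≤ φ f) → 0 < φ r) : r ∈ M :=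
  have ⟨_, hσ, h⟩ := hM.exists_isSumSq_mul_sub_one_mem harch hr
  hM.mem_of_isSumSq_mul_sub_one_mem harch hσ h

end IsQuadraticModule

end Representation

section Polynomial

variable {n m1 m2 : ℕ}

theorem isSOS_iff_isSumSq {p : MvPolynomial (Fin n) ℝ} : IsSOS p ↔ IsSumSq p := by
  constructor
  · rintro ⟨k, q, rfl⟩
    exact IsSumSq.sum_sq _ _
  · intro hp
    induction hp with
    | zero => exact ⟨0, ![], by simp⟩
    | sq_add a _ ih =>
      obtain ⟨k, q, rfl⟩ := ih
      exact ⟨k + 1, Fin.cons a q, by simp [Fin.sum_univ_succ, sq]⟩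

theorem mem_QM_iff {g : Fin m2 → MvPolynomial (Fin n) ℝ} {p : MvPolynomial (Fin n) ℝ} :
    p ∈ QM g ↔ ∃ (σ₀ : MvPolynomial (Fin n) ℝ) (σ : Fin m2 → MvPolynomial (Fin n) ℝ),
      IsSumSq σ₀ ∧ (∀ j, IsSumSq (σ j)) ∧ p = σ₀ + ∑ j, σ j * g j := by
  simp only [QM, Set.mem_ofPred_eq, isSOS_iff_isSumSq]

theorem isQuadraticModule_QM (g : Fin m2 → MvPolynomial (Fin n) ℝ) :
    IsQuadraticModule (QM g) where
  add_mem := by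
    simp only [mem_QM_iff]
    rintro _ _ ⟨σ₀, σ, hσ₀, hσ, rfl⟩ ⟨τ₀, τ, hτ₀, hτ, rfl⟩
    refine ⟨σ₀ + τ₀, σ + τ, hσ₀.add hτ₀, fun j => (hσ j).add (hτ j), ?_⟩
    simp only [Pi.add_apply, add_mul, Finset.sum_add_distrib]
    ring
  sq_mul_mem := by
    simp only [mem_QM_iff]
    rintro f _ ⟨σ₀, σ, hσ₀, hσ, rfl⟩
    refine ⟨f ^ 2 * σ₀, fun j => f ^ 2 * σ j, (IsSquare.sq f).isSumSq.mul hσ₀,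
      fun j => (IsSquare.sq f).isSumSq.mul (hσ j), ?_⟩
    simp only [mul_add, Finset.mul_sum, mul_assoc]
  one_mem := mem_QM_iff.2 ⟨1, 0, .one, fun _ => .zero, by simp⟩

theorem apply_mem_QM (g : Fin m2 → MvPolynomial (Fin n) ℝ) (j : Fin m2) : g j ∈ QM g := by
  refine mem_QM_iff.2 ⟨0, Pi.single j 1, .zero, fun i => ?_, by simp [Pi.single_apply]⟩
  rcases eq_or_ne i j with rfl | hij
  · simp [IsSumSq.one]
  · simp [hij, IsSumSq.zero]

theorem isQuadraticModule_idealPlusQM (h : Fin m1 → MvPolynomial (Fin n) ℝ)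
    (g : Fin m2 → MvPolynomial (Fin n) ℝ) : IsQuadraticModule (idealPlusQM h g) :=
  (isQuadraticModule_QM g).ideal_add _

theorem isArchimedean_idealPlusQM {h : Fin m1 → MvPolynomial (Fin n) ℝ}
    {g : Fin m2 → MvPolynomial (Fin n) ℝ} (harch : ArchimedeanCond h g) :
    IsArchimedean (idealPlusQM h g) := by
  obtain ⟨R, -, hR⟩ := harch
  have hM := isQuadraticModule_idealPlusQM h g
  refine isArchimedean_of_adjoin_eq_top hM adjoin_range_X ?_
  rintro _ ⟨i, rfl⟩
  refine ⟨_, isBoundedBy_of_algebraMap_sub_sq_mem hM (R := R) ?_⟩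
  convert hM.add_mem hR (hM.isSumSq_mem (IsSumSq.sum_sq (Finset.univ.erase i) X)) using 1
  rw [Finset.sum_erase_eq_sub (Finset.mem_univ i), algebraMap_eq]
  ring

theorem algHom_apply_eq_eval {ι : Type*} (φ : MvPolynomial ι ℝ →ₐ[ℝ] ℝ) (f : MvPolynomial ι ℝ) :
    φ f = eval (φ ∘ X) f := by
  conv_lhs => rw [aeval_unique φ]
  rfl

theorem eval_comp_X_of_nonneg {h : Fin m1 → MvPolynomial (Fin n) ℝ}
    {g : Fin m2 → MvPolynomial (Fin n) ℝ} (φ : MvPolynomial (Fin n) ℝ →ₐ[ℝ] ℝ)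
    (hφ : ∀ f ∈ idealPlusQM h g, 0 ≤ φ f) :
    (∀ i, eval (φ ∘ X) (h i) = 0) ∧ ∀ j, 0 ≤ eval (φ ∘ X) (g j) := by
  have mem_of_span {a} (ha : a ∈ Ideal.span (Set.range h)) : a ∈ idealPlusQM h g :=
    ⟨a, ha, 0, (isQuadraticModule_QM g).zero_mem, (add_zero a).symm⟩
  refine ⟨fun i => ?_, fun j => ?_⟩
  · have hi : h i ∈ Ideal.span (Set.range h) := Ideal.subset_span (Set.mem_range_self i)
    have h₁ := hφ _ (mem_of_span hi)
    have h₂ := hφ _ (mem_of_span (neg_mem hi))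
    rw [map_neg, neg_nonneg] at h₂
    rw [← algHom_apply_eq_eval]
    exact le_antisymm h₂ h₁
  · rw [← algHom_apply_eq_eval]
    exact hφ _ ⟨0, Ideal.zero_mem _, g j, apply_mem_QM g j, (zero_add _).symm⟩

end Polynomial

/-- **Putinar's Positivstellensatz**: if `⟨h⟩ + Q(g)` is archimedean and `p > 0` on
`K = {x : h_i(x) = 0, g_j(x) ≥ 0}`, then `p ∈ ⟨h⟩ + Q(g)`. -/
theorem putinar_positivstellensatz {n m1 m2 : ℕ}
    (h : Fin m1 → MvPolynomial (Fin n) ℝ) (g : Fin m2 → MvPolynomial (Fin n) ℝ)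
    (K : Set (Fin n → ℝ))
    (hK : K = {x | (∀ i, eval x (h i) = 0) ∧ (∀ j, 0 ≤ eval x (g j))})
    (harch : ArchimedeanCond h g)
    (p : MvPolynomial (Fin n) ℝ)
    (hp : ∀ x ∈ K, 0 < eval x p) :
    p ∈ idealPlusQM h g := by
  refine (isQuadraticModule_idealPlusQM h g).mem_of_forall_algHom_pos
    (isArchimedean_idealPlusQM harch) fun φ hφ => ?_
  rw [algHom_apply_eq_eval]
  exact hp _ (hK ▸ eval_comp_X_of_nonneg φ hφ)
end
end

section
/- (Elimination theory.) Fix n, r and positive degrees e_1,…,e_r. There exist finitely many polynomials G_1,…,G_t, with integer coefficients, in the coefficients of an r-tuple of homogeneous polynomials f_1,…,f_r in the variables x_0,…,x_n of degrees e_1,…,e_r, each G_j homogeneous in the coefficients of each f_i separately, with the following property: for every tuple of homogeneous polynomials f_1,…,f_r ∈ ℂ[x_0,…,x_n] with deg f_i = e_i, the system f_1 = ⋯ = f_r = 0 has a common zero z ∈ ℂ^{n+1} with z ≠ 0 if and only if G_1,…,G_t all vanish at the coefficients of (f_1,…,f_r). -/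
/-!
By the Nullstellensatz, homogeneous `f₁,…,f_r` have no common zero besides `0` iff the ideal
they generate contains every monomial of some degree `N`. The ideal being homogeneous, this
happens iff the forms `x^γ fᵢ` span the forms of degree `N`, i.e. iff the Macaulay matrix
listing their degree-`N` coefficients has a nonzero maximal minor. Such a minor is an integer
polynomial in the coefficients of the `fᵢ`, homogeneous in those of each `fᵢ` because every
column comes from a single `fᵢ`. All degrees `N` contribute minors, but by the Hilbert basis
theorem finitely many of them generate the ideal of all of them, and have the same zeros.
-/

open MvPolynomial

noncomputable section

open Set in
theorem Matrix.span_range_col_eq_top_iff {ρ κ K : Type*} [Fintype ρ] [DecidableEq ρ] [Field K]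
    (M : Matrix ρ κ K) :
    Submodule.span K (range M.col) = ⊤ ↔ ∃ g : ρ → κ, (M.submatrix id g).det ≠ 0 := by
  simp_rw [ne_eq, ← isUnit_iff_ne_zero, ← Matrix.isUnit_iff_isUnit_det,
    ← Matrix.linearIndependent_cols_iff_isUnit]
  have hcard : Fintype.card ρ = Module.finrank K (ρ → K) :=
    (Module.finrank_fintype_fun_eq_card K).symm
  constructor
  · intro htop
    obtain ⟨v, hvM, -, hv⟩ := Submodule.exists_fun_fin_finrank_span_eq K (range M.col)
    choose c hc using hvM
    let ε : ρ ≃ Fin (Module.finrank K (Submodule.span K (range M.col))) :=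
      Fintype.equivFinOfCardEq (by rw [htop, finrank_top, hcard])
    refine ⟨c ∘ ε, ?_⟩
    have hcol : (M.submatrix id (c ∘ ε)).col = v ∘ ε := funext fun j => hc (ε j)
    exact hcol ▸ hv.comp ε ε.injective
  · rintro ⟨g, hg⟩
    rw [eq_top_iff, ← hg.span_eq_top_of_card_eq_finrank' hcard]
    exact Submodule.span_mono (range_comp_subset_range g M.col)

theorem Matrix.isWeightedHomogeneous_det {n τ R M : Type*} [Fintype n] [DecidableEq n]
    [CommRing R] [AddCommMonoid M] {w : τ → M} {A : Matrix n n (MvPolynomial τ R)} {m : n → M}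
    (hA : ∀ i j, (A i j).IsWeightedHomogeneous w (m j)) :
    A.det.IsWeightedHomogeneous w (∑ j, m j) := by
  rw [Matrix.det_apply]
  refine MvPolynomial.IsWeightedHomogeneous.sum _ _ _ fun π _ => ?_
  rw [Units.smul_def, ← mem_weightedHomogeneousSubmodule]
  exact zsmul_mem (IsWeightedHomogeneous.prod _ _ _ fun j _ => hA _ _) _

theorem IsNoetherianRing.exists_fin_forall_map_eq_zero_iff {A B : Type*} [CommRing A]
    [IsNoetherianRing A] [Semiring B] (S : Set A) :
    ∃ (t : ℕ) (G : Fin t → A), (∀ j, G j ∈ S) ∧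
      ∀ φ : A →+* B, (∀ j, φ (G j) = 0) ↔ ∀ a ∈ S, φ a = 0 := by
  obtain ⟨T, hTS, hT⟩ :=
    (Submodule.fg_span_iff_fg_span_finset_subset S).1 (IsNoetherian.noetherian (Ideal.span S))
  refine ⟨T.card, fun j => T.equivFin.symm j, fun j => hTS (T.equivFin.symm j).2,
    fun φ => ⟨fun h a ha => ?_, fun h j => h _ (hTS (T.equivFin.symm j).2)⟩⟩
  have hle : Ideal.span S ≤ RingHom.ker φ := by
    refine hT.trans_le (Submodule.span_le.2 fun x hx => ?_)
    simpa using h (T.equivFin ⟨x, hx⟩)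
  exact hle (Ideal.subset_span ha)

namespace MvPolynomial

variable {σ ι R K : Type*}

theorem IsWeightedHomogeneous.rename {τ M : Type*} [CommSemiring R] [AddCommMonoid M]
    {w : τ → M} {φ : MvPolynomial σ R} {m : M} {f : σ → τ}
    (hφ : φ.IsWeightedHomogeneous (w ∘ f) m) : (rename f φ).IsWeightedHomogeneous w m := by
  rw [← φ.support_sum_monomial_coeff, map_sum]
  refine IsWeightedHomogeneous.sum _ _ _ fun d hd => ?_
  rw [rename_monomial]
  refine isWeightedHomogeneous_monomial _ _ _ ?_
  rw [← hφ (mem_support_iff.1 hd), Finsupp.weight_apply, Finsupp.weight_apply,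
    Finsupp.sum_mapDomain_index (by simp) (fun _ _ _ => add_smul _ _ _)]
  rfl

theorem exists_ne_zero_mem_zeroLocus_iff [Field K] [IsAlgClosed K] [Fintype σ]
    (I : Ideal (MvPolynomial σ K)) :
    (∃ z ≠ 0, z ∈ zeroLocus K I) ↔ ¬ ∃ N, ∀ β : σ →₀ ℕ, β.degree = N → monomial β 1 ∈ I := by
  constructor
  · rintro ⟨z, hz0, hz⟩ ⟨N, hN⟩
    obtain ⟨j, hj⟩ := Function.ne_iff.1 hz0
    have hzN := hz _ (hN _ (Finsupp.degree_single j N))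
    rw [← X_pow_eq_monomial, map_pow, aeval_X] at hzN
    exact hj (eq_zero_of_pow_eq_zero hzN)
  · intro hI
    by_contra! hz
    apply hI
    have hX (j : σ) : X j ∈ I.radical := by
      rw [← vanishingIdeal_zeroLocus_eq_radical (K := K)]
      intro z hzI
      rw [not_imp_not.1 (hz z) hzI, aeval_X, Pi.zero_apply]
    choose k hk using hX
    refine ⟨∑ j, k j + 1, fun β hβ => ?_⟩
    obtain ⟨j, -, hj⟩ := Finset.exists_lt_of_sum_lt (s := Finset.univ) (f := k) (g := β)
      (by rw [← Finsupp.degree_eq_sum, hβ]; omega)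
    refine I.mem_of_dvd ?_ (X_pow_eq_monomial (R := K) ▸ hk j)
    exact monomial_dvd_monomial.2 ⟨Or.inr (Finsupp.single_le_iff.2 hj.le), one_dvd _⟩

instance [Finite σ] (N : ℕ) : Finite {β : σ →₀ ℕ // β.degree = N} :=
  (Finsupp.finite_of_degree_eq N).to_subtype

instance [Finite σ] (N : ℕ) : Fintype {β : σ →₀ ℕ // β.degree = N} := Fintype.ofFinite _

variable (K) in
def coeffsOfDegree [CommSemiring K] (N : ℕ) :
    MvPolynomial σ K →ₗ[K] ({β : σ →₀ ℕ // β.degree = N} → K) :=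
  LinearMap.pi fun β => lcoeff K β.1

attribute [local instance] MvPolynomial.gradedAlgebra

theorem forall_monomial_mem_iff_map_coeffsOfDegree_eq_top [CommSemiring K] [Finite σ]
    {I : Ideal (MvPolynomial σ K)} (hI : I.IsHomogeneous (homogeneousSubmodule σ K)) (N : ℕ) :
    (∀ β : σ →₀ ℕ, β.degree = N → monomial β 1 ∈ I) ↔
      (I.restrictScalars K).map (coeffsOfDegree K N) = ⊤ := by
  classical
  constructor
  · intro h
    rw [eq_top_iff, ← (Pi.basisFun K _).span_eq, Submodule.span_le]
    rintro _ ⟨β, rfl⟩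
    refine ⟨monomial β.1 1, h β.1 β.2, ?_⟩
    ext β'
    simp [coeffsOfDegree, coeff_monomial, Pi.single_apply, Subtype.ext_iff, eq_comm]
  · intro h β hβ
    obtain ⟨p, hpI, hp⟩ : Pi.single ⟨β, hβ⟩ 1 ∈ (I.restrictScalars K).map (coeffsOfDegree K N) :=
      h ▸ Submodule.mem_top
    suffices homogeneousComponent N p = monomial β 1 from
      this ▸ homogeneousComponent_mem_of_mem hI hpI N
    ext d
    rw [coeff_homogeneousComponent, coeff_monomial]
    by_cases hd : d.degree = N
    · simpa [coeffsOfDegree, hd, Pi.single_apply, Subtype.ext_iff, eq_comm] using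
        congr_fun hp ⟨d, hd⟩
    · rw [if_neg hd, if_neg (by rintro rfl; exact hd hβ)]

theorem restrictScalars_span_range [CommSemiring K] (f : ι → MvPolynomial σ K) :
    (Ideal.span (Set.range f)).restrictScalars K =
      Submodule.span K (Set.range fun c : (σ →₀ ℕ) × ι => monomial c.1 1 * f c.2) := by
  rw [Ideal.span, ← Submodule.span_smul_of_span_eq_top (basisMonomials σ K).span_eq,
    coe_basisMonomials, Set.range_smul_range]
  rfl

/-- Column `(γ, i)` lists the degree-`N` coefficients of `x^γ fᵢ`, where `c (i, d)` is the
coefficient of `x^d` in `fᵢ`. For homogeneous `fᵢ` the columns with `deg γ + deg fᵢ ≠ N` vanish. -/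
def macaulayMatrix [Semiring R] (c : ι × (σ →₀ ℕ) → R) (N : ℕ) :
    Matrix {β : σ →₀ ℕ // β.degree = N} ((σ →₀ ℕ) × ι) R :=
  Matrix.of fun β γi => if γi.1 ≤ β.1 then c (γi.2, β.1 - γi.1) else 0

theorem macaulayMatrix_map [Semiring R] [Semiring K] (c : ι × (σ →₀ ℕ) → R) (φ : R →+* K)
    (N : ℕ) : (macaulayMatrix c N).map φ = macaulayMatrix (φ ∘ c) N := by
  ext β γi
  simp only [macaulayMatrix, Matrix.map_apply, Matrix.of_apply, apply_ite φ, map_zero,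
    Function.comp_apply]

theorem col_macaulayMatrix_coeff [CommSemiring K] (f : ι → MvPolynomial σ K) (N : ℕ) :
    (macaulayMatrix (fun v => coeff v.2 (f v.1)) N).col =
      fun γi => coeffsOfDegree K N (monomial γi.1 1 * f γi.2) := by
  ext γi β
  simp [macaulayMatrix, coeffsOfDegree, coeff_monomial_mul']

theorem forall_monomial_mem_span_iff_exists_det_ne_zero [Field K] [Finite σ] [DecidableEq σ]
    {e : ι → ℕ} {f : ι → MvPolynomial σ K} (hf : ∀ i, (f i).IsHomogeneous (e i)) (N : ℕ) :
    (∀ β : σ →₀ ℕ, β.degree = N → monomial β 1 ∈ Ideal.span (Set.range f)) ↔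
      ∃ g, ((macaulayMatrix (fun v => coeff v.2 (f v.1)) N).submatrix id g).det ≠ 0 := by
  have hI : (Ideal.span (Set.range f)).IsHomogeneous (homogeneousSubmodule σ K) :=
    Ideal.homogeneous_span _ _ (by rintro _ ⟨i, rfl⟩; exact ⟨e i, hf i⟩)
  rw [forall_monomial_mem_iff_map_coeffsOfDegree_eq_top hI, restrictScalars_span_range,
    Submodule.map_span, ← Set.range_comp, ← Matrix.span_range_col_eq_top_iff,
    col_macaulayMatrix_coeff]
  rfl

theorem exists_ne_zero_forall_eval_eq_zero_iff [Field K] [IsAlgClosed K] [Fintype σ]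
    [DecidableEq σ] {e : ι → ℕ} {f : ι → MvPolynomial σ K} (hf : ∀ i, (f i).IsHomogeneous (e i)) :
    (∃ z ≠ 0, ∀ i, eval z (f i) = 0) ↔
      ∀ N g, ((macaulayMatrix (fun v => coeff v.2 (f v.1)) N).submatrix id g).det = 0 := by
  have hzero (z : σ → K) :
      (∀ i, eval z (f i) = 0) ↔ z ∈ zeroLocus K (Ideal.span (Set.range f)) := by
    refine ⟨fun hz => ?_, fun hz i => hz _ (Ideal.subset_span ⟨i, rfl⟩)⟩
    have hle : Ideal.span (Set.range f) ≤ RingHom.ker (aeval z) :=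
      Ideal.span_le.2 (by rintro _ ⟨i, rfl⟩; exact hz i)
    exact fun p hp => hle hp
  simp_rw [hzero, exists_ne_zero_mem_zeroLocus_iff,
    forall_monomial_mem_span_iff_exists_det_ne_zero hf, not_exists, not_not]

instance [Finite ι] [Finite σ] (e : ι → ℕ) : Finite {v : ι × (σ →₀ ℕ) // v.2.degree = e v.1} :=
  Finite.of_injective (fun v => (⟨v.1.1, v.1.2, v.2⟩ : Σ i, {d : σ →₀ ℕ // d.degree = e i}))
    (by
      rintro ⟨⟨i, d⟩, h⟩ ⟨⟨i', d'⟩, h'⟩ hv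
      obtain ⟨rfl, hv⟩ := Sigma.mk.inj_iff.1 hv
      simp_all)

/-- Only the coefficients that homogeneity allows become variables, so that the coefficient ring
is noetherian. -/
def genericCoeff (e : ι → ℕ) (v : ι × (σ →₀ ℕ)) :
    MvPolynomial {v : ι × (σ →₀ ℕ) // v.2.degree = e v.1} ℤ :=
  if h : v.2.degree = e v.1 then X ⟨v, h⟩ else 0

theorem aeval_comp_genericCoeff [CommRing R] {e : ι → ℕ} {c : ι × (σ →₀ ℕ) → R}
    (hc : ∀ v, v.2.degree ≠ e v.1 → c v = 0) :
    aeval (c ∘ Subtype.val) ∘ genericCoeff e = c := by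
  ext v
  by_cases hv : v.2.degree = e v.1
  · simp [genericCoeff, hv]
  · simp [genericCoeff, hv, hc v hv]

theorem isWeightedHomogeneous_genericCoeff [DecidableEq ι] (e : ι → ℕ) (i : ι)
    (v : ι × (σ →₀ ℕ)) :
    (genericCoeff e v).IsWeightedHomogeneous
      ((fun v : ι × (σ →₀ ℕ) => if v.1 = i then 1 else 0) ∘ Subtype.val)
      (if v.1 = i then 1 else 0) := by
  by_cases hv : v.2.degree = e v.1
  · rw [genericCoeff, dif_pos hv]
    exact isWeightedHomogeneous_X ℤ _ (⟨v, hv⟩ : {v : ι × (σ →₀ ℕ) // v.2.degree = e v.1})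
  · rw [genericCoeff, dif_neg hv]
    exact isWeightedHomogeneous_zero _ _ _

variable (σ) in
def genericMacaulayMinors [Finite σ] [DecidableEq σ] (e : ι → ℕ) :
    Set (MvPolynomial {v : ι × (σ →₀ ℕ) // v.2.degree = e v.1} ℤ) :=
  {p | ∃ (N : ℕ) (g : {β : σ →₀ ℕ // β.degree = N} → (σ →₀ ℕ) × ι),
    p = ((macaulayMatrix (genericCoeff e) N).submatrix id g).det}

theorem exists_isWeightedHomogeneous_of_mem_genericMacaulayMinors [Finite σ] [DecidableEq σ]
    [DecidableEq ι] {e : ι → ℕ} {p} (hp : p ∈ genericMacaulayMinors σ e) (i : ι) :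
    ∃ m, p.IsWeightedHomogeneous
      ((fun v : ι × (σ →₀ ℕ) => if v.1 = i then 1 else 0) ∘ Subtype.val) m := by
  obtain ⟨N, g, rfl⟩ := hp
  refine ⟨_, Matrix.isWeightedHomogeneous_det (m := fun β => if (g β).2 = i then 1 else 0)
    fun β β' => ?_⟩
  simp only [Matrix.submatrix_apply, id, macaulayMatrix, Matrix.of_apply]
  split
  · exact isWeightedHomogeneous_genericCoeff e i _
  · exact isWeightedHomogeneous_zero _ _ _

theorem forall_mem_genericMacaulayMinors_aeval_eq_zero_iff [CommRing R] [Finite σ]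
    [DecidableEq σ] {e : ι → ℕ} {c : ι × (σ →₀ ℕ) → R}
    (hc : ∀ v, v.2.degree ≠ e v.1 → c v = 0) :
    (∀ p ∈ genericMacaulayMinors σ e, aeval (c ∘ Subtype.val) p = 0) ↔
      ∀ N g, ((macaulayMatrix c N).submatrix id g).det = 0 := by
  have hdet (N : ℕ) (g : {β : σ →₀ ℕ // β.degree = N} → (σ →₀ ℕ) × ι) :
      aeval (c ∘ Subtype.val) ((macaulayMatrix (genericCoeff e) N).submatrix id g).det =
        ((macaulayMatrix c N).submatrix id g).det := by
    rw [AlgHom.map_det]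
    change (((macaulayMatrix (genericCoeff e) N).map
      (aeval (c ∘ Subtype.val)).toRingHom).submatrix id g).det = _
    rw [macaulayMatrix_map, AlgHom.toRingHom_eq_coe, RingHom.coe_coe, aeval_comp_genericCoeff hc]
  constructor
  · intro h N g
    rw [← hdet]
    exact h _ ⟨N, g, rfl⟩
  · rintro h _ ⟨N, g, rfl⟩
    rw [hdet]
    exact h N g

end MvPolynomial

theorem elimination_theory_general (n r : ℕ) (e : Fin r → ℕ) :
    ∃ (t : ℕ) (G : Fin t → MvPolynomial ((Fin r) × (Fin (n + 1) →₀ ℕ)) ℤ),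
      (∀ (j : Fin t) (i : Fin r), ∃ m : ℕ,
        (G j).IsWeightedHomogeneous
          (fun v : (Fin r) × (Fin (n + 1) →₀ ℕ) => if v.1 = i then 1 else 0) m) ∧
      ∀ f : Fin r → MvPolynomial (Fin (n + 1)) ℂ,
        (∀ i, (f i).IsHomogeneous (e i)) →
        ((∃ z : Fin (n + 1) → ℂ, z ≠ 0 ∧ ∀ i, eval z (f i) = 0) ↔
          ∀ j : Fin t, aeval (fun v : (Fin r) × (Fin (n + 1) →₀ ℕ) =>
            coeff v.2 (f v.1)) (G j) = 0) := by
  obtain ⟨t, G, hGS, hG⟩ := IsNoetherianRing.exists_fin_forall_map_eq_zero_iff (B := ℂ)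
    (genericMacaulayMinors (Fin (n + 1)) e)
  refine ⟨t, fun j => rename Subtype.val (G j), fun j i => ?_, fun f hf => ?_⟩
  · obtain ⟨m, hm⟩ := exists_isWeightedHomogeneous_of_mem_genericMacaulayMinors (hGS j) i
    exact ⟨m, hm.rename⟩
  · simp_rw [exists_ne_zero_forall_eval_eq_zero_iff hf, aeval_rename]
    rw [← forall_mem_genericMacaulayMinors_aeval_eq_zero_iff fun v => (hf v.1).coeff_eq_zero]
    exact (hG (aeval _).toRingHom).symm

/-- **Elimination theory**: for homogeneous polynomials `f₁,…,f_r` in the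
variables `x₀,…,x_n` of degrees `e₁,…,e_r`, there exist finitely many
polynomials `G₁,…,G_t` with integer coefficients in the coefficients of the
tuple, each homogeneous in the coefficients of each `f_i` separately, such that
the system `f₁ = ⋯ = f_r = 0` has a nonzero common zero in `ℂ^{n+1}` if and only
if all of `G₁,…,G_t` vanish at the coefficients of `(f₁,…,f_r)`. -/
theorem elimination_theory (n r : ℕ) (e : Fin r → ℕ) (he : ∀ i, 0 < e i) :
    ∃ (t : ℕ) (G : Fin t → MvPolynomial ((Fin r) × (Fin (n + 1) →₀ ℕ)) ℤ),
      (∀ (j : Fin t) (i : Fin r), ∃ m : ℕ,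
        (G j).IsWeightedHomogeneous
          (fun v : (Fin r) × (Fin (n + 1) →₀ ℕ) => if v.1 = i then 1 else 0) m) ∧
      ∀ f : Fin r → MvPolynomial (Fin (n + 1)) ℂ,
        (∀ i, (f i).IsHomogeneous (e i)) →
        ((∃ z : Fin (n + 1) → ℂ, z ≠ 0 ∧ ∀ i, eval z (f i) = 0) ↔
          ∀ j : Fin t, aeval (fun v : (Fin r) × (Fin (n + 1) →₀ ℕ) =>
            coeff v.2 (f v.1)) (G j) = 0) :=
  elimination_theory_general n r e
end
end

section
/- Let f, h_1,…,h_{m1}, g_1,…,g_{m2} ∈ ℝ[x_1,…,x_n], g_0 = 1, and K = {x ∈ ℝⁿ : h_i(x) = 0 (i ≤ m1), g_j(x) ≥ 0 (j ≤ m2)}. Suppose γ ∈ ℝ and there exist polynomials φ_1,…,φ_{m1} and SOS polynomials σ_0, σ_1,…,σ_{m2} with f − γ = Σ_{i=1}^{m1} φ_i h_i + Σ_{j=0}^{m2} σ_j g_j. Then for every u ∈ K with f(u) = γ, the first order optimality condition holds at u with the multipliers λ_i = φ_i(u) and μ_j = σ_j(u): namely ∇f(u) = Σ_{i=1}^{m1}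 φ_i(u) ∇h_i(u) + Σ_{j=1}^{m2} σ_j(u) ∇g_j(u), with σ_j(u) ≥ 0 and σ_j(u) g_j(u) = 0 for every j. -/
/-!
Evaluating the certificate at `u` gives `0 = σ₀(u) + Σ σ_j(u) g_j(u)`, a sum of nonnegative
terms, so every term vanishes: this is complementary slackness. Differentiating the certificate
at `u`, the terms `∂φ_i · h_i` vanish because `h_i(u) = 0`, and the terms `∂σ_j · g_j` vanish
because either `g_j(u) = 0` or `σ_j(u) = 0`; in the latter case `u` minimises the nonnegative
polynomial `σ_j`, so `∇σ_j(u) = 0`. Algebraically: if `Σ q_l(u)² = 0` then every `q_l(u) = 0`,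
and `∂(Σ q_l²) = Σ 2 q_l ∂q_l`.
-/

open MvPolynomial

noncomputable section

theorem IsSumSq.map {R S F : Type*} [NonUnitalNonAssocSemiring R] [NonUnitalNonAssocSemiring S]
    [FunLike F R S] [NonUnitalRingHomClass F R S] (f : F) {s : R} (hs : IsSumSq s) :
    IsSumSq (f s) := by
  induction hs with
  | zero => simp
  | sq_add a _ ih => simpa using ih.sq_add (f a)

theorem IsSOS.isSumSq {n : ℕ} {p : MvPolynomial (Fin n) ℝ} (hp : IsSOS p) : IsSumSq p := by
  obtain ⟨k, q, rfl⟩ := hp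
  exact IsSumSq.sum_sq _ _

namespace MvPolynomial

variable {σ R : Type*}

theorem eval_pderiv_mul_of_eval_pderiv_mul_eq_zero [CommSemiring R] {a b : MvPolynomial σ R}
    {u : σ → R} {k : σ} (h : eval u (pderiv k a) * eval u b = 0) :
    eval u (pderiv k (a * b)) = eval u a * eval u (pderiv k b) := by
  rw [pderiv_mul, eval_add, eval_mul, eval_mul, h, zero_add]

theorem eval_pderiv_mul_of_eval_eq_zero [CommSemiring R] {a b : MvPolynomial σ R}
    {u : σ → R} {k : σ} (hb : eval u b = 0) :
    eval u (pderiv k (a * b)) = eval u a * eval u (pderiv k b) :=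
  eval_pderiv_mul_of_eval_pderiv_mul_eq_zero (by rw [hb, mul_zero])

variable [CommRing R] [LinearOrder R] [IsStrictOrderedRing R]

theorem eval_nonneg_of_isSumSq {p : MvPolynomial σ R} (hp : IsSumSq p) (u : σ → R) :
    0 ≤ eval u p :=
  (hp.map (eval u)).nonneg

theorem eval_pderiv_eq_zero_of_isSumSq {p : MvPolynomial σ R} (hp : IsSumSq p) {u : σ → R}
    (hu : eval u p = 0) (k : σ) : eval u (pderiv k p) = 0 := by
  induction hp with
  | zero => simp
  | sq_add a hs ih =>
    rw [eval_add, eval_mul] at hu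
    obtain ⟨ha, hs0⟩ := (add_eq_zero_iff_of_nonneg (mul_self_nonneg _)
      (eval_nonneg_of_isSumSq hs u)).1 hu
    rw [map_add, eval_add, ih hs0, eval_pderiv_mul_of_eval_eq_zero (mul_self_eq_zero.1 ha),
      mul_self_eq_zero.1 ha, zero_mul, zero_add]

theorem eval_pderiv_mul_of_isSumSq {s g : MvPolynomial σ R} (hs : IsSumSq s) {u : σ → R}
    (h : eval u s * eval u g = 0) (k : σ) :
    eval u (pderiv k (s * g)) = eval u s * eval u (pderiv k g) := by
  refine eval_pderiv_mul_of_eval_pderiv_mul_eq_zero ?_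
  rcases mul_eq_zero.1 h with hs0 | hg0
  · rw [eval_pderiv_eq_zero_of_isSumSq hs hs0, zero_mul]
  · rw [hg0, mul_zero]

end MvPolynomial

/-- If `f − γ = Σ φ_i h_i + σ₀ + Σ σ_j g_j` with each `σ_j` SOS, then at every
`u ∈ K` with `f(u) = γ`, the first order optimality condition holds with
multipliers `λ_i = φ_i(u)`, `μ_j = σ_j(u)`: namely
`∇f(u) = Σ φ_i(u) ∇h_i(u) + Σ σ_j(u) ∇g_j(u)`, with `σ_j(u) ≥ 0` and
`σ_j(u) g_j(u) = 0` for every `j`. -/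
theorem sos_certificate_implies_first_order_condition {n m1 m2 : ℕ}
    (f : MvPolynomial (Fin n) ℝ)
    (h : Fin m1 → MvPolynomial (Fin n) ℝ) (g : Fin m2 → MvPolynomial (Fin n) ℝ)
    (K : Set (Fin n → ℝ))
    (hK : K = {x | (∀ i, eval x (h i) = 0) ∧ (∀ j, 0 ≤ eval x (g j))})
    (γ : ℝ)
    (φ : Fin m1 → MvPolynomial (Fin n) ℝ)
    (σ0 : MvPolynomial (Fin n) ℝ) (σ : Fin m2 → MvPolynomial (Fin n) ℝ)
    (hσ0 : IsSOS σ0) (hσ : ∀ j, IsSOS (σ j))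
    (hcert : f - C γ = (∑ i, φ i * h i) + σ0 + ∑ j, σ j * g j)
    (u : Fin n → ℝ) (hu : u ∈ K) (hfu : eval u f = γ) :
    (∀ k : Fin n, eval u (pderiv k f)
        = (∑ i, eval u (φ i) * eval u (pderiv k (h i)))
          + ∑ j, eval u (σ j) * eval u (pderiv k (g j))) ∧
    (∀ j, 0 ≤ eval u (σ j)) ∧ (∀ j, eval u (σ j) * eval u (g j) = 0) := by
  rw [hK] at hu
  obtain ⟨hh, hg⟩ := hu
  have hσu : ∀ j, 0 ≤ eval u (σ j) := fun j => eval_nonneg_of_isSumSq (hσ j).isSumSq u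
  have hterm : ∀ j ∈ Finset.univ, 0 ≤ eval u (σ j) * eval u (g j) :=
    fun j _ => mul_nonneg (hσu j) (hg j)
  have hval : eval u σ0 + ∑ j, eval u (σ j) * eval u (g j) = 0 := by
    simpa [hfu, hh, eq_comm] using congrArg (eval u) hcert
  obtain ⟨hσ0u, hsum⟩ := (add_eq_zero_iff_of_nonneg (eval_nonneg_of_isSumSq hσ0.isSumSq u)
    (Finset.sum_nonneg hterm)).1 hval
  have hslack : ∀ j, eval u (σ j) * eval u (g j) = 0 := fun j =>
    (Finset.sum_eq_zero_iff_of_nonneg hterm).1 hsum j (Finset.mem_univ j)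
  refine ⟨fun k => ?_, hσu, hslack⟩
  have hderiv := congrArg (fun p => eval u (pderiv k p)) hcert
  simp only [map_sub, map_add, map_sum, pderiv_C, sub_zero] at hderiv
  simp only [hderiv, eval_pderiv_eq_zero_of_isSumSq hσ0.isSumSq hσ0u, add_zero,
    eval_pderiv_mul_of_eval_eq_zero (hh _),
    eval_pderiv_mul_of_isSumSq (hσ _).isSumSq (hslack _)]
end
end

section
/- Let h = (h_1,…,h_{m1}) and g = (g_1,…,g_{m2}) be real polynomials in x = (x_1,…,x_n), and let f ∈ ℝ[x]. Suppose there exist σ₁ ∈ Q(g), a positive integer ℓ, and an SOS polynomial σ₂ such that (f − σ₁)^{2ℓ} + σ₂ belongs to the ideal ⟨h⟩. Then there exists k₀ ∈ ℕ such that for every ε > 0, f + ε ∈ ⟨h⟩_{2k₀} + Q_{k₀}(g). -/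
open MvPolynomial

noncomputable section

/-- The truncated ideal `⟨h⟩_{2k}`. -/
def truncIdeal {n m1 : ℕ} (h : Fin m1 → MvPolynomial (Fin n) ℝ) (k : ℕ) :
    Set (MvPolynomial (Fin n) ℝ) :=
  { p | ∃ φ : Fin m1 → MvPolynomial (Fin n) ℝ,
      (∀ i, (φ i * h i).totalDegree ≤ 2 * k) ∧ p = ∑ i, φ i * h i }

/-- The truncated quadratic module `Q_k(g)` (with `g₀ = 1`). -/
def truncQM {n m2 : ℕ} (g : Fin m2 → MvPolynomial (Fin n) ℝ) (k : ℕ) :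
    Set (MvPolynomial (Fin n) ℝ) :=
  { p | ∃ (σ0 : MvPolynomial (Fin n) ℝ) (σ : Fin m2 → MvPolynomial (Fin n) ℝ),
      IsSOS σ0 ∧ (∀ j, IsSOS (σ j)) ∧
      σ0.totalDegree ≤ 2 * k ∧ (∀ j, (σ j * g j).totalDegree ≤ 2 * k) ∧
      p = σ0 + ∑ j, σ j * g j }

/-!
Write `t = f - σ₁`. Completing squares `m` times shows that for every `ε > 0` there is `λ > 0`
with `ε + t + λ t^(2^(m+1))` SOS; the bound on `λ` grows as `ε → 0`, but the degree of this
polynomial does not depend on `ε`. Multiplying the hypothesis by `t^(2e)`, where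
`2ℓ + 2e = 2^(ℓ+1)`, turns it into `t^(2^(ℓ+1)) + σ ∈ ⟨h⟩` with `σ` SOS, and then
`f + ε = -λ (t^(2^(ℓ+1)) + σ) + (σ₁ + (ε + t + λ t^(2^(ℓ+1))) + λ σ)`,
where every summand has degree bounded independently of `ε`.
-/

section SOS

variable {n : ℕ}

theorem IsSOS.add {p q : MvPolynomial (Fin n) ℝ} (hp : IsSOS p) (hq : IsSOS q) :
    IsSOS (p + q) := by
  obtain ⟨k₁, u, rfl⟩ := hp
  obtain ⟨k₂, v, rfl⟩ := hq
  refine ⟨k₁ + k₂, Fin.append u v, ?_⟩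
  simp [Fin.sum_univ_add]

theorem isSOS_sq (r : MvPolynomial (Fin n) ℝ) : IsSOS (r ^ 2) :=
  ⟨1, fun _ => r, by simp⟩

theorem IsSOS.sq_mul {p : MvPolynomial (Fin n) ℝ} (hp : IsSOS p) (s : MvPolynomial (Fin n) ℝ) :
    IsSOS (s ^ 2 * p) := by
  obtain ⟨k, u, rfl⟩ := hp
  exact ⟨k, fun i => s * u i, by simp [Finset.mul_sum, mul_pow]⟩

theorem IsSOS.C_mul {p : MvPolynomial (Fin n) ℝ} (hp : IsSOS p) {c : ℝ} (hc : 0 ≤ c) :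
    IsSOS (C c * p) := by
  rw [← Real.sq_sqrt hc, C_pow]
  exact hp.sq_mul _

theorem isSOS_C_add_C_mul_add_C_mul_sq {ε : ℝ} (hε : 0 < ε) (c : ℝ) (r : MvPolynomial (Fin n) ℝ) :
    IsSOS (C ε + C c * r + C (c ^ 2 / (4 * ε)) * r ^ 2) := by
  obtain ⟨a, ha₀, rfl⟩ : ∃ a : ℝ, a ≠ 0 ∧ ε = a ^ 2 :=
    ⟨√ε, (Real.sqrt_pos.2 hε).ne', (Real.sq_sqrt hε.le).symm⟩
  obtain ⟨b, rfl⟩ : ∃ b, c = 2 * a * b := ⟨c / (2 * a), by field_simp⟩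
  have hb : (2 * a * b) ^ 2 / (4 * a ^ 2) = b ^ 2 := by field_simp; ring
  rw [hb]
  convert isSOS_sq (C a + C b * r) using 1
  simp only [map_mul, map_pow, map_ofNat]
  ring

theorem exists_isSOS_C_add_add_C_mul_pow_two_pow (m : ℕ) (q : MvPolynomial (Fin n) ℝ) {ε : ℝ}
    (hε : 0 < ε) : ∃ lam : ℝ, 0 < lam ∧ IsSOS (C ε + q + C lam * q ^ 2 ^ (m + 1)) := by
  induction m generalizing ε with
  | zero =>
    refine ⟨1 ^ 2 / (4 * ε), by positivity, ?_⟩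
    simpa using isSOS_C_add_C_mul_add_C_mul_sq hε 1 q
  | succ m ih =>
    obtain ⟨lam, hlam, hsos⟩ := ih (half_pos hε)
    refine ⟨(-lam) ^ 2 / (4 * (ε / 2)), by rw [neg_sq]; positivity, ?_⟩
    have hsq := isSOS_C_add_C_mul_add_C_mul_sq (half_pos hε) (-lam) (q ^ 2 ^ (m + 1))
    convert hsos.add hsq using 1
    nth_rw 1 [← add_halves ε]
    rw [C_add, ← pow_mul, ← pow_succ, map_neg]
    ring

end SOS

theorem exists_isSOS_pow_two_pow_add_mem {n : ℕ} {I : Ideal (MvPolynomial (Fin n) ℝ)}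
    {t σ : MvPolynomial (Fin n) ℝ} {ℓ : ℕ} (hσ : IsSOS σ) (hmem : t ^ (2 * ℓ) + σ ∈ I) :
    ∃ σ' : MvPolynomial (Fin n) ℝ, IsSOS σ' ∧ t ^ 2 ^ (ℓ + 1) + σ' ∈ I := by
  obtain ⟨e, he⟩ : ∃ e, 2 ^ ℓ = ℓ + e := Nat.exists_eq_add_of_le (Nat.lt_two_pow_self).le
  refine ⟨(t ^ e) ^ 2 * σ, hσ.sq_mul _, ?_⟩
  convert I.mul_mem_left ((t ^ e) ^ 2) hmem using 1
  rw [pow_succ, he, mul_add, ← pow_mul, ← pow_add]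
  ring_nf

theorem MvPolynomial.totalDegree_C_mul_le {σ R : Type*} [CommSemiring R] (c : R)
    (p : MvPolynomial σ R) : (C c * p).totalDegree ≤ p.totalDegree := by
  simpa using totalDegree_mul (C c) p

theorem MvPolynomial.totalDegree_C_add_add_C_mul_pow_le {σ R : Type*} [CommSemiring R]
    (a b : R) (p : MvPolynomial σ R) {N : ℕ} (hN : 1 ≤ N) :
    (C a + p + C b * p ^ N).totalDegree ≤ N * p.totalDegree := by
  refine (totalDegree_add _ _).trans (max_le ((totalDegree_add _ _).trans (max_le ?_ ?_)) ?_)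
  · simp
  · exact Nat.le_mul_of_pos_left _ hN
  · exact (totalDegree_C_mul_le _ _).trans (totalDegree_pow _ _)

section Truncation

variable {n m1 m2 : ℕ}

theorem truncIdeal_mono {h : Fin m1 → MvPolynomial (Fin n) ℝ} {k k' : ℕ} (hk : k ≤ k') :
    truncIdeal h k ⊆ truncIdeal h k' := by
  rintro p ⟨φ, hφ, rfl⟩
  exact ⟨φ, fun i => (hφ i).trans (by omega), rfl⟩

theorem truncQM_mono {g : Fin m2 → MvPolynomial (Fin n) ℝ} {k k' : ℕ} (hk : k ≤ k') :
    truncQM g k ⊆ truncQM g k' := by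
  rintro p ⟨σ₀, σ, hσ₀, hσ, hdeg₀, hdeg, rfl⟩
  exact ⟨σ₀, σ, hσ₀, hσ, hdeg₀.trans (by omega), fun j => (hdeg j).trans (by omega), rfl⟩

theorem exists_forall_C_mul_mem_truncIdeal {h : Fin m1 → MvPolynomial (Fin n) ℝ}
    {p : MvPolynomial (Fin n) ℝ} (hp : p ∈ Ideal.span (Set.range h)) :
    ∃ k, ∀ c : ℝ, C c * p ∈ truncIdeal h k := by
  obtain ⟨φ, rfl⟩ := Ideal.mem_span_range_iff_exists_fun.1 hp
  set d := Finset.univ.sup fun i => (φ i * h i).totalDegree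
  refine ⟨d, fun c => ⟨fun i => C c * φ i, fun i => ?_, by simp [Finset.mul_sum, mul_assoc]⟩⟩
  calc (C c * φ i * h i).totalDegree ≤ (φ i * h i).totalDegree := by
        rw [mul_assoc]; exact totalDegree_C_mul_le _ _
    _ ≤ d := Finset.le_sup (f := fun i => (φ i * h i).totalDegree) (Finset.mem_univ i)
    _ ≤ 2 * d := by omega

theorem exists_mem_truncQM_of_mem_QM {g : Fin m2 → MvPolynomial (Fin n) ℝ}
    {p : MvPolynomial (Fin n) ℝ} (hp : p ∈ QM g) : ∃ k, p ∈ truncQM g k := by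
  obtain ⟨σ₀, σ, hσ₀, hσ, rfl⟩ := hp
  set d := Finset.univ.sup fun j => (σ j * g j).totalDegree
  refine ⟨σ₀.totalDegree + d, σ₀, σ, hσ₀, hσ, by omega, fun j => ?_, rfl⟩
  have := Finset.le_sup (f := fun j => (σ j * g j).totalDegree) (Finset.mem_univ j)
  omega

theorem IsSOS.add_mem_truncQM {g : Fin m2 → MvPolynomial (Fin n) ℝ} {k : ℕ}
    {p q : MvPolynomial (Fin n) ℝ} (hq : IsSOS q) (hdeg : q.totalDegree ≤ 2 * k)
    (hp : p ∈ truncQM g k) : q + p ∈ truncQM g k := by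
  obtain ⟨σ₀, σ, hσ₀, hσ, hdeg₀, hdegσ, rfl⟩ := hp
  exact ⟨q + σ₀, σ, hq.add hσ₀, hσ, (totalDegree_add _ _).trans (max_le hdeg hdeg₀), hdegσ,
    (add_assoc _ _ _).symm⟩

end Truncation

theorem perturbed_membership_of_power_in_ideal_general {n m1 m2 : ℕ}
    (f : MvPolynomial (Fin n) ℝ)
    (h : Fin m1 → MvPolynomial (Fin n) ℝ) (g : Fin m2 → MvPolynomial (Fin n) ℝ)
    (σ1 : MvPolynomial (Fin n) ℝ) (hσ1 : σ1 ∈ QM g)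
    (ℓ : ℕ)
    (σ2 : MvPolynomial (Fin n) ℝ) (hσ2 : IsSOS σ2)
    (hmem : (f - σ1) ^ (2 * ℓ) + σ2 ∈ Ideal.span (Set.range h)) :
    ∃ k0 : ℕ, ∀ ε : ℝ, 0 < ε →
      ∃ a ∈ truncIdeal h k0, ∃ b ∈ truncQM g k0, f + C ε = a + b := by
  set t := f - σ1
  set N := 2 ^ (ℓ + 1)
  obtain ⟨σ, hσ, hmemN⟩ := exists_isSOS_pow_two_pow_add_mem hσ2 hmem
  obtain ⟨kI, hkI⟩ := exists_forall_C_mul_mem_truncIdeal hmemN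
  obtain ⟨kQ, hkQ⟩ := exists_mem_truncQM_of_mem_QM hσ1
  refine ⟨kI + kQ + (N * t.totalDegree + σ.totalDegree), fun ε hε => ?_⟩
  obtain ⟨lam, hlam, hθ⟩ := exists_isSOS_C_add_add_C_mul_pow_two_pow ℓ t hε
  have hdeg : (C ε + t + C lam * t ^ N + C lam * σ).totalDegree ≤
      N * t.totalDegree + σ.totalDegree := by
    have := totalDegree_C_add_add_C_mul_pow_le ε lam t (N := N) Nat.one_le_two_pow
    have := totalDegree_C_mul_le lam σ
    have := totalDegree_add (C ε + t + C lam * t ^ N) (C lam * σ)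
    omega
  refine ⟨C (-lam) * (t ^ N + σ), truncIdeal_mono (by omega) (hkI _), _,
    (hθ.add (hσ.C_mul hlam.le)).add_mem_truncQM (hdeg.trans (by omega))
      (truncQM_mono (by omega) hkQ), ?_⟩
  simp only [t, map_neg]
  ring

/-- If there exist `σ₁ ∈ Q(g)`, `ℓ ≥ 1` and an SOS polynomial `σ₂` with
`(f − σ₁)^{2ℓ} + σ₂ ∈ ⟨h⟩`, then there is `k₀` such that
`f + ε ∈ ⟨h⟩_{2k₀} + Q_{k₀}(g)` for every `ε > 0`. -/
theorem perturbed_membership_of_power_in_ideal {n m1 m2 : ℕ}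
    (f : MvPolynomial (Fin n) ℝ)
    (h : Fin m1 → MvPolynomial (Fin n) ℝ) (g : Fin m2 → MvPolynomial (Fin n) ℝ)
    (σ1 : MvPolynomial (Fin n) ℝ) (hσ1 : σ1 ∈ QM g)
    (ℓ : ℕ) (hℓ : 0 < ℓ)
    (σ2 : MvPolynomial (Fin n) ℝ) (hσ2 : IsSOS σ2)
    (hmem : (f - σ1) ^ (2 * ℓ) + σ2 ∈ Ideal.span (Set.range h)) :
    ∃ k0 : ℕ, ∀ ε : ℝ, 0 < ε →
      ∃ a ∈ truncIdeal h k0, ∃ b ∈ truncQM g k0, f + C ε = a + b :=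
  perturbed_membership_of_power_in_ideal_general f h g σ1 hσ1 ℓ σ2 hσ2 hmem
end
end

section
/- Let u ∈ K be a local minimizer of f over K = {x ∈ ℝⁿ : h_i(x) = 0 (i ≤ m1), g_j(x) ≥ 0 (j ≤ m2)}, where f, h_i, g_j ∈ ℝ[x_1,…,x_n]. Let λ ∈ ℝ^{m1}, μ ∈ ℝ^{m2} satisfy ∇f(u) = Σ_i λ_i ∇h_i(u) + Σ_j μ_j ∇g_j(u), μ_j g_j(u) = 0 and μ_j ≥ 0 for all j. Let J(u) = {j_1,…,j_r} be the active set {j : g_j(u) = 0}, let L(x) = f(x) − Σ_i λ_i h_i(x) − Σ_{j∈J(u)} μ_j g_j(x), let G(u) be the (m1+r)×n matrix whose rows are ∇h_1(u),…,∇h_{m1}(u), ∇g_{j_1}(u),…,∇g_{j_r}(u), and let H(u) be the (n+m1+r)×(n+m1+r) block matrix [[∇²L(u), G(u)ᵀ],[G(u), 0]]. If G(u) has full row rank m1+r, then the second order sufficiency condition (vᵀ∇²L(u)v > 0 for every nonzero v with G(u)v = 0) holds at u if and only if det H(u) ≠ 0. -/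
/-!
Write `A = ∇²L(u)` and `H = [[A, Gᵀ], [G, 0]]`; `H` is singular iff some `(v, y) ≠ 0` has
`A v + Gᵀ y = 0` and `G v = 0`, and then `vᵀ A v = -(G v)ᵀ y = 0`. If `A` is positive definite
on `ker G` this forces `v = 0`, and then `y = 0` because `Gᵀ` is injective.

Conversely, `A` is always positive semidefinite on `ker G`: by the implicit function theorem every
`w ∈ ker G` is the velocity of a curve through `u` on which the active constraints vanish; on it
`L = f`, the curve stays in `K` near `u`, and `∇L(u) = 0`, so second order Taylor expansion of `L`
along the curve gives `wᵀ A w ≥ 0`. An isotropic `v ∈ ker G` therefore minimises the form on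
`ker G`, so `A v ⊥ ker G`, i.e. `A v = Gᵀ y` for some `y`, and `(v, -y)` is a kernel vector of `H`.
-/

open MvPolynomial Matrix
open scoped Matrix Classical

noncomputable section

/-- The gradient of a polynomial at a point. -/
def gradAt {n : ℕ} (p : MvPolynomial (Fin n) ℝ) (u : Fin n → ℝ) : Fin n → ℝ :=
  fun i => eval u (pderiv i p)

/-- The Hessian matrix of a polynomial at a point. -/
def hessAt {n : ℕ} (p : MvPolynomial (Fin n) ℝ) (u : Fin n → ℝ) :
    Matrix (Fin n) (Fin n) ℝ :=
  Matrix.of fun i j => eval u (pderiv i (pderiv j p))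

open Filter Asymptotics
open scoped Topology

section SecondOrder

variable {E F : Type*} [NormedAddCommGroup E] [NormedSpace ℝ E]
  [NormedAddCommGroup F] [NormedSpace ℝ F]

theorem isLittleO_taylor_two {f : E → F} {f' : E → E →L[ℝ] F} {f'' : E →L[ℝ] E →L[ℝ] F}
    {x : E} (hf : ∀ᶠ y in 𝓝 x, HasFDerivAt f (f' y) y) (hf' : HasFDerivAt f' f'' x) :
    (fun e => f (x + e) - f x - f' x e - (2 : ℝ)⁻¹ • f'' e e) =o[𝓝 0]
      fun e => ‖e‖ ^ 2 := by
  set g : E → F := fun e => f (x + e) - f x - f' x e - (2 : ℝ)⁻¹ • f'' e e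
  have hsymm : ∀ v w, f'' v w = f'' w v := second_derivative_symmetric_of_eventually hf hf'
  have hg : ∀ᶠ e in 𝓝 0, HasFDerivAt g (f' (x + e) - f' x - f'' e) e := by
    have hf0 : ∀ᶠ e in 𝓝 (0 : E), HasFDerivAt f (f' (x + e)) (x + e) := by
      simpa using ((continuous_const_add x).tendsto' 0 x (add_zero x)).eventually hf
    filter_upwards [hf0] with e he
    have hq : HasFDerivAt (fun e => f'' e e) (f'' e + f''.flip e) e := by
      simpa using f''.hasFDerivAt.clm_apply (hasFDerivAt_id e)
    convert (((he.comp e ((hasFDerivAt_id e).const_add x)).sub_const (f x)).sub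
      (f' x).hasFDerivAt).sub (hq.const_smul (2 : ℝ)⁻¹) using 1
    · rfl
    · ext v
      simp only [_root_.sub_apply, ContinuousLinearMap.comp_id, smul_add, _root_.add_apply,
        _root_.smul_apply, ContinuousLinearMap.flip_apply, hsymm v e, sub_right_inj]
      module
  -- `g' e = o(‖e‖)`, so the mean value inequality on `closedBall 0 ‖e‖` gives `‖g e‖ ≤ ε ‖e‖²`
  rw [isLittleO_iff]
  intro ε hε
  have hd := (hasFDerivAt_iff_isLittleO_nhds_zero.1 hf').def hε
  obtain ⟨r, hr, hball⟩ := Metric.eventually_nhds_iff_ball.1 (hg.and hd)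
  filter_upwards [Metric.ball_mem_nhds 0 hr] with e he
  have hsub : Metric.closedBall (0 : E) ‖e‖ ⊆ Metric.ball 0 r := fun y hy =>
    mem_ball_zero_iff.2 ((mem_closedBall_zero_iff.1 hy).trans_lt (mem_ball_zero_iff.1 he))
  have hmv := (convex_closedBall (0 : E) ‖e‖).norm_image_sub_le_of_norm_hasFDerivWithin_le
    (f := g) (C := ε * ‖e‖) (x := 0) (y := e)
    (fun y hy => ((hball y (hsub hy)).1).hasFDerivWithinAt)
    (fun y (hy : y ∈ Metric.closedBall 0 ‖e‖) => ((hball y (hsub hy)).2).trans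
      (by gcongr; exact mem_closedBall_zero_iff.1 hy))
    (Metric.mem_closedBall_self (norm_nonneg e)) (by simp)
  have hg0 : g 0 = 0 := by simp [g]
  simpa [hg0, sq, mul_assoc] using hmv

theorem IsLocalMin.hessian_nonneg_of_hasDerivAt {f : E → ℝ} {f' : E → E →L[ℝ] ℝ}
    {f'' : E →L[ℝ] E →L[ℝ] ℝ} {u w : E} {x : ℝ → E}
    (hf : ∀ᶠ y in 𝓝 u, HasFDerivAt f (f' y) y) (hf' : HasFDerivAt f' f'' u) (hcrit : f' u = 0)
    (hx : HasDerivAt x w 0) (hx0 : x 0 = u) (hmin : IsLocalMin (f ∘ x) 0) :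
    0 ≤ f'' w w := by
  set R : E → ℝ := fun e => f (u + e) - f u - f' u e - (2 : ℝ)⁻¹ • f'' e e
  set s : ℝ → E := slope x 0
  have hs : Tendsto s (𝓝[≠] 0) (𝓝 w) := hasDerivAt_iff_tendsto_slope.1 hx
  have hxs : ∀ t, x t = u + t • s t := fun t => by
    have := sub_smul_slope x 0 t
    rw [sub_zero] at this
    rw [this, hx0, vsub_eq_sub, add_sub_cancel]
  have hd : Tendsto (fun t => t • s t) (𝓝[≠] 0) (𝓝 0) := by
    simpa using (tendsto_nhdsWithin_of_tendsto_nhds tendsto_id).smul hs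
  have hRd : (fun t => R (t • s t)) =o[𝓝[≠] 0] fun t => t ^ 2 := by
    have hbdd : (fun t => ‖s t‖ ^ 2) =O[𝓝[≠] 0] fun _ => (1 : ℝ) :=
      (hs.norm.pow 2).isBigO_one ℝ
    refine ((isLittleO_taylor_two hf hf').comp_tendsto hd).trans_isBigO ?_
    simpa [Function.comp_def, norm_smul, mul_pow] using
      (isBigO_refl (fun t : ℝ => t ^ 2) _).mul hbdd
  -- as `x t = u + t • s t` and `f' u = 0`, `(f (x t) - f u) / t ^ 2` is the function below
  have hlim : Tendsto (fun t => (2 : ℝ)⁻¹ * f'' (s t) (s t) + R (t • s t) / t ^ 2)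
      (𝓝[≠] 0) (𝓝 ((2 : ℝ)⁻¹ * f'' w w + 0)) := by
    have hQ : Continuous fun v => f'' v v := by fun_prop
    exact ((hQ.tendsto w).comp hs).const_mul _ |>.add hRd.tendsto_div_nhds_zero
  have hpos : ∀ᶠ t in 𝓝[≠] 0, 0 ≤ (2 : ℝ)⁻¹ * f'' (s t) (s t) + R (t • s t) / t ^ 2 := by
    filter_upwards [nhdsWithin_le_nhds hmin, self_mem_nhdsWithin] with t ht (ht0 : t ≠ 0)
    have : f (x t) - f u = t ^ 2 * ((2 : ℝ)⁻¹ * f'' (s t) (s t) + R (t • s t) / t ^ 2) := by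
      simp only [hxs, hcrit, _root_.zero_apply, sub_zero, smul_eq_mul, map_smul,
        _root_.smul_apply, R]
      field_simp
      ring
    simp only [Function.comp_apply, hx0] at ht
    nlinarith [sq_pos_of_ne_zero ht0]
  linarith [ge_of_tendsto hlim hpos]

end SecondOrder

theorem HasStrictFDerivAt.exists_tangent_curve {E F : Type*} [NormedAddCommGroup E]
    [NormedSpace ℝ E] [CompleteSpace E] [NormedAddCommGroup F] [NormedSpace ℝ F]
    [FiniteDimensional ℝ F] {c : E → F} {c' : E →L[ℝ] F} {u w : E}
    (hc : HasStrictFDerivAt c c' u) (hc' : c'.range = ⊤) (hw : c' w = 0) :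
    ∃ x : ℝ → E, x 0 = u ∧ HasDerivAt x w 0 ∧ ∀ᶠ t in 𝓝 0, c (x t) = c u := by
  set w₀ : c'.ker := ⟨w, hw⟩
  set φ := hc.implicitFunction c c' hc' (c u)
  have hline : HasDerivAt (fun t : ℝ => t • w₀) w₀ 0 := by
    simpa using (hasDerivAt_id (0 : ℝ)).smul_const w₀
  refine ⟨fun t => φ (t • w₀), by simp [φ], ?_, ?_⟩
  · have hφ : HasFDerivAt φ (c'.ker.subtypeL) ((0 : ℝ) • w₀) := by
      simpa using (hc.to_implicitFunction hc').hasFDerivAt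
    simpa [Function.comp_def, w₀] using hφ.comp_hasDerivAt (0 : ℝ) hline
  · have hpair : Tendsto (fun t : ℝ => (c u, t • w₀)) (𝓝 0) (𝓝 (c u, 0)) :=
      tendsto_const_nhds.prodMk_nhds (by simpa using hline.continuousAt.tendsto)
    exact hpair.eventually (hc.map_implicitFunction_eq hc')

theorem MvPolynomial.pderiv_pderiv_comm {R σ : Type*} [CommRing R] (i j : σ)
    (p : MvPolynomial σ R) : pderiv i (pderiv j p) = pderiv j (pderiv i p) := by
  classical
  -- the commutator of two derivations is a derivation, and this one vanishes on every `X k`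
  have h : ⁅pderiv i, pderiv j⁆ = (0 : Derivation R (MvPolynomial σ R) (MvPolynomial σ R)) :=
    derivation_ext fun k => by
      rw [Derivation.commutator_apply]
      simp only [pderiv_X, Pi.single_apply]
      split_ifs <;> simp
  have := congr($h p)
  rw [Derivation.commutator_apply] at this
  exact sub_eq_zero.1 this

section PolynomialCalculus

variable {n : ℕ} (p : MvPolynomial (Fin n) ℝ) (u : Fin n → ℝ)

theorem hessAt_transpose : (hessAt p u)ᵀ = hessAt p u := by
  ext i j
  simp [hessAt, pderiv_pderiv_comm i j]

theorem gradAt_add (q : MvPolynomial (Fin n) ℝ) :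
    gradAt (p + q) u = gradAt p u + gradAt q u := by
  ext k
  simp [gradAt]

theorem gradAt_mul_X (i : Fin n) :
    gradAt (p * X i) u = u i • gradAt p u + eval u p • Pi.single i 1 := by
  ext k
  rcases eq_or_ne i k with rfl | hik
  · simp only [gradAt, Derivation.leibniz, pderiv_X, Pi.single_eq_same, smul_eq_mul, mul_one,
      map_add, map_mul, eval_X, Pi.add_apply, Pi.smul_apply]
    ring
  · simp [gradAt, hik]

def gradCLM : (Fin n → ℝ) →L[ℝ] ℝ := ∑ i, gradAt p u i • ContinuousLinearMap.proj i

@[simp] theorem gradCLM_apply (e : Fin n → ℝ) : gradCLM p u e = gradAt p u ⬝ᵥ e := by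
  simp [gradCLM, dotProduct]

theorem hasStrictFDerivAt_eval : HasStrictFDerivAt (fun x => eval x p) (gradCLM p u) u := by
  induction p using MvPolynomial.induction_on with
  | C a =>
    simp only [eval_C]
    refine (hasStrictFDerivAt_const (𝕜 := ℝ) a u).congr_fderiv ?_
    ext e
    simp [gradAt, dotProduct]
  | add p q hp hq =>
    simp only [map_add]
    refine (hp.fun_add hq).congr_fderiv ?_
    ext e
    simp [gradAt_add, add_dotProduct]
  | mul_X p i hp =>
    simp only [map_mul, eval_X]
    refine (hp.fun_mul (hasStrictFDerivAt_apply i u)).congr_fderiv ?_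
    ext e
    simp only [_root_.add_apply, _root_.smul_apply, ContinuousLinearMap.proj_apply, smul_eq_mul,
      gradCLM_apply, gradAt_mul_X, add_dotProduct, smul_dotProduct, single_dotProduct, one_mul]
    ring

def hessCLM : (Fin n → ℝ) →L[ℝ] (Fin n → ℝ) →L[ℝ] ℝ :=
  ∑ i, (gradCLM (pderiv i p) u).smulRight (ContinuousLinearMap.proj i)

theorem hasFDerivAt_gradCLM : HasFDerivAt (fun y => gradCLM p y) (hessCLM p u) u := by
  unfold gradCLM hessCLM
  exact HasFDerivAt.fun_sum fun i _ =>
    (hasStrictFDerivAt_eval (pderiv i p) u).hasFDerivAt.smul_const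
      (ContinuousLinearMap.proj (R := ℝ) (φ := fun _ : Fin n => ℝ) i)

theorem hessCLM_apply_self (e : Fin n → ℝ) : hessCLM p u e e = e ⬝ᵥ hessAt p u *ᵥ e := by
  simp only [hessCLM, _root_.sum_apply, ContinuousLinearMap.smulRight_apply, gradCLM_apply,
    dotProduct, gradAt, _root_.smul_apply, ContinuousLinearMap.proj_apply, smul_eq_mul, mulVec,
    hessAt, of_apply, Finset.mul_sum]
  simp_rw [Finset.sum_mul]
  rw [Finset.sum_comm]
  exact Finset.sum_congr rfl fun i _ => Finset.sum_congr rfl fun j _ => by ring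

end PolynomialCalculus

namespace Matrix

theorem fromBlocks_transpose_mulVec_eq_zero_iff {R m n : Type*} [CommSemiring R] [Fintype m]
    [Fintype n] {A : Matrix n n R} {G : Matrix m n R} {v : n → R} {y : m → R} :
    fromBlocks A Gᵀ G 0 *ᵥ Sum.elim v y = 0 ↔ A *ᵥ v + Gᵀ *ᵥ y = 0 ∧ G *ᵥ v = 0 := by
  simp [fromBlocks_mulVec, funext_iff, Sum.forall, Function.comp_def]

section Isotropic

variable {𝕜 n : Type*} [Field 𝕜] [LinearOrder 𝕜] [IsStrictOrderedRing 𝕜] [Fintype n]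
  {A : Matrix n n 𝕜}

theorem mulVec_dotProduct_eq_zero_of_isotropic (hA : Aᵀ = A) {S : Submodule 𝕜 (n → 𝕜)}
    (hpsd : ∀ z ∈ S, 0 ≤ z ⬝ᵥ A *ᵥ z) {v z : n → 𝕜} (hv : v ∈ S) (hvv : v ⬝ᵥ A *ᵥ v = 0)
    (hz : z ∈ S) : (A *ᵥ v) ⬝ᵥ z = 0 := by
  have hsymm : ∀ a b, a ⬝ᵥ A *ᵥ b = b ⬝ᵥ A *ᵥ a := fun a b => by
    rw [← dotProduct_transpose_mulVec, hA]
  have hquad : ∀ s : 𝕜, 0 ≤ (z ⬝ᵥ A *ᵥ z) * (s * s) + 2 * (v ⬝ᵥ A *ᵥ z) * s + 0 := fun s => by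
    have h := hpsd (v + s • z) (S.add_mem hv (S.smul_mem s hz))
    simp only [mulVec_add, mulVec_smul, dotProduct_add, add_dotProduct, dotProduct_smul,
      smul_dotProduct, smul_eq_mul, hvv, hsymm z v] at h
    linarith
  have hdisc := discrim_le_zero hquad
  rw [discrim] at hdisc
  have hb : v ⬝ᵥ A *ᵥ z = 0 := by nlinarith [sq_nonneg (v ⬝ᵥ A *ᵥ z)]
  rw [dotProduct_comm, hsymm, hb]

end Isotropic

variable {𝕜 m n : Type*} [Field 𝕜] [LinearOrder 𝕜] [IsStrictOrderedRing 𝕜] [Fintype m]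
  [Fintype n] [DecidableEq m] {G : Matrix m n 𝕜}

theorem mulVec_mul_transpose_surjective (hG : LinearIndependent 𝕜 G) :
    Function.Surjective (G * Gᵀ).mulVec := by
  have hker : LinearMap.ker (G * Gᵀ).mulVecLin = ⊥ := by
    have h := ker_mulVecLin_transpose_mul_self Gᵀ
    rw [transpose_transpose] at h
    rw [h, ker_mulVecLin_eq_bot_iff]
    intro y hy
    refine vecMul_injective_iff.2 hG ?_
    simpa [mulVec_transpose] using hy
  exact mulVec_surjective_iff_isUnit.2
    (mulVec_injective_iff_isUnit.1 (LinearMap.ker_eq_bot.1 hker))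

theorem mulVec_surjective_of_linearIndependent (hG : LinearIndependent 𝕜 G) :
    Function.Surjective G.mulVec := fun z => by
  obtain ⟨y, hy⟩ := mulVec_mul_transpose_surjective hG z
  exact ⟨Gᵀ *ᵥ y, by rwa [mulVec_mulVec]⟩

theorem exists_eq_transpose_mulVec_of_forall_dotProduct_eq_zero (hG : LinearIndependent 𝕜 G)
    {x : n → 𝕜} (hx : ∀ z, G *ᵥ z = 0 → x ⬝ᵥ z = 0) : ∃ y, x = Gᵀ *ᵥ y := by
  obtain ⟨y, hy⟩ := mulVec_mul_transpose_surjective hG (G *ᵥ x)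
  set z := x - Gᵀ *ᵥ y with hz_def
  have hz : G *ᵥ z = 0 := by
    rw [hz_def, mulVec_sub, mulVec_mulVec, hy, sub_self]
  have hzz : z ⬝ᵥ z = 0 := by
    nth_rw 1 [hz_def]
    rw [sub_dotProduct, hx z hz, mulVec_transpose, ← dotProduct_mulVec, hz, dotProduct_zero,
      sub_zero]
  exact ⟨y, sub_eq_zero.1 (dotProduct_self_eq_zero.1 hzz)⟩

theorem pos_on_ker_iff_det_fromBlocks_ne_zero [DecidableEq n] {A : Matrix n n 𝕜}
    (hA : Aᵀ = A) (hG : LinearIndependent 𝕜 G) (hpsd : ∀ v, G *ᵥ v = 0 → 0 ≤ v ⬝ᵥ A *ᵥ v) :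
    (∀ v, v ≠ 0 → G *ᵥ v = 0 → 0 < v ⬝ᵥ A *ᵥ v) ↔ (fromBlocks A Gᵀ G 0).det ≠ 0 := by
  rw [Ne, ← exists_mulVec_eq_zero_iff, not_exists]
  constructor
  · rintro hpos x ⟨hx0, hx⟩
    obtain ⟨v, y, rfl⟩ : ∃ v y, x = Sum.elim v y := ⟨_, _, (Sum.elim_comp_inl_inr x).symm⟩
    obtain ⟨hkkt, hGv⟩ := fromBlocks_transpose_mulVec_eq_zero_iff.1 hx
    have hvAv : v ⬝ᵥ A *ᵥ v = 0 := by
      rw [eq_neg_of_add_eq_zero_left hkkt, dotProduct_neg, dotProduct_transpose_mulVec, hGv,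
        dotProduct_zero, neg_zero]
    obtain rfl : v = 0 := by
      by_contra hv
      exact (hpos v hv hGv).ne' hvAv
    obtain rfl : y = 0 := by
      rw [mulVec_zero, zero_add, mulVec_transpose] at hkkt
      exact vecMul_injective_iff.2 hG (hkkt.trans (zero_vecMul G).symm)
    exact hx0 Sum.elim_zero_zero
  · intro hdet v hv0 hGv
    refine (hpsd v hGv).lt_of_ne fun hvAv => ?_
    obtain ⟨y, hy⟩ := exists_eq_transpose_mulVec_of_forall_dotProduct_eq_zero hG
      fun z hz => mulVec_dotProduct_eq_zero_of_isotropic hA (S := LinearMap.ker G.mulVecLin)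
        (fun z hz => hpsd z hz) hGv hvAv.symm hz
    refine hdet (Sum.elim v (-y))
      ⟨fun h => hv0 (by simpa using congr_arg (· ∘ Sum.inl) h), ?_⟩
    rw [fromBlocks_transpose_mulVec_eq_zero_iff, mulVec_neg, ← hy, add_neg_cancel]
    exact ⟨rfl, hGv⟩

end Matrix

theorem hessAt_nonneg_of_isLocalMinOn {n : ℕ} {ι : Type*} [Fintype ι]
    (L : MvPolynomial (Fin n) ℝ) (P : ι → MvPolynomial (Fin n) ℝ) {u : Fin n → ℝ}
    (hPu : ∀ r, eval u (P r) = 0) (hfull : LinearIndependent ℝ fun r => gradAt (P r) u)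
    (hcrit : gradAt L u = 0)
    (hmin : IsLocalMinOn (fun x => eval x L) {x | ∀ r, eval x (P r) = 0} u)
    {w : Fin n → ℝ} (hw : ∀ r, gradAt (P r) u ⬝ᵥ w = 0) :
    0 ≤ w ⬝ᵥ hessAt L u *ᵥ w := by
  set c' := ContinuousLinearMap.pi fun r => gradCLM (P r) u
  have hc : HasStrictFDerivAt (fun x r => eval x (P r)) c' u :=
    hasStrictFDerivAt_pi.2 fun r => hasStrictFDerivAt_eval (P r) u
  have hc' : c'.range = ⊤ := LinearMap.range_eq_top.2 fun z => by
    obtain ⟨e, he⟩ := mulVec_surjective_of_linearIndependent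
      (G := Matrix.of fun r => gradAt (P r) u) hfull z
    exact ⟨e, by rw [← he]; ext r; simp [c', mulVec]⟩
  obtain ⟨x, hx0, hx, hxP⟩ := hc.exists_tangent_curve hc' (by ext r; simpa [c'] using hw r)
  have hxmin : IsLocalMin ((fun x => eval x L) ∘ x) 0 := by
    have hxs : Tendsto x (𝓝 0) (𝓝[{x | ∀ r, eval x (P r) = 0}] u) := by
      refine tendsto_nhdsWithin_iff.2 ⟨hx0 ▸ hx.continuousAt.tendsto, ?_⟩
      filter_upwards [hxP] with t ht r
      rw [congr_fun ht r, hPu]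
    simpa [IsLocalMin, IsMinFilter, hx0] using hxs.eventually hmin
  have hcrit' : gradCLM L u = 0 := by ext e; simp [hcrit]
  simpa [hessCLM_apply_self] using
    hxmin.hessian_nonneg_of_hasDerivAt
      (Eventually.of_forall fun y => (hasStrictFDerivAt_eval L y).hasFDerivAt)
      (hasFDerivAt_gradCLM L u) hcrit' hx hx0

section Lagrangian

variable {n m1 m2 : ℕ} (f : MvPolynomial (Fin n) ℝ) (h : Fin m1 → MvPolynomial (Fin n) ℝ)
  (g : Fin m2 → MvPolynomial (Fin n) ℝ) (lam : Fin m1 → ℝ) (mu : Fin m2 → ℝ) (u : Fin n → ℝ)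

def lagrangian : MvPolynomial (Fin n) ℝ :=
  f - (∑ i, C (lam i) * h i)
    - ∑ j ∈ Finset.univ.filter (fun j : Fin m2 => eval u (g j) = 0), C (mu j) * g j

def feasibleSet : Set (Fin n → ℝ) :=
  {x | (∀ i, eval x (h i) = 0) ∧ ∀ j, 0 ≤ eval x (g j)}

def activeConstraints : Fin m1 ⊕ {j : Fin m2 // eval u (g j) = 0} → MvPolynomial (Fin n) ℝ :=
  Sum.elim h fun j => g j.1

theorem eval_activeConstraints_self (hu : u ∈ feasibleSet h g) :
    ∀ r, eval u (activeConstraints h g u r) = 0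
  | .inl i => hu.1 i
  | .inr j => j.2

theorem eval_lagrangian {x : Fin n → ℝ} (hx : ∀ r, eval x (activeConstraints h g u r) = 0) :
    eval x (lagrangian f h g lam mu u) = eval x f := by
  have hh : ∀ i, eval x (h i) = 0 := fun i => hx (Sum.inl i)
  have hg : ∀ j ∈ Finset.univ.filter (fun j : Fin m2 => eval u (g j) = 0), eval x (g j) = 0 :=
    fun j hj => hx (Sum.inr ⟨j, (Finset.mem_filter.1 hj).2⟩)
  simp only [lagrangian, eval_sub, eval_sum, eval_mul, eval_C, hh, mul_zero,
    Finset.sum_const_zero, sub_zero]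
  rw [Finset.sum_eq_zero fun j hj => by rw [hg j hj, mul_zero], sub_zero]

theorem gradAt_lagrangian_eq_zero
    (hfoc : ∀ k : Fin n, eval u (pderiv k f)
        = (∑ i, lam i * eval u (pderiv k (h i))) + ∑ j, mu j * eval u (pderiv k (g j)))
    (hcomp : ∀ j, mu j * eval u (g j) = 0) :
    gradAt (lagrangian f h g lam mu u) u = 0 := by
  ext k
  have hactive : ∑ j ∈ Finset.univ.filter (fun j : Fin m2 => eval u (g j) = 0),
      mu j * eval u (pderiv k (g j)) = ∑ j, mu j * eval u (pderiv k (g j)) :=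
    Finset.sum_filter_of_ne fun j _ hj => by
      contrapose! hj
      rw [(mul_eq_zero.1 (hcomp j)).resolve_right hj, zero_mul]
  simp [gradAt, lagrangian, hfoc k, hactive]

theorem isLocalMinOn_lagrangian (huK : u ∈ feasibleSet h g)
    (hmin : IsLocalMinOn (fun x => eval x f) (feasibleSet h g) u) :
    IsLocalMinOn (fun x => eval x (lagrangian f h g lam mu u))
      {x | ∀ r, eval x (activeConstraints h g u r) = 0} u := by
  have hinactive : ∀ᶠ x in 𝓝 u, ∀ j, eval u (g j) ≠ 0 → 0 < eval x (g j) :=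
    eventually_all.2 fun j => by
      by_cases hj : eval u (g j) = 0
      · exact Eventually.of_forall fun _ h => absurd hj h
      · exact ((continuous_eval (g j)).continuousAt.eventually
          (lt_mem_nhds ((huK.2 j).lt_of_ne' hj))).mono fun _ hx _ => hx
  filter_upwards [nhdsWithin_le_nhds (eventually_nhdsWithin_iff.1 hmin),
    nhdsWithin_le_nhds hinactive, self_mem_nhdsWithin] with x hfx hgx hx
  rw [eval_lagrangian f h g lam mu u hx,
    eval_lagrangian f h g lam mu u (eval_activeConstraints_self h g u huK)]
  refine hfx ⟨fun i => hx (Sum.inl i), fun j => ?_⟩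
  by_cases hj : eval u (g j) = 0
  · exact (hx (Sum.inr ⟨j, hj⟩)).ge
  · exact (hgx j hj).le

end Lagrangian

theorem sosc_iff_det_ne_zero_general {n m1 m2 : ℕ}
    (f : MvPolynomial (Fin n) ℝ)
    (h : Fin m1 → MvPolynomial (Fin n) ℝ) (g : Fin m2 → MvPolynomial (Fin n) ℝ)
    (K : Set (Fin n → ℝ))
    (hK : K = {x | (∀ i, eval x (h i) = 0) ∧ (∀ j, 0 ≤ eval x (g j))})
    (u : Fin n → ℝ) (huK : u ∈ K)
    (hmin : ∃ δ : ℝ, 0 < δ ∧ ∀ x ∈ K, dist x u < δ → eval u f ≤ eval x f)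
    (lam : Fin m1 → ℝ) (mu : Fin m2 → ℝ)
    (hfoc : ∀ k : Fin n, eval u (pderiv k f)
        = (∑ i, lam i * eval u (pderiv k (h i)))
          + ∑ j, mu j * eval u (pderiv k (g j)))
    (hcomp : ∀ j, mu j * eval u (g j) = 0)
    -- the Lagrange function `L = f − Σ λ_i h_i − Σ_{j ∈ J(u)} μ_j g_j`
    (L : MvPolynomial (Fin n) ℝ)
    (hL : L = f - (∑ i, C (lam i) * h i)
        - ∑ j ∈ Finset.univ.filter (fun j : Fin m2 => eval u (g j) = 0),
            C (mu j) * g j)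
    -- the Jacobian of the active constraints at `u`
    (G : Matrix (Fin m1 ⊕ {j : Fin m2 // eval u (g j) = 0}) (Fin n) ℝ)
    (hG : G = Matrix.of (Sum.elim (fun i => gradAt (h i) u)
        (fun j => gradAt (g j.1) u)))
    (hfull : LinearIndependent ℝ (fun r => G r)) :
    (∀ v : Fin n → ℝ, v ≠ 0 → G.mulVec v = 0 →
        0 < v ⬝ᵥ (hessAt L u).mulVec v) ↔
      (Matrix.fromBlocks (hessAt L u) Gᵀ G 0).det ≠ 0 := by
  subst hK hL hG
  obtain ⟨δ, hδ, hδmin⟩ := hmin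
  have hlocmin : IsLocalMinOn (fun x => eval x f) (feasibleSet h g) u :=
    eventually_nhdsWithin_iff.2 <|
      Metric.eventually_nhds_iff.2 ⟨δ, hδ, fun x hx hxK => hδmin x hxK hx⟩
  have hrows : ∀ r, gradAt (activeConstraints h g u r) u
      = Matrix.of (Sum.elim (fun i => gradAt (h i) u) (fun j => gradAt (g j.1) u)) r := by
    rintro (i | j) <;> rfl
  refine pos_on_ker_iff_det_fromBlocks_ne_zero (hessAt_transpose _ u) hfull fun w hw => ?_
  refine hessAt_nonneg_of_isLocalMinOn _ (activeConstraints h g u)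
    (eval_activeConstraints_self h g u huK) ?_
    (gradAt_lagrangian_eq_zero f h g lam mu u hfoc hcomp)
    (isLocalMinOn_lagrangian f h g lam mu u huK hlocmin) fun r => ?_
  · simpa only [hrows] using hfull
  · rw [hrows]
    exact congr_fun hw r

/-- Let `u` be a local minimizer of `f` over `K` and `λ, μ` Lagrange multipliers
satisfying the first order and complementarity conditions. With `L` the Lagrange
function, `G(u)` the Jacobian of the active constraints and
`H(u) = [[∇²L(u), G(u)ᵀ],[G(u), 0]]`: if `G(u)` has full row rank, then the
second order sufficiency condition holds at `u` if and only if `det H(u) ≠ 0`. -/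
theorem sosc_iff_det_ne_zero {n m1 m2 : ℕ}
    (f : MvPolynomial (Fin n) ℝ)
    (h : Fin m1 → MvPolynomial (Fin n) ℝ) (g : Fin m2 → MvPolynomial (Fin n) ℝ)
    (K : Set (Fin n → ℝ))
    (hK : K = {x | (∀ i, eval x (h i) = 0) ∧ (∀ j, 0 ≤ eval x (g j))})
    (u : Fin n → ℝ) (huK : u ∈ K)
    (hmin : ∃ δ : ℝ, 0 < δ ∧ ∀ x ∈ K, dist x u < δ → eval u f ≤ eval x f)
    (lam : Fin m1 → ℝ) (mu : Fin m2 → ℝ)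
    (hfoc : ∀ k : Fin n, eval u (pderiv k f)
        = (∑ i, lam i * eval u (pderiv k (h i)))
          + ∑ j, mu j * eval u (pderiv k (g j)))
    (hcomp : ∀ j, mu j * eval u (g j) = 0)
    (hmu : ∀ j, 0 ≤ mu j)
    -- the Lagrange function `L = f − Σ λ_i h_i − Σ_{j ∈ J(u)} μ_j g_j`
    (L : MvPolynomial (Fin n) ℝ)
    (hL : L = f - (∑ i, C (lam i) * h i)
        - ∑ j ∈ Finset.univ.filter (fun j : Fin m2 => eval u (g j) = 0),
            C (mu j) * g j)
    -- the Jacobian of the active constraints at `u`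
    (G : Matrix (Fin m1 ⊕ {j : Fin m2 // eval u (g j) = 0}) (Fin n) ℝ)
    (hG : G = Matrix.of (Sum.elim (fun i => gradAt (h i) u)
        (fun j => gradAt (g j.1) u)))
    (hfull : LinearIndependent ℝ (fun r => G r)) :
    (∀ v : Fin n → ℝ, v ≠ 0 → G.mulVec v = 0 →
        0 < v ⬝ᵥ (hessAt L u).mulVec v) ↔
      (Matrix.fromBlocks (hessAt L u) Gᵀ G 0).det ≠ 0 :=
  sosc_iff_det_ne_zero_general f h g K hK u huK hmin lam mu hfoc hcomp L hL G hG hfull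
end
end

section
/- Let A be a real symmetric n×n matrix and G a real m×n matrix. Suppose vᵀAv ≥ 0 for every v ∈ ℝⁿ with Gv = 0, and suppose the (n+m)×(n+m) block matrix H = [[A, Gᵀ],[G, 0]] is nonsingular. Then vᵀAv > 0 for every nonzero v ∈ ℝⁿ with Gv = 0. -/
/-!
If `v ∈ ker G` has `vᵀAv = 0`, then `v` minimises the quadratic form `xᵀAx` on `ker G`, so `Av`
is orthogonal to `ker G` and hence lies in the range of `Gᵀ`, say `Av = Gᵀu`. Then the block
matrix `H` sends `(v, -u)` to zero, and nonsingularity of `H` forces `v = 0`.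
-/

open Matrix

namespace Matrix

section Ordered

variable {K ι : Type*} [Field K] [LinearOrder K] [IsStrictOrderedRing K] [Fintype ι]

theorem IsSymm.dotProduct_mulVec_eq_zero_of_nonneg_on {A : Matrix ι ι K} (hA : A.IsSymm)
    {S : Submodule K (ι → K)} (hS : ∀ x ∈ S, 0 ≤ x ⬝ᵥ A *ᵥ x) {v : ι → K} (hv : v ∈ S)
    (hvv : v ⬝ᵥ A *ᵥ v = 0) {x : ι → K} (hx : x ∈ S) : x ⬝ᵥ A *ᵥ v = 0 := by
  have hcomm : v ⬝ᵥ A *ᵥ x = x ⬝ᵥ A *ᵥ v := by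
    rw [dotProduct_mulVec, ← mulVec_transpose, hA, dotProduct_comm]
  -- `t ↦ (v + t x)ᵀ A (v + t x)` is a nonnegative quadratic, so its discriminant `4 (xᵀAv)²` is `≤ 0`.
  have hquad : ∀ t : K, 0 ≤ (x ⬝ᵥ A *ᵥ x) * (t * t) + 2 * (x ⬝ᵥ A *ᵥ v) * t + 0 := fun t => by
    have := hS (v + t • x) (S.add_mem hv (S.smul_mem t hx))
    simp only [mulVec_add, mulVec_smul, dotProduct_add, add_dotProduct, dotProduct_smul,
      smul_dotProduct, smul_eq_mul, hvv, hcomm] at this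
    linarith
  have hdisc := discrim_le_zero hquad
  rw [discrim] at hdisc
  nlinarith [sq_nonneg (x ⬝ᵥ A *ᵥ v)]

end Ordered

variable {K m n : Type*} [Field K] [Fintype m] [Fintype n] [DecidableEq m] [DecidableEq n]

theorem exists_transpose_mulVec_eq_of_dotProduct_eq_zero (G : Matrix m n K) {w : n → K}
    (hw : ∀ x, G *ᵥ x = 0 → w ⬝ᵥ x = 0) : ∃ u, Gᵀ *ᵥ u = w := by
  have hmem : dotProductEquiv K n w ∈ (LinearMap.ker G.mulVecLin).dualAnnihilator :=
    (Submodule.mem_dualAnnihilator _).2 fun x hx => hw x hx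
  rw [← LinearMap.range_dualMap_eq_dualAnnihilator_ker] at hmem
  obtain ⟨φ, hφ⟩ := hmem
  obtain ⟨u, rfl⟩ := (dotProductEquiv K m).surjective φ
  refine ⟨u, (dotProductEquiv K n).injective (LinearMap.ext fun x => ?_)⟩
  rw [← hφ]
  simp only [dotProductEquiv_apply_apply, LinearMap.dualMap_apply, mulVecLin_apply,
    dotProduct_mulVec, vecMul_transpose, dotProduct_comm]

end Matrix

/-- If `A` is symmetric, `vᵀAv ≥ 0` for every `v` in the kernel of `G`, and the
block matrix `H = [[A, Gᵀ],[G, 0]]` is nonsingular, then `vᵀAv > 0` for every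
nonzero `v` in the kernel of `G`. -/
theorem posdef_on_kernel_of_block_matrix_nonsingular {n m : ℕ}
    (A : Matrix (Fin n) (Fin n) ℝ) (hA : A.IsSymm)
    (G : Matrix (Fin m) (Fin n) ℝ)
    (hnonneg : ∀ v : Fin n → ℝ, G.mulVec v = 0 → 0 ≤ v ⬝ᵥ A.mulVec v)
    (hdet : (Matrix.fromBlocks A Gᵀ G (0 : Matrix (Fin m) (Fin m) ℝ)).det ≠ 0) :
    ∀ v : Fin n → ℝ, v ≠ 0 → G.mulVec v = 0 → 0 < v ⬝ᵥ A.mulVec v := by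
  intro v hv hGv
  refine (hnonneg v hGv).lt_of_ne fun hvv => hv ?_
  have hAv_orth : ∀ x, G *ᵥ x = 0 → A *ᵥ v ⬝ᵥ x = 0 := fun x hx => by
    rw [dotProduct_comm]
    exact hA.dotProduct_mulVec_eq_zero_of_nonneg_on (S := LinearMap.ker G.mulVecLin)
      (fun y hy => hnonneg y hy) hGv hvv.symm hx
  obtain ⟨u, hu⟩ := G.exists_transpose_mulVec_eq_of_dotProduct_eq_zero hAv_orth
  have hH : fromBlocks A Gᵀ G 0 *ᵥ Sum.elim v (-u) = 0 := by
    ext (i | j) <;> simp [fromBlocks_mulVec, hu, hGv, mulVec_neg]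
  exact congrArg (· ∘ Sum.inl) (eq_zero_of_mulVec_eq_zero hdet hH)
end

section
/- Let A be a real symmetric n×n matrix and G a real m×n matrix. If vᵀAv > 0 for every nonzero v ∈ ℝⁿ with Gv = 0, then there exists η > 0 such that the matrix A + η·GᵀG is positive definite. -/
open Matrix
open scoped Matrix

/-!
On the unit sphere, which is compact, the open sets `{v | 0 < vᵀAv + η‖Gv‖²}` increase with `η`
and cover the sphere: where `Gv = 0` the form `vᵀAv` is already positive, elsewhere a large `η`
wins. So a single `η` works on the whole sphere, and homogeneity of quadratic forms extends
positivity to all nonzero vectors.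
-/

theorem IsCompact.exists_pos_forall_pos_add_mul {X : Type*} [TopologicalSpace X] {s : Set X}
    (hs : IsCompact s) {f g : X → ℝ} (hf : Continuous f) (hg : Continuous g)
    (hg_nonneg : ∀ x, 0 ≤ g x) (hfg : ∀ x ∈ s, g x = 0 → 0 < f x) :
    ∃ η : ℝ, 0 < η ∧ ∀ x ∈ s, 0 < f x + η * g x := by
  let U : ℕ → Set X := fun k => {x | 0 < f x + (k + 1) * g x}
  have hU_mono : Monotone U := fun k l hkl x (hx : 0 < f x + (k + 1) * g x) => by
    have : ((k : ℝ) + 1) * g x ≤ (l + 1) * g x :=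
      mul_le_mul_of_nonneg_right (by gcongr) (hg_nonneg x)
    show 0 < f x + (l + 1) * g x
    linarith
  have hsU : s ⊆ ⋃ k, U k := by
    intro x hx
    rw [Set.mem_iUnion]
    rcases (hg_nonneg x).eq_or_lt with hgx | hgx
    · exact ⟨0, by simpa [U, ← hgx] using hfg x hx hgx.symm⟩
    · obtain ⟨k, hk⟩ := exists_nat_gt (-f x / g x)
      have hkg := (div_lt_iff₀ hgx).1 hk
      exact ⟨k, show 0 < f x + (k + 1) * g x by nlinarith⟩
  obtain ⟨k, hk⟩ := hs.elim_directed_cover U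
    (fun k => isOpen_lt continuous_const (hf.add (continuous_const.mul hg))) hsU
    hU_mono.directed_le
  exact ⟨k + 1, by positivity, hk⟩

theorem Matrix.PosDef.of_dotProduct_mulVec_pos_on_sphere {ι : Type*} [Fintype ι]
    {M : Matrix ι ι ℝ} (hM : M.IsHermitian)
    (h : ∀ v ∈ Metric.sphere (0 : ι → ℝ) 1, 0 < v ⬝ᵥ M *ᵥ v) : M.PosDef := by
  refine .of_dotProduct_mulVec_pos hM fun v hv => ?_
  have hnorm : 0 < ‖v‖ := norm_pos_iff.2 hv
  have hunit : ‖v‖⁻¹ • v ∈ Metric.sphere (0 : ι → ℝ) 1 := by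
    simp [norm_smul, hnorm.ne']
  have hscale : (‖v‖⁻¹ • v) ⬝ᵥ M *ᵥ (‖v‖⁻¹ • v) = ‖v‖⁻¹ ^ 2 * (v ⬝ᵥ M *ᵥ v) := by
    rw [mulVec_smul, dotProduct_smul, smul_dotProduct, smul_eq_mul, smul_eq_mul]
    ring
  exact pos_of_mul_pos_right (hscale ▸ h _ hunit) (by positivity)

theorem Matrix.dotProduct_add_smul_transpose_mul_self_mulVec {ι κ : Type*} [Fintype ι] [Fintype κ]
    (A : Matrix ι ι ℝ) (G : Matrix κ ι ℝ) (η : ℝ) (v : ι → ℝ) :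
    v ⬝ᵥ (A + η • (Gᵀ * G)) *ᵥ v = v ⬝ᵥ A *ᵥ v + η * (G *ᵥ v ⬝ᵥ G *ᵥ v) := by
  rw [add_mulVec, dotProduct_add, smul_mulVec, dotProduct_smul, ← mulVec_mulVec,
    dotProduct_mulVec v Gᵀ, vecMul_transpose, smul_eq_mul]

theorem Matrix.IsSymm.isHermitian_add_smul_transpose_mul_self {ι κ : Type*} [Fintype κ]
    {A : Matrix ι ι ℝ} (hA : A.IsSymm) (G : Matrix κ ι ℝ) (η : ℝ) :
    (A + η • (Gᵀ * G)).IsHermitian :=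
  (isHermitian_iff_isSymm.2 hA).add
    ((isHermitian_conjTranspose_mul_self G).smul (IsSelfAdjoint.all η))

/-- If `A` is symmetric and `vᵀAv > 0` for every nonzero `v` with `Gv = 0`, then
`A + η·GᵀG` is positive definite for some `η > 0`. -/
theorem exists_eta_posdef_of_posdef_on_kernel {n m : ℕ}
    (A : Matrix (Fin n) (Fin n) ℝ) (hA : A.IsSymm)
    (G : Matrix (Fin m) (Fin n) ℝ)
    (hpos : ∀ v : Fin n → ℝ, v ≠ 0 → G.mulVec v = 0 → 0 < v ⬝ᵥ A.mulVec v) :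
    ∃ η : ℝ, 0 < η ∧ (A + η • (Gᵀ * G)).PosDef := by
  have hkernel : ∀ v ∈ Metric.sphere (0 : Fin n → ℝ) 1,
      G *ᵥ v ⬝ᵥ G *ᵥ v = 0 → 0 < v ⬝ᵥ A *ᵥ v := fun v hv hGv =>
    hpos v (ne_zero_of_mem_unit_sphere ⟨v, hv⟩) (dotProduct_self_eq_zero.1 hGv)
  obtain ⟨η, hη, hA_add⟩ := (isCompact_sphere (0 : Fin n → ℝ) 1).exists_pos_forall_pos_add_mul
    (f := fun v => v ⬝ᵥ A *ᵥ v) (g := fun v => G *ᵥ v ⬝ᵥ G *ᵥ v)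
    (by fun_prop) (by fun_prop) (fun v => dotProduct_self_star_nonneg (G *ᵥ v)) hkernel
  refine ⟨η, hη, .of_dotProduct_mulVec_pos_on_sphere
    (hA.isHermitian_add_smul_transpose_mul_self G η) fun v hv => ?_⟩
  rw [dotProduct_add_smul_transpose_mul_self_mulVec]
  exact hA_add v hv
end

section
/- Fix n, m1 ≤ n, m2, and positive degrees d_1,…,d_{m1}, d_1′,…,d_{m2}′. There exists a real polynomial Φ in the coefficients of tuples (h_1,…,h_{m1}, g_1,…,g_{m2}) with h_i ∈ ℝ[x]_{d_i} and g_j ∈ ℝ[x]_{d_j′}, where Φ is not the identically zero polynomial, such that whenever Φ(h, g) ≠ 0, the constraint qualification condition holds at every point of K = {x ∈ ℝⁿ : h_i(x) = 0 (i ≤ m1), g_j(x) ≥ 0 (j ≤ m2)}: that is, for every u ∈ K, the gradients ∇h_1(u),…,∇h_{m1}(u) together with ∇g_j(u) for the active indices j (those with g_j(u) = 0) are linearly independent. -/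
/-!
Fix a set `S` of constraints and `s₀ ∈ S`, and call a tuple `p` critical if at some point `u` all
`p s`, `s ∈ S`, vanish and `∑ s ∈ S, c s • ∇(p s)(u) = 0` with `c s₀ = 1`. These equations can be
solved for the constant terms of the `p s`, `s ∈ S`, and the linear terms of `p s₀` in terms of the
remaining coefficients, the point `u` and the multipliers `c s`, `s ≠ s₀`. So the critical tuples
lie in the image of a polynomial map whose domain has one coordinate fewer than the coefficient
space; its coordinate functions are algebraically dependent, which gives a nonzero `Φ_{S,s₀}`
vanishing on all critical tuples. Off the zero set of the product of the `Φ_{S,s₀}`, the gradients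
of the `p s` vanishing at any point are linearly independent, in particular those of the equality
constraints and the active inequality constraints.
-/

open MvPolynomial

noncomputable section

/-- Evaluation of a polynomial `Φ` in the coefficients of the tuple `(h, g)`. -/
def evalCoeffs {n m1 m2 : ℕ}
    (Φ : MvPolynomial ((Fin m1 ⊕ Fin m2) × (Fin n →₀ ℕ)) ℝ)
    (h : Fin m1 → MvPolynomial (Fin n) ℝ) (g : Fin m2 → MvPolynomial (Fin n) ℝ) : ℝ :=
  eval (fun v => coeff v.2 (Sum.elim h g v.1)) Φ

universe u v w

open Cardinal in
theorem MvPolynomial.exists_ne_zero_aeval_eq_zero_of_mk_lt {K : Type u} {ι : Type v} {κ : Type w}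
    [Field K] (f : κ → MvPolynomial ι K) (h : lift.{w} #ι < lift.{v} #κ) :
    ∃ Φ : MvPolynomial κ K, Φ ≠ 0 ∧ aeval f Φ = 0 := by
  by_contra! hf
  have hf_indep : AlgebraicIndependent K f :=
    algebraicIndependent_iff.2 fun Φ hΦ => by_contra fun h0 => hf Φ h0 hΦ
  have := hf_indep.lift_cardinalMk_le_trdeg
  rw [MvPolynomial.trdeg_of_isDomain, lift_lift] at this
  exact this.not_gt (by simpa only [lift_lift] using lift_strictMono.{max v w, u} h)

theorem MvPolynomial.homogeneousComponent_one_eq_sum {R σ : Type*} [CommSemiring R] [Fintype σ]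
    (p : MvPolynomial σ R) :
    homogeneousComponent 1 p = ∑ i, monomial (Finsupp.single i 1) (coeff (Finsupp.single i 1) p) := by
  classical
  ext α
  rw [coeff_homogeneousComponent, coeff_sum]
  simp only [coeff_monomial]
  by_cases hα : α.degree = 1
  · obtain ⟨j, rfl⟩ := (Finsupp.sum_eq_one_iff α).1 hα
    simp [Finsupp.single_left_inj]
  · rw [if_neg hα, Finset.sum_eq_zero fun i _ => if_neg ?_]
    rintro rfl
    exact hα (Finsupp.degree_single i 1)

theorem MvPolynomial.pderiv_homogeneousComponent_one {R σ : Type*} [CommSemiring R] [Fintype σ]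
    (p : MvPolynomial σ R) (i : σ) :
    pderiv i (homogeneousComponent 1 p) = C (coeff (Finsupp.single i 1) p) := by
  classical
  rw [homogeneousComponent_one_eq_sum, map_sum, Finset.sum_eq_single i]
  · simp [pderiv_monomial]
  · intro j _ hji
    simp [pderiv_monomial, hji]
  · simp

namespace ConstraintQualification

variable {σ τ K : Type*}

def coeffSet (σ : Type*) (D : τ → ℕ) : Set (τ × (σ →₀ ℕ)) := {v | v.2.degree ≤ D v.1}

instance [Finite σ] [Finite τ] (D : τ → ℕ) : Finite (coeffSet σ D) := by
  obtain ⟨M, hM⟩ := (Set.finite_range D).bddAbove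
  refine Set.Finite.to_subtype <|
    (Set.finite_univ.prod (Finsupp.finite_of_degree_le M)).subset ?_
  rintro ⟨s, α⟩ (hα : α.degree ≤ D s)
  exact ⟨trivial, hα.trans (hM ⟨s, rfl⟩)⟩

def coeffVec [CommSemiring K] (D : τ → ℕ) (p : τ → MvPolynomial σ K) : coeffSet σ D → K :=
  fun v => coeff v.1.2 (p v.1.1)

theorem exists_coeffVec_eq [CommSemiring K] [Finite σ] {D : τ → ℕ} (y : coeffSet σ D → K) :
    ∃ p : τ → MvPolynomial σ K, (∀ s, (p s).totalDegree ≤ D s) ∧ coeffVec D p = y := by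
  classical
  refine ⟨fun s => ∑ α ∈ (Finsupp.finite_of_degree_le (D s)).toFinset,
      monomial α (if h : α.degree ≤ D s then y ⟨(s, α), h⟩ else 0), fun s => ?_, ?_⟩
  · refine (totalDegree_finsetSum _ _).trans (Finset.sup_le fun α hα => ?_)
    exact (totalDegree_monomial_le _ _).trans (show α.degree ≤ D s by simpa using hα)
  · ext ⟨⟨s, β⟩, hβ : β.degree ≤ D s⟩
    simp [coeffVec, coeff_sum, coeff_monomial, hβ]

def IsCritical [CommSemiring K] (S : Finset τ) (s₀ : τ) (p : τ → MvPolynomial σ K)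
    (u : σ → K) (c : τ → K) : Prop :=
  c s₀ = 1 ∧ (∀ s ∈ S, eval u (p s) = 0) ∧ ∀ i, ∑ s ∈ S, c s * eval u (pderiv i (p s)) = 0

theorem linearIndependent_of_forall_not_isCritical [Fintype τ] [Field K]
    (p : τ → MvPolynomial σ K) (u : σ → K)
    (h : ∀ S : Finset τ, ∀ s₀ ∈ S, ∀ c, ¬ IsCritical S s₀ p u c) :
    LinearIndependent K fun s : {s // eval u (p s) = 0} => fun i => eval u (pderiv i (p s)) := by
  classical
  rw [Fintype.linearIndependent_iff]
  intro a ha k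
  by_contra hk
  let c : τ → K := fun s => if hs : eval u (p s) = 0 then a ⟨s, hs⟩ / a k else 0
  refine h {s | eval u (p s) = 0} k.1 (by simpa using k.2) c ⟨by simp [c, k.2, hk], ?_, fun i => ?_⟩
  · intro s hs
    simpa using hs
  · have hi := congrFun ha i
    simp only [Finset.sum_apply, Pi.smul_apply, smul_eq_mul, Pi.zero_apply] at hi
    calc ∑ s ∈ {s | eval u (p s) = 0}, c s * eval u (pderiv i (p s))
        = ∑ s : {s // eval u (p s) = 0}, a s / a k * eval u (pderiv i (p s)) := by
          rw [Finset.sum_subtype (p := fun s => eval u (p s) = 0) _ (fun s => by simp)]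
          exact Finset.sum_congr rfl fun s _ => by simp [c, s.2]
      _ = 0 := by
          simp only [div_mul_eq_mul_div, ← Finset.sum_div, hi, zero_div]

def IsPinned (S : Finset τ) (s₀ : τ) (s : τ) (α : σ →₀ ℕ) : Prop :=
  (s ∈ S ∧ α.degree = 0) ∨ (s = s₀ ∧ α.degree = 1)

instance [DecidableEq τ] (S : Finset τ) (s₀ s : τ) (α : σ →₀ ℕ) : Decidable (IsPinned S s₀ s α) :=
  inferInstanceAs (Decidable (_ ∨ _))

section Chart

variable (σ K) [DecidableEq τ] (D : τ → ℕ) (S : Finset τ) (s₀ : τ)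

abbrev ChartParam : Type _ :=
  {v : coeffSet σ D // ¬ IsPinned S s₀ v.1.1 v.1.2} ⊕ σ ⊕ S.erase s₀

variable [CommRing K]

def chartPoint : σ → MvPolynomial (ChartParam σ D S s₀) K := fun i => X (.inr (.inl i))

def chartMultiplier (s : τ) : MvPolynomial (ChartParam σ D S s₀) K :=
  if h : s ∈ S.erase s₀ then X (.inr (.inr ⟨s, h⟩)) else 1

def chartFreeCoeff (s : τ) (α : σ →₀ ℕ) : MvPolynomial (ChartParam σ D S s₀) K :=
  if h : α.degree ≤ D s ∧ ¬ IsPinned S s₀ s α then X (.inl ⟨⟨(s, α), h.1⟩, h.2⟩) else 0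

variable {σ K D S s₀}

def chartParamOf (p : τ → MvPolynomial σ K) (u : σ → K) (c : τ → K) : ChartParam σ D S s₀ → K :=
  Sum.elim (fun v => coeff v.1.1.2 (p v.1.1.1)) (Sum.elim u fun s => c s)

variable {p : τ → MvPolynomial σ K} {u : σ → K} {c : τ → K}

theorem eval_comp_chartPoint : eval (chartParamOf p u c) ∘ chartPoint σ K D S s₀ = u :=
  funext fun i => by simp [chartPoint, chartParamOf]

theorem eval_chartMultiplier (hc : c s₀ = 1) {s : τ} (hs : s ∈ S) :
    eval (chartParamOf p u c) (chartMultiplier σ K D S s₀ s) = c s := by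
  by_cases h : s = s₀
  · subst h
    simp [chartMultiplier, hc]
  · simp [chartMultiplier, chartParamOf, Finset.mem_erase.2 ⟨h, hs⟩]

variable (σ K D S s₀) [Fintype σ]

def chartFree (s : τ) : MvPolynomial σ (MvPolynomial (ChartParam σ D S s₀) K) :=
  ∑ α ∈ (Finsupp.finite_of_degree_le (D s)).toFinset, monomial α (chartFreeCoeff σ K D S s₀ s α)

/-- The pinned terms contribute to `∇(p s)(u)` only the linear coefficients of `p s₀`, so with
`c s₀ = 1` the equation `∑ s ∈ S, c s • ∇(p s)(u) = 0` expresses them through the free terms. -/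
def chartLinearCoeff (i : σ) : MvPolynomial (ChartParam σ D S s₀) K :=
  -∑ s ∈ S, chartMultiplier σ K D S s₀ s *
    eval (chartPoint σ K D S s₀) (pderiv i (chartFree σ K D S s₀ s))

def chartPolyLinear (s : τ) : MvPolynomial σ (MvPolynomial (ChartParam σ D S s₀) K) :=
  chartFree σ K D S s₀ s +
    if s = s₀ then ∑ i, monomial (Finsupp.single i 1) (chartLinearCoeff σ K D S s₀ i) else 0

def chartPoly (s : τ) : MvPolynomial σ (MvPolynomial (ChartParam σ D S s₀) K) :=
  chartPolyLinear σ K D S s₀ s -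
    if s ∈ S then C (eval (chartPoint σ K D S s₀) (chartPolyLinear σ K D S s₀ s)) else 0

def chartCoeffs (v : coeffSet σ D) : MvPolynomial (ChartParam σ D S s₀) K :=
  coeff v.1.2 (chartPoly σ K D S s₀ v.1.1)

variable {σ K D S s₀}

theorem coeff_map_chartFree (hp : ∀ s, (p s).totalDegree ≤ D s) (s : τ) (β : σ →₀ ℕ) :
    coeff β (map (eval (chartParamOf p u c)) (chartFree σ K D S s₀ s)) =
      if IsPinned S s₀ s β then 0 else coeff β (p s) := by
  classical
  rw [coeff_map, chartFree, coeff_sum]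
  simp only [coeff_monomial, Finset.sum_ite_eq', Set.Finite.mem_toFinset]
  by_cases hβ : β.degree ≤ D s
  · by_cases hpin : IsPinned S s₀ s β <;> simp [hβ, hpin, chartFreeCoeff, chartParamOf]
  · have : coeff β (p s) = 0 := coeff_eq_zero_of_totalDegree_lt ((hp s).trans_lt (not_le.1 hβ))
    simp [hβ, this]

theorem eq_map_chartFree_add (hp : ∀ s, (p s).totalDegree ≤ D s) (s : τ) :
    p s = map (eval (chartParamOf p u c)) (chartFree σ K D S s₀ s) +
      (if s ∈ S then homogeneousComponent 0 (p s) else 0) +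
      if s = s₀ then homogeneousComponent 1 (p s) else 0 := by
  ext β
  rw [coeff_add, coeff_add, coeff_map_chartFree hp]
  simp only [IsPinned, apply_ite (coeff β), coeff_zero, coeff_homogeneousComponent]
  split_ifs <;> grind

theorem eval_pderiv_map_chartFree (hp : ∀ s, (p s).totalDegree ≤ D s) (s : τ) (i : σ) :
    eval u (pderiv i (map (eval (chartParamOf p u c)) (chartFree σ K D S s₀ s))) =
      eval u (pderiv i (p s)) - if s = s₀ then coeff (Finsupp.single i 1) (p s) else 0 := by
  have h := congrArg (fun q => eval u (pderiv i q))
    (eq_map_chartFree_add (S := S) (s₀ := s₀) (u := u) (c := c) hp s)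
  simp only [map_add, apply_ite (pderiv i), apply_ite (eval u), homogeneousComponent_zero,
    pderiv_C, pderiv_homogeneousComponent_one, eval_C, map_zero, ite_self, add_zero] at h
  rw [h]
  ring

theorem eval_chartLinearCoeff (hp : ∀ s, (p s).totalDegree ≤ D s) (hs₀ : s₀ ∈ S)
    (hcrit : IsCritical S s₀ p u c) (i : σ) :
    eval (chartParamOf p u c) (chartLinearCoeff σ K D S s₀ i) =
      coeff (Finsupp.single i 1) (p s₀) := by
  obtain ⟨hc, -, hgrad⟩ := hcrit
  calc eval (chartParamOf p u c) (chartLinearCoeff σ K D S s₀ i)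
      = -∑ s ∈ S, c s * (eval u (pderiv i (p s)) -
          if s = s₀ then coeff (Finsupp.single i 1) (p s) else 0) := by
        simp only [chartLinearCoeff, map_neg, map_sum, map_mul, map_eval,
          eval_comp_chartPoint, ← pderiv_map, eval_pderiv_map_chartFree hp]
        congr 1
        exact Finset.sum_congr rfl fun s hs => by rw [eval_chartMultiplier hc hs]
    _ = coeff (Finsupp.single i 1) (p s₀) := by
        simp [mul_sub, hgrad i, hs₀, hc]

theorem map_chartPolyLinear (hp : ∀ s, (p s).totalDegree ≤ D s) (hs₀ : s₀ ∈ S)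
    (hcrit : IsCritical S s₀ p u c) (s : τ) :
    map (eval (chartParamOf p u c)) (chartPolyLinear σ K D S s₀ s) =
      p s - if s ∈ S then C (coeff 0 (p s)) else 0 := by
  have h := eq_map_chartFree_add (S := S) (s₀ := s₀) (u := u) (c := c) hp s
  rw [homogeneousComponent_zero] at h
  rw [chartPolyLinear, map_add, apply_ite (map _), map_zero, map_sum]
  simp only [map_monomial, eval_chartLinearCoeff hp hs₀ hcrit, ← homogeneousComponent_one_eq_sum]
  split_ifs at h ⊢ <;> subst_vars <;> linear_combination -h

theorem map_chartPoly (hp : ∀ s, (p s).totalDegree ≤ D s) (hs₀ : s₀ ∈ S)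
    (hcrit : IsCritical S s₀ p u c) (s : τ) :
    map (eval (chartParamOf p u c)) (chartPoly σ K D S s₀ s) = p s := by
  rw [chartPoly, map_sub, apply_ite (map _), map_zero, map_C,
    map_eval (eval (chartParamOf p u c)), eval_comp_chartPoint, map_chartPolyLinear hp hs₀ hcrit]
  split_ifs with hs
  · simp [hcrit.2.1 s hs]
  · simp

theorem eval_chartCoeffs (hp : ∀ s, (p s).totalDegree ≤ D s) (hs₀ : s₀ ∈ S)
    (hcrit : IsCritical S s₀ p u c) (v : coeffSet σ D) :
    eval (chartParamOf p u c) (chartCoeffs σ K D S s₀ v) = coeffVec D p v := by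
  rw [chartCoeffs, ← coeff_map, map_chartPoly hp hs₀ hcrit]
  rfl

end Chart

theorem card_chartParam_lt [DecidableEq τ] [Finite σ] [Finite τ] {D : τ → ℕ} {S : Finset τ}
    {s₀ : τ} (hD : 1 ≤ D s₀) (hs₀ : s₀ ∈ S) :
    Nat.card (ChartParam σ D S s₀) < Nat.card (coeffSet σ D) := by
  classical
  let pinned : σ ⊕ S → {v : coeffSet σ D // IsPinned S s₀ v.1.1 v.1.2} :=
    Sum.elim
      (fun i => ⟨⟨(s₀, Finsupp.single i 1), (Finsupp.degree_single i 1).trans_le hD⟩,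
        .inr ⟨rfl, Finsupp.degree_single i 1⟩⟩)
      (fun s => ⟨⟨(s.1, 0), by simp [coeffSet]⟩, .inl ⟨s.2, by simp⟩⟩)
  have hpinned : Function.Injective pinned := by
    rintro (i | s) (j | t) h <;> have h' := congrArg (fun v => v.1.1) h <;> clear h <;>
      simp [pinned, Finsupp.single_left_inj one_ne_zero, eq_comm (a := (0 : σ →₀ ℕ))] at h' <;>
      simp [h']
  have hsplit := Nat.card_congr (Equiv.sumCompl fun v : coeffSet σ D => IsPinned S s₀ v.1.1 v.1.2)
  have herase : Nat.card (S.erase s₀) < Nat.card S := by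
    simpa only [Nat.card_eq_fintype_card, Fintype.card_coe] using Finset.card_erase_lt_of_mem hs₀
  have := Nat.card_le_card_of_injective pinned hpinned
  simp only [Nat.card_sum] at hsplit this ⊢
  omega

section Generic

variable [DecidableEq τ] [Fintype σ] [Field K] {D : τ → ℕ}

theorem exists_ne_zero_forall_isCritical_eval_eq_zero [Finite τ] {S : Finset τ} {s₀ : τ}
    (hD : 1 ≤ D s₀) (hs₀ : s₀ ∈ S) :
    ∃ Φ : MvPolynomial (coeffSet σ D) K, Φ ≠ 0 ∧ ∀ p : τ → MvPolynomial σ K,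
      (∀ s, (p s).totalDegree ≤ D s) → ∀ u c, IsCritical S s₀ p u c →
        eval (coeffVec D p) Φ = 0 := by
  obtain ⟨Φ, hΦ, hann⟩ := exists_ne_zero_aeval_eq_zero_of_mk_lt (chartCoeffs σ K D S s₀) <| by
    simpa only [Cardinal.lift_id, ← Nat.cast_card] using
      Nat.cast_lt.2 (card_chartParam_lt (σ := σ) hD hs₀)
  refine ⟨Φ, hΦ, fun p hp u c hcrit => ?_⟩
  have hcoeff : coeffVec D p = fun v => aeval (chartParamOf p u c) (chartCoeffs σ K D S s₀ v) :=
    funext fun v => (eval_chartCoeffs hp hs₀ hcrit v).symm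
  rw [← aeval_eq_eval, hcoeff, ← aeval_bind₁, ← aeval_eq_bind₁, hann, map_zero]

theorem exists_ne_zero_forall_linearIndependent [Fintype τ] (hD : ∀ s, 1 ≤ D s) :
    ∃ Φ : MvPolynomial (coeffSet σ D) K, Φ ≠ 0 ∧ ∀ p : τ → MvPolynomial σ K,
      (∀ s, (p s).totalDegree ≤ D s) → eval (coeffVec D p) Φ ≠ 0 → ∀ u,
        LinearIndependent K fun s : {s // eval u (p s) = 0} => fun i => eval u (pderiv i (p s)) := by
  choose Φ hΦ0 hΦ using fun (S : Finset τ) (s₀ : S) =>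
    exists_ne_zero_forall_isCritical_eval_eq_zero (σ := σ) (K := K) (hD s₀) s₀.2
  refine ⟨∏ S, ∏ s₀, Φ S s₀,
    Finset.prod_ne_zero_iff.2 fun S _ => Finset.prod_ne_zero_iff.2 fun s₀ _ => hΦ0 S s₀,
    fun p hp hne u => linearIndependent_of_forall_not_isCritical p u
      fun S s₀ hs₀ c hcrit => hne ?_⟩
  simp only [map_prod]
  exact Finset.prod_eq_zero (Finset.mem_univ S) <|
    Finset.prod_eq_zero (Finset.mem_univ ⟨s₀, hs₀⟩) (hΦ S ⟨s₀, hs₀⟩ p hp u c hcrit)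

end Generic

end ConstraintQualification

open ConstraintQualification in
theorem generic_constraint_qualification_general
    (n m1 m2 : ℕ)
    (d : Fin m1 → ℕ) (d' : Fin m2 → ℕ)
    (hd : ∀ i, 0 < d i) (hd' : ∀ j, 0 < d' j) :
    ∃ Φ : MvPolynomial ((Fin m1 ⊕ Fin m2) × (Fin n →₀ ℕ)) ℝ,
      (∃ (h : Fin m1 → MvPolynomial (Fin n) ℝ) (g : Fin m2 → MvPolynomial (Fin n) ℝ),
        (∀ i, (h i).totalDegree ≤ d i) ∧ (∀ j, (g j).totalDegree ≤ d' j) ∧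
        evalCoeffs Φ h g ≠ 0) ∧
      ∀ (h : Fin m1 → MvPolynomial (Fin n) ℝ) (g : Fin m2 → MvPolynomial (Fin n) ℝ),
        (∀ i, (h i).totalDegree ≤ d i) → (∀ j, (g j).totalDegree ≤ d' j) →
        evalCoeffs Φ h g ≠ 0 →
        ∀ u : Fin n → ℝ, (∀ i, eval u (h i) = 0) → (∀ j, 0 ≤ eval u (g j)) →
          LinearIndependent ℝ
            (Sum.elim (fun i : Fin m1 => gradAt (h i) u)
              (fun j : {j : Fin m2 // eval u (g j) = 0} => gradAt (g j.1) u)) := by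
  obtain ⟨Φ, hΦ0, hΦ⟩ := exists_ne_zero_forall_linearIndependent (σ := Fin n) (K := ℝ)
    (D := Sum.elim d d') (Sum.rec hd hd')
  have evalCoeffs_rename (h g) : evalCoeffs (rename Subtype.val Φ) h g =
      eval (coeffVec (Sum.elim d d') (Sum.elim h g)) Φ := eval_rename _ _ _
  refine ⟨rename Subtype.val Φ, ?_, fun h g hh hg hne u hhu _ => ?_⟩
  · obtain ⟨y, hy⟩ : ∃ y, eval y Φ ≠ 0 := by
      by_contra! h
      exact hΦ0 (MvPolynomial.funext fun y => by simpa using h y)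
    obtain ⟨p, hp, rfl⟩ := exists_coeffVec_eq y
    refine ⟨p ∘ Sum.inl, p ∘ Sum.inr, fun i => hp _, fun j => hp _, ?_⟩
    rwa [evalCoeffs_rename, Sum.elim_comp_inl_inr]
  · let ι : Fin m1 ⊕ {j // eval u (g j) = 0} → {s // eval u (Sum.elim h g s) = 0} :=
      Sum.elim (fun i => ⟨.inl i, hhu i⟩) fun j => ⟨.inr j.1, j.2⟩
    have hι : Function.Injective ι := by
      rintro (i | j) (i' | j') hij <;> simp_all [ι, Subtype.ext_iff]
    convert (hΦ _ (Sum.rec hh hg) (evalCoeffs_rename h g ▸ hne) u).comp ι hι using 1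
    · ext (i | j) <;> rfl
    · rfl

/-- There is a nonzero polynomial `Φ` in the coefficients of `(h₁,…,h_{m1},
g₁,…,g_{m2})` (with the given degree bounds) such that whenever `Φ(h,g) ≠ 0`,
the constraint qualification condition holds at every point of `K`. -/
theorem generic_constraint_qualification
    (n m1 m2 : ℕ) (hm1 : m1 ≤ n)
    (d : Fin m1 → ℕ) (d' : Fin m2 → ℕ)
    (hd : ∀ i, 0 < d i) (hd' : ∀ j, 0 < d' j) :
    ∃ Φ : MvPolynomial ((Fin m1 ⊕ Fin m2) × (Fin n →₀ ℕ)) ℝ,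
      (∃ (h : Fin m1 → MvPolynomial (Fin n) ℝ) (g : Fin m2 → MvPolynomial (Fin n) ℝ),
        (∀ i, (h i).totalDegree ≤ d i) ∧ (∀ j, (g j).totalDegree ≤ d' j) ∧
        evalCoeffs Φ h g ≠ 0) ∧
      ∀ (h : Fin m1 → MvPolynomial (Fin n) ℝ) (g : Fin m2 → MvPolynomial (Fin n) ℝ),
        (∀ i, (h i).totalDegree ≤ d i) → (∀ j, (g j).totalDegree ≤ d' j) →
        evalCoeffs Φ h g ≠ 0 →
        ∀ u : Fin n → ℝ, (∀ i, eval u (h i) = 0) → (∀ j, 0 ≤ eval u (g j)) →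
          LinearIndependent ℝ
            (Sum.elim (fun i : Fin m1 => gradAt (h i) u)
              (fun j : {j : Fin m2 // eval u (g j) = 0} => gradAt (g j.1) u)) :=
  generic_constraint_qualification_general n m1 m2 d d' hd hd'
end
end

section
/- Fix n, m1 ≤ n, m2 with m1 + m2 ≥ n + 1, and positive degrees d_1,…,d_{m1}, d_1′,…,d_{m2}′. There exists a real polynomial Φ in the coefficients of tuples (h_1,…,h_{m1}, g_1,…,g_{m2}) with h_i ∈ ℝ[x]_{d_i} and g_j ∈ ℝ[x]_{d_j′}, where Φ is not the identically zero polynomial, such that whenever Φ(h, g) ≠ 0: for every choice of indices 1 ≤ j_1 < ⋯ < j_{n−m1+1} ≤ m2, the polynomials h_1,…,h_{m1}, g_{j_1},…,g_{j_{n−m1+1}} have no common zero in ℂⁿ; in particular, at every point of K = {x ∈ ℝⁿ : h_i(x) = 0 (i ≤ m1), g_j(x) ≥ 0 (j ≤ m2)}, at most n − m1 of the inequality constraints g_j are active (i.e., vanish). -/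
/-!
Fix `n + 1` of the polynomials and write each as `p_k = c_k + q_k`, with `c_k` its constant term.
The substitution `c_k ↦ -q_k(x)` turns the coefficients into polynomials in the nonconstant
coefficients and in `x = (x_1, …, x_n)`: one variable fewer than there are coefficients, so these
polynomials satisfy a nontrivial algebraic relation `Φ_J` (a transcendence-degree count). At a
common zero `x` of the `p_k` the substitution changes nothing, so `Φ_J` vanishes on the
coefficients of every such family. The product of the `Φ_J` over all choices of `n + 1`
polynomials is nonzero, hence (`ℝ` being infinite) nonzero at some tuple of the prescribed degrees.
A feasible point with more than `n - m1` active constraints is a common zero of `n + 1` of them.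
-/

open MvPolynomial
open scoped Classical

noncomputable section

theorem MvPolynomial.exists_ne_zero_aeval_eq_zero_of_card_lt {R ι σ : Type*} [CommRing R]
    [IsDomain R] [Fintype ι] [Fintype σ] (f : ι → MvPolynomial σ R)
    (h : Fintype.card σ < Fintype.card ι) : ∃ q : MvPolynomial ι R, q ≠ 0 ∧ aeval f q = 0 := by
  by_contra! hf
  have hind : AlgebraicIndependent R f :=
    algebraicIndependent_iff.2 fun q hq => by_contra fun hq0 => hf q hq0 hq
  have := hind.lift_cardinalMk_le_trdeg
  simp only [MvPolynomial.trdeg_of_isDomain, Cardinal.mk_fintype, Cardinal.lift_natCast,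
    Nat.cast_le] at this
  omega

theorem MvPolynomial.aeval_eq_sum_of_support_subset {R A σ : Type*} [CommSemiring R]
    [CommSemiring A] [Algebra R A] {p : MvPolynomial σ R} {S : Finset (σ →₀ ℕ)}
    (hp : p.support ⊆ S) (x : σ → A) :
    aeval x p = ∑ v ∈ S, algebraMap R A (coeff v p) * ∏ i ∈ v.support, x i ^ v i := by
  rw [aeval_def, eval₂_eq]
  exact Finset.sum_subset hp fun v _ hv => by simp [notMem_support_iff.mp hv]

theorem MvPolynomial.rename_mem_supported_range {R σ τ : Type*} [CommSemiring R] (f : σ → τ)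
    (p : MvPolynomial σ R) : rename f p ∈ supported R (Set.range f) := by
  rw [mem_supported]
  intro t ht
  obtain ⟨s, -, rfl⟩ := Finset.mem_image.1 (vars_rename f p ht)
  exact Set.mem_range_self s

def tupleCoeffs {R κ σ : Type*} [CommSemiring R] (p : κ → MvPolynomial σ R)
    (t : κ × (σ →₀ ℕ)) : R :=
  (p t.1).coeff t.2

theorem evalCoeffs_eq_eval_tupleCoeffs {n m1 m2 : ℕ}
    (Φ : MvPolynomial ((Fin m1 ⊕ Fin m2) × (Fin n →₀ ℕ)) ℝ)
    (h : Fin m1 → MvPolynomial (Fin n) ℝ) (g : Fin m2 → MvPolynomial (Fin n) ℝ) :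
    evalCoeffs Φ h g = eval (tupleCoeffs (Sum.elim h g)) Φ :=
  rfl

section Resultant

variable {K : Type*} [Field K] {κ σ : Type*} (I : Finset κ) (S : κ → Finset (σ →₀ ℕ))

abbrev NonconstantSlot := Σ k : I, ↥((S k).erase 0)

def slotEmbedding : I ⊕ NonconstantSlot I S → κ × (σ →₀ ℕ)
  | .inl k => (k, 0)
  | .inr s => (s.1, s.2)

theorem slotEmbedding_injective : Function.Injective (slotEmbedding I S) := by
  rintro (k | ⟨k, v⟩) (k' | ⟨k', v'⟩) h <;>
    simp only [slotEmbedding, Prod.mk.injEq, Subtype.val_inj] at h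
  · rw [h.1]
  · exact absurd h.2.symm (Finset.ne_of_mem_erase v'.2)
  · exact absurd h.2 (Finset.ne_of_mem_erase v.2)
  · exact congrArg Sum.inr (Sigma.subtype_ext h.1 h.2)

theorem range_slotEmbedding_subset (hS : ∀ k ∈ I, 0 ∈ S k) :
    Set.range (slotEmbedding I S) ⊆ {t | t.2 ∈ S t.1} := by
  rintro _ ⟨k | ⟨k, v⟩, rfl⟩
  · exact hS k k.2
  · exact Finset.mem_of_mem_erase v.2

variable (K) in
def eliminateConstants : I ⊕ NonconstantSlot I S → MvPolynomial (NonconstantSlot I S ⊕ σ) K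
  | .inl k => -∑ v : ↥((S k).erase 0), X (.inl ⟨k, v⟩) * ∏ i ∈ v.1.support, X (.inr i) ^ v.1 i
  | .inr s => X (.inl s)

variable {I S} in
theorem aeval_eliminateConstants {A : Type*} [CommRing A] [Algebra K A]
    (hS : ∀ k ∈ I, 0 ∈ S k) {p : κ → MvPolynomial σ K} (hp : ∀ k ∈ I, (p k).support ⊆ S k)
    {x : σ → A} (hx : ∀ k ∈ I, aeval x (p k) = 0) (ξ : I ⊕ NonconstantSlot I S) :
    aeval (Sum.elim (fun s => algebraMap K A (tupleCoeffs p (slotEmbedding I S (.inr s)))) x)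
      (eliminateConstants K I S ξ) = algebraMap K A (tupleCoeffs p (slotEmbedding I S ξ)) := by
  rcases ξ with ⟨k, hk⟩ | s
  · have hexpand := aeval_eq_sum_of_support_subset (hp k hk) x
    rw [hx k hk, ← Finset.add_sum_erase _ _ (hS k hk), ← Finset.sum_attach] at hexpand
    simp only [Finsupp.support_zero, Finset.prod_empty, mul_one, tupleCoeffs, slotEmbedding,
      eliminateConstants, Finset.univ_eq_attach, map_neg, map_sum, map_mul, aeval_X, Sum.elim_inl,
      map_prod, map_pow, Sum.elim_inr] at hexpand ⊢
    linear_combination hexpand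
  · simp [eliminateConstants]

theorem exists_resultant_of_card_lt (A : Type*) [CommRing A] [Nontrivial A] [Algebra K A]
    (hS : ∀ k ∈ I, 0 ∈ S k) [Fintype σ] (hI : Fintype.card σ < I.card) :
    ∃ Φ : MvPolynomial (κ × (σ →₀ ℕ)) K, Φ ≠ 0 ∧ Φ ∈ supported K {t | t.2 ∈ S t.1} ∧
      ∀ p : κ → MvPolynomial σ K, (∀ k ∈ I, (p k).support ⊆ S k) →
        ∀ x : σ → A, (∀ k ∈ I, aeval x (p k) = 0) → eval (tupleCoeffs p) Φ = 0 := by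
  obtain ⟨Φ₀, hΦ₀, hrel⟩ := exists_ne_zero_aeval_eq_zero_of_card_lt (eliminateConstants K I S)
    (by simp only [Fintype.card_sum, Fintype.card_coe]; omega)
  refine ⟨rename (slotEmbedding I S) Φ₀, (map_ne_zero_iff _ (rename_injective _
    (slotEmbedding_injective I S))).2 hΦ₀, supported_mono (range_slotEmbedding_subset I S hS)
    (rename_mem_supported_range _ _), fun p hp x hx => ?_⟩
  apply (algebraMap K A).injective
  rw [eval_rename, map_zero, ← aeval_eq_eval, ← aeval_algebraMap_apply]
  have hsubst : algebraMap K A ∘ (tupleCoeffs p ∘ slotEmbedding I S) =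
      fun ξ => aeval _ (eliminateConstants K I S ξ) :=
    funext fun ξ => (aeval_eliminateConstants hS hp hx ξ).symm
  rw [hsubst, ← comp_aeval_apply, hrel, map_zero]

theorem exists_resultant_of_forall_card_lt (A : Type*) [CommRing A] [Nontrivial A] [Algebra K A]
    (hS : ∀ k, 0 ∈ S k) [Fintype σ] (𝓘 : Finset (Finset κ))
    (h𝓘 : ∀ I ∈ 𝓘, Fintype.card σ < I.card) :
    ∃ Φ : MvPolynomial (κ × (σ →₀ ℕ)) K, Φ ≠ 0 ∧ Φ ∈ supported K {t | t.2 ∈ S t.1} ∧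
      ∀ p : κ → MvPolynomial σ K, (∀ k, (p k).support ⊆ S k) → ∀ I ∈ 𝓘,
        ∀ x : σ → A, (∀ k ∈ I, aeval x (p k) = 0) → eval (tupleCoeffs p) Φ = 0 := by
  choose! Φ hΦ0 hΦS hΦ using fun I hI =>
    exists_resultant_of_card_lt (K := K) I S A (fun k _ => hS k) (h𝓘 I hI)
  refine ⟨∏ I ∈ 𝓘, Φ I, Finset.prod_ne_zero_iff.2 hΦ0, Subalgebra.prod_mem _ hΦS,
    fun p hp I hI x hx => ?_⟩
  rw [map_prod]
  exact Finset.prod_eq_zero hI (hΦ I hI p (fun k _ => hp k) x hx)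

end Resultant

theorem exists_eval_tupleCoeffs_ne_zero {K κ σ : Type*} [Field K] [Infinite K]
    (S : κ → Finset (σ →₀ ℕ)) {Φ : MvPolynomial (κ × (σ →₀ ℕ)) K} (hΦ : Φ ≠ 0)
    (hsupp : Φ ∈ supported K {t | t.2 ∈ S t.1}) :
    ∃ p : κ → MvPolynomial σ K, (∀ k, (p k).support ⊆ S k) ∧ eval (tupleCoeffs p) Φ ≠ 0 := by
  obtain ⟨χ, hχ⟩ : ∃ χ, eval χ Φ ≠ 0 := by
    by_contra! h
    exact hΦ (MvPolynomial.funext fun χ => by simp [h χ])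
  rw [supported_eq_range_rename, AlgHom.mem_range] at hsupp
  obtain ⟨Ψ, rfl⟩ := hsupp
  refine ⟨fun k => ∑ v ∈ S k, monomial v (χ (k, v)), ?_, ?_⟩
  · intro k v hv
    obtain ⟨w, hw, hvw⟩ := Finset.mem_biUnion.1 (support_sum hv)
    rwa [Finset.mem_singleton.1 (support_monomial_subset hvw)]
  · rw [eval_rename] at hχ ⊢
    convert hχ using 3
    funext ⟨⟨k, v⟩, hv⟩
    have hv : v ∈ S k := hv
    simp [tupleCoeffs, coeff_sum, coeff_monomial, hv]

def monomialsOfDegreeLE (σ : Type*) [Finite σ] (D : ℕ) : Finset (σ →₀ ℕ) :=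
  (Finsupp.finite_of_degree_le D).toFinset

theorem zero_mem_monomialsOfDegreeLE (σ : Type*) [Finite σ] (D : ℕ) :
    0 ∈ monomialsOfDegreeLE σ D := by
  simp [monomialsOfDegreeLE]

theorem support_subset_monomialsOfDegreeLE_iff {R σ : Type*} [CommSemiring R] [Finite σ]
    {p : MvPolynomial σ R} {D : ℕ} :
    p.support ⊆ monomialsOfDegreeLE σ D ↔ p.totalDegree ≤ D := by
  simp only [monomialsOfDegreeLE, Finsupp.degree, Finset.subset_iff, mem_support_iff,
    Set.Finite.mem_toFinset, Set.mem_ofPred_eq, totalDegree, Finset.sup_le_iff]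
  rfl

theorem support_sumElim_subset_monomialsOfDegreeLE {R σ ι₁ ι₂ : Type*} [CommSemiring R]
    [Finite σ] {h : ι₁ → MvPolynomial σ R} {g : ι₂ → MvPolynomial σ R} {d : ι₁ → ℕ}
    {d' : ι₂ → ℕ} (hh : ∀ i, (h i).totalDegree ≤ d i) (hg : ∀ j, (g j).totalDegree ≤ d' j) :
    ∀ k, (Sum.elim h g k).support ⊆ monomialsOfDegreeLE σ (Sum.elim d d' k)
  | .inl i => support_subset_monomialsOfDegreeLE_iff.2 (hh i)
  | .inr j => support_subset_monomialsOfDegreeLE_iff.2 (hg j)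

theorem card_filter_eval_eq_zero_le_of_no_common_root {K L σ ι₁ ι₂ : Type*} [Field K]
    [DecidableEq K] [CommRing L] [Nontrivial L] [Algebra K L] [Fintype ι₂]
    {h : ι₁ → MvPolynomial σ K}
    {g : ι₂ → MvPolynomial σ K} {k : ℕ}
    (hroot : ∀ J : Finset ι₂, J.card = k + 1 →
      ¬ ∃ x : σ → L, (∀ i, aeval x (h i) = 0) ∧ ∀ j ∈ J, aeval x (g j) = 0)
    {u : σ → K} (hu : ∀ i, eval u (h i) = 0) :
    (Finset.univ.filter fun j => eval u (g j) = 0).card ≤ k := by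
  by_contra! hcard
  obtain ⟨J, hJsub, hJcard⟩ := Finset.exists_subset_card_eq hcard
  exact hroot J hJcard ⟨algebraMap K L ∘ u,
    fun i => (aeval_algebraMap_eq_zero_iff L u _).2 (hu i),
    fun j hj => (aeval_algebraMap_eq_zero_iff L u _).2 (Finset.mem_filter.1 (hJsub hj)).2⟩

theorem generic_few_active_constraints_general
    (n m1 m2 : ℕ)
    (d : Fin m1 → ℕ) (d' : Fin m2 → ℕ) :
    ∃ Φ : MvPolynomial ((Fin m1 ⊕ Fin m2) × (Fin n →₀ ℕ)) ℝ,
      (∃ (h : Fin m1 → MvPolynomial (Fin n) ℝ) (g : Fin m2 → MvPolynomial (Fin n) ℝ),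
        (∀ i, (h i).totalDegree ≤ d i) ∧ (∀ j, (g j).totalDegree ≤ d' j) ∧
        evalCoeffs Φ h g ≠ 0) ∧
      ∀ (h : Fin m1 → MvPolynomial (Fin n) ℝ) (g : Fin m2 → MvPolynomial (Fin n) ℝ),
        (∀ i, (h i).totalDegree ≤ d i) → (∀ j, (g j).totalDegree ≤ d' j) →
        evalCoeffs Φ h g ≠ 0 →
        (∀ J : Finset (Fin m2), J.card = n - m1 + 1 →
          ¬ ∃ x : Fin n → ℂ,
            (∀ i, aeval x (h i) = 0) ∧ ∀ j ∈ J, aeval x (g j) = 0) ∧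
        (∀ u : Fin n → ℝ, (∀ i, eval u (h i) = 0) → (∀ j, 0 ≤ eval u (g j)) →
          (Finset.univ.filter fun j : Fin m2 => eval u (g j) = 0).card ≤ n - m1) := by
  set S : Fin m1 ⊕ Fin m2 → Finset (Fin n →₀ ℕ) :=
    fun k => monomialsOfDegreeLE (Fin n) (Sum.elim d d' k)
  obtain ⟨Φ, hΦ0, hΦS, hΦ⟩ := exists_resultant_of_forall_card_lt (K := ℝ) S ℂ
    (fun _ => zero_mem_monomialsOfDegreeLE _ _)
    ((Finset.powersetCard (n - m1 + 1) Finset.univ).image (Finset.univ.disjSum ·))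
    (by
      simp only [Finset.forall_mem_image, Finset.mem_powersetCard, Finset.card_disjSum,
        Finset.card_univ, Fintype.card_fin]
      omega)
  refine ⟨Φ, ?_, fun h g hh hg hne => ?_⟩
  · obtain ⟨p, hp, hne⟩ := exists_eval_tupleCoeffs_ne_zero S hΦ0 hΦS
    refine ⟨p ∘ Sum.inl, p ∘ Sum.inr, fun i => support_subset_monomialsOfDegreeLE_iff.1 (hp _),
      fun j => support_subset_monomialsOfDegreeLE_iff.1 (hp _), ?_⟩
    rwa [evalCoeffs_eq_eval_tupleCoeffs, Sum.elim_comp_inl_inr]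
  · have hnoroot : ∀ J : Finset (Fin m2), J.card = n - m1 + 1 → ¬ ∃ x : Fin n → ℂ,
        (∀ i, aeval x (h i) = 0) ∧ ∀ j ∈ J, aeval x (g j) = 0 := by
      rintro J hJ ⟨x, hxh, hxg⟩
      refine hne (hΦ _ (support_sumElim_subset_monomialsOfDegreeLE hh hg) _
        (Finset.mem_image_of_mem _ (Finset.mem_powersetCard.2 ⟨Finset.subset_univ _, hJ⟩))
        x ?_)
      rintro (i | j) hk
      exacts [hxh i, hxg j (Finset.inr_mem_disjSum.1 hk)]
    exact ⟨hnoroot, fun u hu _ => card_filter_eval_eq_zero_le_of_no_common_root hnoroot hu⟩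

/-- If `m1 + m2 ≥ n + 1`, there is a nonzero polynomial `Φ` in the coefficients
of `(h, g)` such that whenever `Φ(h,g) ≠ 0`: every subset of `n − m1 + 1` of the
`g_j`'s has no common complex zero with `h₁,…,h_{m1}`; in particular, at every
point of `K` at most `n − m1` of the inequality constraints are active. -/
theorem generic_few_active_constraints
    (n m1 m2 : ℕ) (hm1 : m1 ≤ n) (hm : n + 1 ≤ m1 + m2)
    (d : Fin m1 → ℕ) (d' : Fin m2 → ℕ)
    (hd : ∀ i, 0 < d i) (hd' : ∀ j, 0 < d' j) :
    ∃ Φ : MvPolynomial ((Fin m1 ⊕ Fin m2) × (Fin n →₀ ℕ)) ℝ,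
      (∃ (h : Fin m1 → MvPolynomial (Fin n) ℝ) (g : Fin m2 → MvPolynomial (Fin n) ℝ),
        (∀ i, (h i).totalDegree ≤ d i) ∧ (∀ j, (g j).totalDegree ≤ d' j) ∧
        evalCoeffs Φ h g ≠ 0) ∧
      ∀ (h : Fin m1 → MvPolynomial (Fin n) ℝ) (g : Fin m2 → MvPolynomial (Fin n) ℝ),
        (∀ i, (h i).totalDegree ≤ d i) → (∀ j, (g j).totalDegree ≤ d' j) →
        evalCoeffs Φ h g ≠ 0 →
        (∀ J : Finset (Fin m2), J.card = n - m1 + 1 →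
          ¬ ∃ x : Fin n → ℂ,
            (∀ i, aeval x (h i) = 0) ∧ ∀ j ∈ J, aeval x (g j) = 0) ∧
        (∀ u : Fin n → ℝ, (∀ i, eval u (h i) = 0) → (∀ j, 0 ≤ eval u (g j)) →
          (Finset.univ.filter fun j : Fin m2 => eval u (g j) = 0).card ≤ n - m1) :=
  generic_few_active_constraints_general n m1 m2 d d'
end
end

section
/- Let g₁ = x₁² − x₂² − (x₁² + x₂²)² and g₂ = x₁ in ℝ[x₁, x₂], and let K = {x ∈ ℝ² : g₁(x) ≥ 0, g₂(x) ≥ 0}. Then: (i) 3x₁ + 2x₂ ≥ 0 for every x ∈ K, with equality only at the origin, so the origin is the unique global minimizer of 3x₁ + 2x₂ on K with minimum value 0; (ii) 3x₁ + 2x₂ does not belong to the quadratic module Q(g) = {σ₀ + σ₁ g₁ + σ₂ g₂ : σ₀, σ₁, σ₂ SOS}; in particular, the first order optimality condition fails at the origin. -/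
/-!
Inside the lemniscate `(x₁² + x₂²)² ≤ x₁² − x₂²` one has `x₂² ≤ x₁²`, so on `K` we get
`|x₂| ≤ x₁` and `3x₁ + 2x₂ ≥ x₁ ≥ |x₂|`, which vanishes only at the origin.

If `f = σ₀ + ∑ σⱼ gⱼ` and `u` is a feasible zero of `f`, all summands are nonnegative at `u`,
hence `σ₀(u) = 0` and `σⱼ(u) gⱼ(u) = 0`. A sum of squares vanishing at `u` has vanishing gradient
there, so differentiating the certificate at `u` gives the first order condition with
`μⱼ = σⱼ(u)`. At the origin this fails: `∂f/∂x₂ = 2`, while `∂g₁/∂x₂` and `∂g₂/∂x₂` vanish.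
-/

open MvPolynomial

noncomputable section

namespace IsSOS

variable {n : ℕ} {p : MvPolynomial (Fin n) ℝ}

theorem eval_nonneg (hp : IsSOS p) (a : Fin n → ℝ) : 0 ≤ eval a p := by
  obtain ⟨k, q, rfl⟩ := hp
  simp only [map_sum, map_pow]
  positivity

theorem eval_pderiv_eq_zero (hp : IsSOS p) {a : Fin n → ℝ} (ha : eval a p = 0) (k : Fin n) :
    eval a (pderiv k p) = 0 := by
  obtain ⟨m, q, rfl⟩ := hp
  simp only [map_sum, map_pow] at ha
  have hq : ∀ i, eval a (q i) = 0 := fun i =>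
    pow_eq_zero_iff two_ne_zero |>.mp <|
      (Finset.sum_eq_zero_iff_of_nonneg fun i _ => sq_nonneg _).mp ha i (Finset.mem_univ i)
  simp [hq]

end IsSOS

section FirstOrder

variable {ι : Type*} [Fintype ι] {n : ℕ} {f σ₀ : MvPolynomial (Fin n) ℝ}
  {σ g : ι → MvPolynomial (Fin n) ℝ} {u : Fin n → ℝ}

theorem eval_mul_eq_zero_of_mem_quadraticModule (hσ₀ : IsSOS σ₀) (hσ : ∀ j, IsSOS (σ j))
    (hf : f = σ₀ + ∑ j, σ j * g j) (hu : ∀ j, 0 ≤ eval u (g j)) (hfu : eval u f = 0) :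
    eval u σ₀ = 0 ∧ ∀ j, eval u (σ j) * eval u (g j) = 0 := by
  have hterm : ∀ j, 0 ≤ eval u (σ j) * eval u (g j) := fun j =>
    mul_nonneg ((hσ j).eval_nonneg u) (hu j)
  have hsum : 0 ≤ ∑ j, eval u (σ j) * eval u (g j) := Finset.sum_nonneg fun j _ => hterm j
  simp only [hf, map_add, map_sum, map_mul] at hfu
  have h₀ : eval u σ₀ = 0 := by linarith [hσ₀.eval_nonneg u]
  refine ⟨h₀, fun j => ?_⟩
  rw [h₀, zero_add] at hfu
  exact (Finset.sum_eq_zero_iff_of_nonneg fun j _ => hterm j).mp hfu j (Finset.mem_univ j)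

theorem eval_pderiv_eq_of_mem_quadraticModule (hσ₀ : IsSOS σ₀) (hσ : ∀ j, IsSOS (σ j))
    (hf : f = σ₀ + ∑ j, σ j * g j) (hu : ∀ j, 0 ≤ eval u (g j)) (hfu : eval u f = 0)
    (k : Fin n) :
    eval u (pderiv k f) = ∑ j, eval u (σ j) * eval u (pderiv k (g j)) := by
  obtain ⟨h₀, hslack⟩ := eval_mul_eq_zero_of_mem_quadraticModule hσ₀ hσ hf hu hfu
  -- if `gⱼ(u) ≠ 0` then `σⱼ(u) = 0`, so `∇σⱼ(u) = 0`
  have hcross : ∀ j, eval u (pderiv k (σ j)) * eval u (g j) = 0 := fun j =>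
    (mul_eq_zero.mp (hslack j)).elim
      (fun hσu => by rw [(hσ j).eval_pderiv_eq_zero hσu k, zero_mul])
      (fun hgu => by rw [hgu, mul_zero])
  simp only [hf, map_add, map_sum, Derivation.leibniz, smul_eq_mul, map_mul,
    hσ₀.eval_pderiv_eq_zero h₀ k, zero_add]
  refine Finset.sum_congr rfl fun j _ => ?_
  rw [mul_comm (eval u (g j)), hcross j, add_zero, mul_comm]

end FirstOrder

theorem abs_le_of_inside_lemniscate {a b : ℝ} (h : (a ^ 2 + b ^ 2) ^ 2 ≤ a ^ 2 - b ^ 2)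
    (ha : 0 ≤ a) : |b| ≤ a :=
  abs_le_of_sq_le_sq (by nlinarith [sq_nonneg (a ^ 2 + b ^ 2)]) ha

/-- For `g₁ = x₁² − x₂² − (x₁² + x₂²)²`, `g₂ = x₁` and
`K = {x ∈ ℝ² : g₁(x) ≥ 0, g₂(x) ≥ 0}`:
(i) `3x₁ + 2x₂ ≥ 0` on `K` with equality exactly at the origin;
(ii) `3x₁ + 2x₂ ∉ Q(g) = {σ₀ + σ₁g₁ + σ₂g₂ : σᵢ SOS}`;
in particular, the first order optimality condition fails at the origin. -/
theorem example_cqc_fails (g1 g2 f : MvPolynomial (Fin 2) ℝ)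
    (hg1 : g1 = X 0 ^ 2 - X 1 ^ 2 - (X 0 ^ 2 + X 1 ^ 2) ^ 2)
    (hg2 : g2 = X 0)
    (hf : f = C 3 * X 0 + C 2 * X 1)
    (K : Set (Fin 2 → ℝ))
    (hK : K = {x | 0 ≤ eval x g1 ∧ 0 ≤ eval x g2}) :
    (∀ x ∈ K, 0 ≤ eval x f) ∧
    (∀ x ∈ K, eval x f = 0 → x = 0) ∧
    (0 : Fin 2 → ℝ) ∈ K ∧
    (¬ ∃ σ0 σ1 σ2 : MvPolynomial (Fin 2) ℝ,
        IsSOS σ0 ∧ IsSOS σ1 ∧ IsSOS σ2 ∧ f = σ0 + σ1 * g1 + σ2 * g2) ∧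
    (¬ ∃ μ1 μ2 : ℝ, 0 ≤ μ1 ∧ 0 ≤ μ2 ∧
        μ1 * eval (0 : Fin 2 → ℝ) g1 = 0 ∧ μ2 * eval (0 : Fin 2 → ℝ) g2 = 0 ∧
        ∀ k : Fin 2, eval (0 : Fin 2 → ℝ) (pderiv k f)
          = μ1 * eval (0 : Fin 2 → ℝ) (pderiv k g1)
            + μ2 * eval (0 : Fin 2 → ℝ) (pderiv k g2)) := by
  have hf_eval : ∀ x, eval x f = 3 * x 0 + 2 * x 1 := by simp [hf]
  have hcone : ∀ x ∈ K, |x 1| ≤ x 0 := by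
    rintro x hx
    simp only [hK, hg1, hg2, Set.mem_ofPred_eq, map_sub, map_pow, map_add, eval_X] at hx
    exact abs_le_of_inside_lemniscate (by linarith [hx.1]) hx.2
  have hfeasible : ∀ j, 0 ≤ eval 0 (![g1, g2] j) := by
    simp [Fin.forall_fin_two, hg1, hg2]
  have hgrad : eval 0 (pderiv 1 f) = 2 ∧ eval 0 (pderiv 1 g1) = 0 ∧ eval 0 (pderiv 1 g2) = 0 := by
    simp [hf, hg1, hg2, pderiv_X]
  obtain ⟨hf', hg1', hg2'⟩ := hgrad
  refine ⟨fun x hx => ?_, fun x hx hfx => ?_, by simp [hK, hg1, hg2], ?_, ?_⟩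
  · linarith [hf_eval x, hcone x hx, neg_abs_le (x 1), abs_nonneg (x 1)]
  · have hx0 : x 0 = 0 := by linarith [hf_eval x, hcone x hx, neg_abs_le (x 1), abs_nonneg (x 1)]
    have hx1 : x 1 = 0 := abs_nonpos_iff.mp (hx0 ▸ hcone x hx)
    ext i
    fin_cases i <;> simp [hx0, hx1]
  · rintro ⟨σ0, σ1, σ2, hσ0, hσ1, hσ2, hcert⟩
    have hcert' : f = σ0 + ∑ j, ![σ1, σ2] j * ![g1, g2] j := by
      simp [hcert, Fin.sum_univ_two, add_assoc]
    have hσ : ∀ j, IsSOS (![σ1, σ2] j) := Fin.forall_fin_two.mpr ⟨hσ1, hσ2⟩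
    have hf0 : eval 0 f = 0 := by simp [hf]
    have h := eval_pderiv_eq_of_mem_quadraticModule hσ0 hσ hcert' hfeasible hf0 1
    simp only [Fin.sum_univ_two, Matrix.cons_val_zero, Matrix.cons_val_one, hf', hg1', hg2'] at h
    norm_num at h
  · rintro ⟨μ1, μ2, -, -, -, -, h⟩
    have h1 := h 1
    rw [hf', hg1', hg2'] at h1
    norm_num at h1
end
end

section
/- For every γ ∈ ℝ, the polynomial x₁²x₂²(x₁² + x₂² − 3x₃²) + x₃⁶ + x₁² + x₂² + x₃² − γ (the Motzkin polynomial plus the quadratic form x₁² + x₂² + x₃², minus γ) is not a sum of squares of polynomials in ℝ[x₁, x₂, x₃]. -/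
/-!
If `p = ∑ qᵢ²` over an ordered field, the top weighted-homogeneous parts of the `qᵢ²` cannot
cancel, so for every weight `w` the exponents of each `qᵢ` have `w`-weight at most half the
`w`-degree of `p`. For the Motzkin polynomial plus `x₁² + x₂² + x₃² - γ` we use the weights
`(1,1,1)`, `(3,0,2)` and `(0,3,2)`, which are maximized over its Newton polytope on the top
face and on the two edges through `(0,0,6)`. With these bounds, `(1,1,1) + (1,1,1)` is the only
way to write `(2,2,2)` as a sum of two exponents of a `qᵢ`, so the coefficient of `x₁²x₂²x₃²`
in `p` is `∑ coeff_{(1,1,1)}(qᵢ)² ≥ 0`, while it is `-3`.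
-/

open MvPolynomial

noncomputable section

open Finset Finsupp

namespace MvPolynomial

variable {R σ : Type*}

section CommSemiring

variable [CommSemiring R]

section Arithmetic

variable (w : σ → ℕ)

theorem weightedTotalDegree_add_le (p q : MvPolynomial σ R) :
    weightedTotalDegree w (p + q) ≤ max (weightedTotalDegree w p) (weightedTotalDegree w q) :=
  AddMonoidAlgebra.supDegree_add_le

theorem weightedTotalDegree_mul_le (p q : MvPolynomial σ R) :
    weightedTotalDegree w (p * q) ≤ weightedTotalDegree w p + weightedTotalDegree w q :=
  AddMonoidAlgebra.supDegree_mul_le (map_add _)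

theorem weightedTotalDegree_monomial (s : σ →₀ ℕ) {a : R} (ha : a ≠ 0) :
    weightedTotalDegree w (monomial s a) = weight w s := by
  classical
  simp [weightedTotalDegree, support_monomial, ha]

theorem weightedTotalDegree_C (a : R) : weightedTotalDegree w (C a : MvPolynomial σ R) = 0 := by
  by_cases ha : a = 0
  · simp [ha, weightedTotalDegree_zero]
  · rw [C_apply, weightedTotalDegree_monomial w 0 ha, map_zero]

theorem weightedTotalDegree_X_pow [Nontrivial R] (i : σ) (k : ℕ) :
    weightedTotalDegree w (X i ^ k : MvPolynomial σ R) = k * w i := by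
  rw [X_pow_eq_monomial, weightedTotalDegree_monomial w _ one_ne_zero, weight_single, smul_eq_mul]

end Arithmetic

variable {w : σ → ℕ}

theorem coeff_eq_zero_of_weightedTotalDegree_lt {p : MvPolynomial σ R} {m : σ →₀ ℕ}
    (h : weightedTotalDegree w p < weight w m) : coeff m p = 0 :=
  notMem_support_iff.mp fun hm => (le_weightedTotalDegree w hm).not_gt h

theorem weightedHomogeneousComponent_mul_of_le {a b : MvPolynomial σ R} {d e : ℕ}
    (ha : weightedTotalDegree w a ≤ d) (hb : weightedTotalDegree w b ≤ e) :
    weightedHomogeneousComponent w (d + e) (a * b) =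
      weightedHomogeneousComponent w d a * weightedHomogeneousComponent w e b := by
  classical
  ext m
  rw [coeff_weightedHomogeneousComponent]
  split_ifs with hm
  · rw [coeff_mul, coeff_mul]
    refine sum_congr rfl fun x hx => ?_
    have hx : weight w x.1 + weight w x.2 = d + e := by
      rw [← map_add, mem_antidiagonal.mp hx, hm]
    simp only [coeff_weightedHomogeneousComponent]
    rcases lt_trichotomy (weight w x.1) d with h₁ | h₁ | h₁
    · rw [coeff_eq_zero_of_weightedTotalDegree_lt (hb.trans_lt (by omega)), if_neg (by omega)]
      simp
    · rw [if_pos h₁, if_pos (by omega)]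
    · rw [coeff_eq_zero_of_weightedTotalDegree_lt (ha.trans_lt h₁), if_neg h₁.ne']
      simp
  · exact ((weightedHomogeneousComponent_isWeightedHomogeneous d a).mul
      (weightedHomogeneousComponent_isWeightedHomogeneous e b)).coeff_eq_zero m hm |>.symm

theorem weightedHomogeneousComponent_weightedTotalDegree_ne_zero {p : MvPolynomial σ R}
    (hp : p ≠ 0) : weightedHomogeneousComponent w (weightedTotalDegree w p) p ≠ 0 := by
  classical
  obtain ⟨m, hm, hmax⟩ := exists_mem_eq_sup p.support (support_nonempty.mpr hp) (weight w)
  intro h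
  have hcoeff := congrArg (coeff m) h
  rw [coeff_weightedHomogeneousComponent,
    if_pos (show weight w m = weightedTotalDegree w p from hmax.symm), coeff_zero] at hcoeff
  exact mem_support_iff.mp hm hcoeff

theorem coeff_add_self_sq {q : MvPolynomial σ R} {n : σ →₀ ℕ}
    (h : ∀ x ∈ q.support, ∀ y ∈ q.support, x + y = n + n → x = n) :
    coeff (n + n) (q ^ 2) = coeff n q ^ 2 := by
  classical
  rw [sq, sq, coeff_mul, Finset.sum_eq_single (n, n)]
  · rintro ⟨x, y⟩ hxy hne
    by_cases hx : coeff x q = 0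
    · simp [hx]
    by_cases hy : coeff y q = 0
    · simp [hy]
    obtain rfl := h x (mem_support_iff.mpr hx) y (mem_support_iff.mpr hy) (mem_antidiagonal.mp hxy)
    exact (hne (by simpa using mem_antidiagonal.mp hxy)).elim
  · exact fun h => (h (mem_antidiagonal.mpr rfl)).elim

end CommSemiring

theorem weightedTotalDegree_sub_le [CommRing R] (w : σ → ℕ) (p q : MvPolynomial σ R) :
    weightedTotalDegree w (p - q) ≤ max (weightedTotalDegree w p) (weightedTotalDegree w q) :=
  AddMonoidAlgebra.supDegree_sub_le

section OrderedField

variable [Field R] [LinearOrder R] [IsStrictOrderedRing R] {w : σ → ℕ}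

theorem sum_sq_eq_zero_iff {ι : Type*} {s : Finset ι} {q : ι → MvPolynomial σ R} :
    ∑ i ∈ s, q i ^ 2 = 0 ↔ ∀ i ∈ s, q i = 0 := by
  refine ⟨fun h i hi => MvPolynomial.funext fun x => ?_,
    fun h => sum_eq_zero fun i hi => by simp [h i hi]⟩
  have hx := congrArg (eval x) h
  simp only [map_sum, map_pow, map_zero] at hx
  simpa using (sum_eq_zero_iff_of_nonneg fun j _ => sq_nonneg (eval x (q j))).mp hx i hi

theorem two_mul_weightedTotalDegree_le_sum_sq {ι : Type*} {s : Finset ι}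
    (q : ι → MvPolynomial σ R) {i : ι} (hi : i ∈ s) :
    2 * weightedTotalDegree w (q i) ≤ weightedTotalDegree w (∑ j ∈ s, q j ^ 2) := by
  obtain ⟨j, hj, hmax⟩ := exists_max_image s (fun j => weightedTotalDegree w (q j)) ⟨i, hi⟩
  set d := weightedTotalDegree w (q j)
  suffices h : d + d ≤ weightedTotalDegree w (∑ j ∈ s, q j ^ 2) by
    have := hmax i hi
    omega
  rcases eq_or_ne (q j) 0 with hq | hq
  · simp [d, hq, weightedTotalDegree_zero]
  have htop : weightedHomogeneousComponent w (d + d) (∑ j ∈ s, q j ^ 2) =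
      ∑ j ∈ s, weightedHomogeneousComponent w d (q j) ^ 2 := by
    simp only [map_sum, sq]
    exact sum_congr rfl fun j hj => weightedHomogeneousComponent_mul_of_le (hmax j hj) (hmax j hj)
  have hne : weightedHomogeneousComponent w (d + d) (∑ j ∈ s, q j ^ 2) ≠ 0 := by
    rw [htop, Ne, sum_sq_eq_zero_iff]
    exact fun h => weightedHomogeneousComponent_weightedTotalDegree_ne_zero hq (h j hj)
  exact not_lt.mp fun hlt => hne (weightedHomogeneousComponent_eq_zero _ _ hlt)

theorem weight_le_of_mem_support_sum_sq {ι : Type*} {s : Finset ι} (q : ι → MvPolynomial σ R)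
    {c : ℕ} (h : weightedTotalDegree w (∑ j ∈ s, q j ^ 2) ≤ 2 * c) {i : ι} (hi : i ∈ s)
    {x : σ →₀ ℕ} (hx : x ∈ (q i).support) : weight w x ≤ c := by
  have := two_mul_weightedTotalDegree_le_sum_sq (w := w) q hi
  have := le_weightedTotalDegree w hx
  omega

end OrderedField

end MvPolynomial

theorem Finsupp.weight_fin_three (w : Fin 3 → ℕ) (x : Fin 3 →₀ ℕ) :
    weight w x = x 0 * w 0 + x 1 * w 1 + x 2 * w 2 := by
  rw [weight_apply, Finsupp.sum_fintype _ _ (by simp), Fin.sum_univ_three]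
  simp only [smul_eq_mul]

namespace Motzkin

def shift (γ : ℝ) : MvPolynomial (Fin 3) ℝ :=
  X 0 ^ 2 * X 1 ^ 2 * (X 0 ^ 2 + X 1 ^ 2 - C 3 * X 2 ^ 2) + X 2 ^ 6
    + X 0 ^ 2 + X 1 ^ 2 + X 2 ^ 2 - C γ

def xyz : Fin 3 →₀ ℕ := equivFunOnFinite.symm 1

theorem coeff_xyz_add_xyz_shift (γ : ℝ) : coeff (xyz + xyz) (shift γ) = -3 := by
  simp only [shift, X_pow_eq_monomial, C_mul_monomial, mul_add, mul_sub, monomial_mul, coeff_add,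
    coeff_sub, coeff_monomial, coeff_C]
  simp [Finsupp.ext_iff, Fin.forall_fin_succ, xyz]

theorem weightedTotalDegree_shift_le (γ : ℝ) {w : Fin 3 → ℕ} {n : ℕ}
    (h₁ : 4 * w 0 + 2 * w 1 ≤ n) (h₂ : 2 * w 0 + 4 * w 1 ≤ n)
    (h₃ : 2 * w 0 + 2 * w 1 + 2 * w 2 ≤ n) (h₄ : 6 * w 2 ≤ n) :
    weightedTotalDegree w (shift γ) ≤ n := by
  unfold shift
  repeat first
    | grw [weightedTotalDegree_add_le]
    | grw [weightedTotalDegree_sub_le]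
    | grw [weightedTotalDegree_mul_le]
  simp only [weightedTotalDegree_C, weightedTotalDegree_X_pow, max_le_iff]
  omega

def HalfDegreeBounds (x : Fin 3 →₀ ℕ) : Prop :=
  weight 1 x ≤ 3 ∧ weight ![3, 0, 2] x ≤ 6 ∧ weight ![0, 3, 2] x ≤ 6

theorem eq_xyz_of_add_eq {x y : Fin 3 →₀ ℕ} (hx : HalfDegreeBounds x) (hy : HalfDegreeBounds y)
    (h : x + y = xyz + xyz) : x = xyz := by
  have hsum : ∀ i, x i + y i = 2 := fun i => by simpa [xyz] using DFunLike.congr_fun h i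
  have := hsum 0
  have := hsum 1
  have := hsum 2
  simp only [HalfDegreeBounds, weight_fin_three, Pi.one_apply, Matrix.cons_val_zero,
    Matrix.cons_val_one, Matrix.cons_val_two, Matrix.tail_cons, Matrix.head_cons] at hx hy
  have hx1 : x 0 = 1 ∧ x 1 = 1 ∧ x 2 = 1 := by omega
  ext i
  fin_cases i <;> simp [xyz, hx1]

end Motzkin

open Motzkin in
/-- For every `γ ∈ ℝ`, the Motzkin polynomial plus `x₁² + x₂² + x₃²` minus `γ`
is not a sum of squares of polynomials. -/
theorem motzkin_plus_quadratic_shift_not_sos (γ : ℝ) :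
    ¬ IsSOS ((X 0 ^ 2 * X 1 ^ 2 * (X 0 ^ 2 + X 1 ^ 2 - C 3 * X 2 ^ 2) + X 2 ^ 6
        + X 0 ^ 2 + X 1 ^ 2 + X 2 ^ 2 - C γ : MvPolynomial (Fin 3) ℝ)) := by
  rintro ⟨k, q, hp⟩
  change shift γ = _ at hp
  have hbound : ∀ {w : Fin 3 → ℕ} {c : ℕ}, weightedTotalDegree w (shift γ) ≤ 2 * c →
      ∀ i, ∀ x ∈ (q i).support, weight w x ≤ c := fun h i _ hx =>
    weight_le_of_mem_support_sum_sq q (hp ▸ h) (mem_univ i) hx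
  have hq : ∀ i, ∀ x ∈ (q i).support, HalfDegreeBounds x := fun i x hx => by
    refine ⟨hbound ?_ i x hx, hbound ?_ i x hx, hbound ?_ i x hx⟩ <;>
      apply weightedTotalDegree_shift_le γ <;> simp
  have hcoeff : coeff (xyz + xyz) (shift γ) = ∑ i, coeff xyz (q i) ^ 2 := by
    rw [hp, coeff_sum]
    exact sum_congr rfl fun i _ => coeff_add_self_sq fun x hx y hy =>
      eq_xyz_of_add_eq (hq i x hx) (hq i y hy)
  have hnonneg : 0 ≤ ∑ i, coeff xyz (q i) ^ 2 := sum_nonneg fun i _ => sq_nonneg _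
  linarith [coeff_xyz_add_xyz_shift γ]
end
end
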